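/- arXiv:0906.3993 — 8 statements merged into one kernel-verified Lean document; each statement's English description precedes it below -/
import Mathlib

section
/- Let G be a finite simple graph with n vertices and minimum degree δ ≥ 2. Set δ̂ = ⌊δ/2⌋, let δ' = δ if δ is odd and δ' = δ+1 if δ is even, and let d̃ = C(δ'+1, ⌈δ'/2⌉) (a binomial coefficient). Then the signed domination number of G satisfies γ_s(G) ≤ (1 − (2·δ̂) / ((1+δ̂)^{1+1/δ̂} · d̃^{1/δ̂})) · n. -/
/-- `f : V → ℤ` is a signed domination function of `G`: it takes values in `{-1, +1}`
and sums to at least `1` over every closed neighbourhood. -/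
def SimpleGraph.IsSignedDominationFunction {V : Type*} [Fintype V] [DecidableEq V]
    (G : SimpleGraph V) [DecidableRel G.Adj] (f : V → ℤ) : Prop :=
  (∀ v, f v = 1 ∨ f v = -1) ∧
  ∀ v : V, 1 ≤ ∑ u ∈ insert v (G.neighborFinset v), f u

/-- The signed domination number `γ_s(G)`. -/
noncomputable def SimpleGraph.signedDominationNumber {V : Type*} [Fintype V] [DecidableEq V]
    (G : SimpleGraph V) [DecidableRel G.Adj] : ℤ :=
  sInf {s : ℤ | ∃ f : V → ℤ, G.IsSignedDominationFunction f ∧ s = ∑ v, f v}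


open Finset

namespace SDFaux

/-- binomial weight -/
noncomputable def B (p : ℝ) (m t : ℕ) : ℝ := (m.choose t : ℝ) * p ^ t * (1 - p) ^ (m - t)

/-- weighted sum against binomial distribution -/
noncomputable def Sw (p : ℝ) (m : ℕ) (f : ℕ → ℝ) : ℝ := ∑ t ∈ range (m + 1), f t * B p m t

lemma B_nonneg {p : ℝ} (h0 : 0 ≤ p) (h1 : p ≤ 1) (m t : ℕ) : 0 ≤ B p m t := by
  have : (0:ℝ) ≤ 1 - p := by linarith
  unfold B; positivity

lemma sum_B (p : ℝ) (m : ℕ) : ∑ t ∈ range (m + 1), B p m t = 1 := by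
  have h := add_pow p (1 - p) m
  simp only [add_sub_cancel, one_pow] at h
  rw [show (1:ℝ) = (p + (1-p))^m by rw [add_sub_cancel]; simp]
  rw [add_pow]
  refine Finset.sum_congr rfl fun t ht => ?_
  unfold B; ring

lemma B_succ_succ (p : ℝ) (m t : ℕ) (ht : t ≤ m) :
    B p (m + 1) (t + 1) = p * B p m t + (1 - p) * B p m (t + 1) := by
  rcases eq_or_lt_of_le ht with rfl | h
  · simp [B, Nat.choose_succ_self, Nat.choose_self]
    ring
  · unfold B
    rw [Nat.choose_succ_succ]
    have h2 : m - t = (m - (t + 1)) + 1 := by omega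
    simp only [Nat.succ_eq_add_one, Nat.add_sub_cancel]
    push_cast
    rw [h2]
    ring

/-- the one-step recursion -/
lemma Sw_succ (p : ℝ) (m : ℕ) (f : ℕ → ℝ) :
    Sw p (m + 1) f = (1 - p) * Sw p m f + p * Sw p m (fun t => f (t + 1)) := by
  unfold Sw
  rw [Finset.sum_range_succ' (fun t => f t * B p (m+1) t)]
  have key : ∑ t ∈ range (m + 1), f (t + 1) * B p (m+1) (t+1)
      = ∑ t ∈ range (m + 1), (p * (f (t+1) * B p m t) + (1 - p) * (f (t+1) * B p m (t+1))) := by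
    refine Finset.sum_congr rfl fun t ht => ?_
    rw [B_succ_succ p m t (by simpa using Nat.lt_succ_iff.mp (Finset.mem_range.mp ht))]
    ring
  rw [key, Finset.sum_add_distrib, ← Finset.mul_sum, ← Finset.mul_sum]
  have sh : ∑ t ∈ range (m + 1), f (t + 1) * B p m (t + 1)
      = (∑ t ∈ range (m + 1), f t * B p m t) - f 0 * B p m 0 := by
    rw [Finset.sum_range_succ' (fun t => f t * B p m t)]
    have : f (m + 1) * B p m (m + 1) = 0 := by
      simp [B, Nat.choose_succ_self]
    rw [Finset.sum_range_succ]
    rw [this]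
    ring
  rw [sh]
  have : B p (m+1) 0 = (1 - p) * B p m 0 := by
    simp [B]
    ring
  rw [this]
  ring

lemma Sw_mono (p : ℝ) (h0 : 0 ≤ p) (h1 : p ≤ 1) (m : ℕ) {f g : ℕ → ℝ}
    (h : ∀ t, f t ≤ g t) : Sw p m f ≤ Sw p m g :=
  Finset.sum_le_sum fun t _ => mul_le_mul_of_nonneg_right (h t) (B_nonneg h0 h1 m t)

lemma Sw_nonneg (p : ℝ) (h0 : 0 ≤ p) (h1 : p ≤ 1) (m : ℕ) {f : ℕ → ℝ}
    (h : ∀ t, 0 ≤ f t) : 0 ≤ Sw p m f := by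
  have := Sw_mono p h0 h1 m (f := fun _ => 0) (g := f) h
  simpa [Sw] using this

/-- expectation of (X - k)⁺ -/
noncomputable def Em (p : ℝ) (m k : ℕ) : ℝ := Sw p m (fun t => ((t - k : ℕ) : ℝ))



/-- L1 : Em increases in m -/
lemma Em_mono_m {p : ℝ} (h0 : 0 ≤ p) (h1 : p ≤ 1) (m k : ℕ) : Em p m k ≤ Em p (m + 1) k := by
  show Sw p m _ ≤ Sw p (m+1) _
  rw [Sw_succ]
  have h2 : Sw p m (fun t => ((t - k : ℕ) : ℝ)) ≤ Sw p m (fun t => ((t + 1 - k : ℕ) : ℝ)) := by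
    refine Sw_mono p h0 h1 m fun t => ?_
    exact_mod_cast Nat.sub_le_sub_right (Nat.le_succ t) k
  nlinarith [h2, Sw_nonneg p h0 h1 m (f := fun t => ((t - k : ℕ) : ℝ)) (fun t => by positivity)]

lemma Em_mono_k {p : ℝ} (h0 : 0 ≤ p) (h1 : p ≤ 1) (m k : ℕ) : Em p m (k + 1) ≤ Em p m k := by
  refine Sw_mono p h0 h1 m fun t => ?_
  exact_mod_cast Nat.sub_le_sub_left (Nat.le_succ k) t

/-- L2 -/
lemma Em_step_diag {p : ℝ} (h0 : 0 ≤ p) (h1 : p ≤ 1) (m k : ℕ) : Em p (m + 1) (k + 1) ≤ Em p m k := by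
  show Sw p (m+1) _ ≤ Sw p m _
  rw [Sw_succ]
  have e : (fun t => ((t + 1 - (k + 1) : ℕ) : ℝ)) = (fun t => ((t - k : ℕ) : ℝ)) := by
    funext t; congr 1; omega
  rw [e]
  have h2 : Sw p m (fun t => ((t - (k+1) : ℕ) : ℝ)) ≤ Sw p m (fun t => ((t - k : ℕ) : ℝ)) :=
    Em_mono_k h0 h1 m k
  nlinarith [h2, Sw_nonneg p h0 h1 m (f := fun t => ((t - (k+1) : ℕ) : ℝ)) (fun t => by positivity)]

/-- indicator sums -/
lemma Sw_ind_split {p : ℝ} (m k : ℕ) (hk : k ≤ m) :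
    Sw p m (fun t => if k ≤ t then (1:ℝ) else 0)
      = B p m k + Sw p m (fun t => if k + 1 ≤ t then (1:ℝ) else 0) := by
  rw [Sw, Sw]
  have e1 : ∑ t ∈ range (m+1), (if k ≤ t then (1:ℝ) else 0) * B p m t
      = ∑ t ∈ range (m+1), ((if t = k then B p m t else 0)
          + (if k + 1 ≤ t then (1:ℝ) else 0) * B p m t) := by
    refine Finset.sum_congr rfl fun t ht => ?_
    by_cases h : t = k
    · subst h; simp
    · by_cases h2 : k ≤ t
      · have h3 : k + 1 ≤ t := by omega
        simp [h, h2, h3]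
      · have h3 : ¬ (k + 1 ≤ t) := by omega
        simp [h, h2, h3]
  rw [e1, Finset.sum_add_distrib, Finset.sum_ite_eq' (range (m+1)) k (B p m)]
  simp [Finset.mem_range, Nat.lt_succ_iff, hk]

lemma Sw_ind_ge_single {p : ℝ} (h0 : 0 ≤ p) (h1 : p ≤ 1) (m k : ℕ) (hk : k ≤ m) :
    B p m k ≤ Sw p m (fun t => if k ≤ t then (1:ℝ) else 0) := by
  rw [Sw_ind_split m k hk]
  have := Sw_nonneg p h0 h1 m (f := fun t => if k + 1 ≤ t then (1:ℝ) else 0)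
    (fun t => by positivity)
  linarith


lemma Sw_succ2 (p : ℝ) (m : ℕ) (f : ℕ → ℝ) :
    Sw p (m + 2) f = (1-p)^2 * Sw p m f + 2*p*(1-p) * Sw p m (fun t => f (t+1))
      + p^2 * Sw p m (fun t => f (t+2)) := by
  rw [show m + 2 = (m+1)+1 from rfl, Sw_succ p (m+1) f, Sw_succ p m f,
    Sw_succ p m (fun t => f (t+1))]
  ring

/-- split Sw of the nat-sub functions by indicators -/
lemma Sw_sub_split (p : ℝ) (m k : ℕ) :
    Sw p m (fun t => ((t - k : ℕ) : ℝ))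
      = Sw p m (fun t => ((t - (k+1) : ℕ) : ℝ))
        + Sw p m (fun t => if k + 1 ≤ t then (1:ℝ) else 0) := by
  rw [Sw, Sw, Sw, ← Finset.sum_add_distrib]
  refine Finset.sum_congr rfl fun t ht => ?_
  have : ((t - k : ℕ) : ℝ) = ((t - (k+1) : ℕ) : ℝ) + (if k + 1 ≤ t then (1:ℝ) else 0) := by
    by_cases h : k + 1 ≤ t
    · have h1 : t - k = (t - (k+1)) + 1 := by omega
      simp [h, h1]
    · have h1 : t - k = t - (k+1) := by omega
      simp [h, h1]
  rw [this]; ring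

/-- L3 : the two-step decrease -/
lemma Em_step2 {p : ℝ} (h0 : 0 < p) (hp : p ≤ 1/4) (k : ℕ) :
    Em p (2*k+4) (k+1) ≤ Em p (2*k+2) k := by
  have h0' : (0:ℝ) ≤ p := le_of_lt h0
  have h1 : p ≤ 1 := by linarith
  set m := 2*k+2 with hm
  have e1 : Em p (m+2) (k+1)
      = (1-p)^2 * Sw p m (fun t => ((t - (k+1) : ℕ) : ℝ))
        + 2*p*(1-p) * Sw p m (fun t => ((t - k : ℕ) : ℝ))
        + p^2 * Sw p m (fun t => ((t + 1 - k : ℕ) : ℝ)) := by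
    have c1 : (fun t => ((t + 1 - (k+1) : ℕ) : ℝ)) = (fun t => ((t - k : ℕ) : ℝ)) := by
      funext t; congr 1; omega
    show Sw p (m+2) _ = _
    rw [Sw_succ2 p m (fun t => ((t - (k+1) : ℕ) : ℝ))]
    rw [show (fun t => ((t + 1 - (k+1) : ℕ) : ℝ)) = (fun t => ((t - k : ℕ) : ℝ)) from c1,
      show (fun t => ((t + 2 - (k+1) : ℕ) : ℝ)) = (fun t => ((t + 1 - k : ℕ) : ℝ)) by
        funext t; congr 1; omega]
  have e2 := Sw_sub_split p m k
  have e3 : Sw p m (fun t => ((t + 1 - k : ℕ) : ℝ))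
      = Sw p m (fun t => ((t - k : ℕ) : ℝ)) + Sw p m (fun t => if k ≤ t then (1:ℝ) else 0) := by
    rw [Sw, Sw, Sw, ← Finset.sum_add_distrib]
    refine Finset.sum_congr rfl fun t ht => ?_
    have : ((t + 1 - k : ℕ) : ℝ) = ((t - k : ℕ) : ℝ) + (if k ≤ t then (1:ℝ) else 0) := by
      by_cases h : k ≤ t
      · have h1 : t + 1 - k = (t - k) + 1 := by omega
        simp [h, h1]
      · have h1 : t + 1 - k = t - k := by omega
        simp [h, h1]
    rw [this]; ring
  -- key estimate : p^2 * Sw(ind k) ≤ (1-p)^2 * Sw(ind (k+1))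
  have hsplit := Sw_ind_split (p := p) m k (by omega)
  have hT : B p m (k+1) ≤ Sw p m (fun t => if k + 1 ≤ t then (1:ℝ) else 0) :=
    Sw_ind_ge_single h0' h1 m (k+1) (by omega)
  have hTnn : (0:ℝ) ≤ Sw p m (fun t => if k + 1 ≤ t then (1:ℝ) else 0) :=
    Sw_nonneg p h0' h1 m (fun t => by positivity)
  have hBB : p^2 * B p m k ≤ ((1-p)^2 - p^2) * B p m (k+1) := by
    have hC : ((m.choose k : ℕ) : ℝ) ≤ ((m.choose (k+1) : ℕ) : ℝ) := by
      exact_mod_cast Nat.choose_le_succ_of_lt_half_left (by omega)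
    have hq : p * (1-p) ≤ (1-p)^2 - p^2 := by nlinarith
    have em1 : m - k = k + 2 := by omega
    have em2 : m - (k+1) = k + 1 := by omega
    unfold B
    rw [em1, em2]
    have hX : (0:ℝ) ≤ p^(k+1) * (1-p)^(k+1) :=
      mul_nonneg (pow_nonneg h0' _) (pow_nonneg (by linarith) _)
    have hCnn : (0:ℝ) ≤ (m.choose k : ℝ) := Nat.cast_nonneg _
    calc p^2 * ((m.choose k : ℝ) * p ^ k * (1-p) ^ (k+2))
        = (p*(1-p)) * ((m.choose k : ℝ) * (p^(k+1) * (1-p)^(k+1))) := by ring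
      _ ≤ ((1-p)^2 - p^2) * ((m.choose (k+1) : ℝ) * (p^(k+1) * (1-p)^(k+1))) := by
          apply mul_le_mul hq (mul_le_mul_of_nonneg_right hC hX)
            (mul_nonneg hCnn hX) (by nlinarith)
      _ = ((1-p)^2 - p^2) * ((m.choose (k+1) : ℝ) * p^(k+1) * (1-p)^(k+1)) := by ring
  have hkey : p^2 * Sw p m (fun t => if k ≤ t then (1:ℝ) else 0)
      ≤ (1-p)^2 * Sw p m (fun t => if k + 1 ≤ t then (1:ℝ) else 0) := by
    rw [hsplit]
    nlinarith [hT, hTnn, hBB]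
  show Em p (m+2) (k+1) ≤ Em p m k
  rw [e1]
  have hEm : Em p m k = Sw p m (fun t => ((t - k : ℕ) : ℝ)) := rfl
  rw [hEm]
  have expand : (1-p)^2 * Sw p m (fun t => ((t - (k+1) : ℕ) : ℝ))
        + 2*p*(1-p) * Sw p m (fun t => ((t - k : ℕ) : ℝ))
        + p^2 * Sw p m (fun t => ((t + 1 - k : ℕ) : ℝ))
        - Sw p m (fun t => ((t - k : ℕ) : ℝ))
      = p^2 * Sw p m (fun t => if k ≤ t then (1:ℝ) else 0)
        - (1-p)^2 * Sw p m (fun t => if k + 1 ≤ t then (1:ℝ) else 0) := by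
    rw [e3, e2]; ring
  linarith [hkey, expand]


lemma fact_ineq (K j : ℕ) (hK : 1 ≤ K) :
    Nat.factorial (j+1) * Nat.factorial K ≤ Nat.factorial (K + j) := by
  induction j with
  | zero => simp [Nat.factorial]
  | succ j ih =>
    have step : Nat.factorial (j+2) * Nat.factorial K
        = (j+2) * (Nat.factorial (j+1) * Nat.factorial K) := by
      rw [Nat.factorial_succ]; ring
    rw [step]
    calc (j+2) * (Nat.factorial (j+1) * Nat.factorial K)
        ≤ (j+2) * Nat.factorial (K + j) := Nat.mul_le_mul_left _ ih
      _ ≤ (K + j + 1) * Nat.factorial (K + j) := Nat.mul_le_mul_right _ (by omega)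
      _ = Nat.factorial (K + j + 1) := (Nat.factorial_succ _).symm

lemma choose_ineq (K j : ℕ) (hK : 1 ≤ K) (hj : j ≤ K) :
    (j+1) * (2*K).choose (K+j) ≤ (2*K).choose K * K.choose j := by
  have h1 : (2*K).choose (K+j) * Nat.factorial (K+j) * Nat.factorial (K-j) = Nat.factorial (2*K) := by
    have := Nat.choose_mul_factorial_mul_factorial (show K+j ≤ 2*K by omega)
    rwa [show 2*K - (K+j) = K - j by omega] at this
  have h2 : K.choose j * Nat.factorial j * Nat.factorial (K-j) = Nat.factorial K :=
    Nat.choose_mul_factorial_mul_factorial hj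
  have h3 : (2*K).choose K * Nat.factorial K * Nat.factorial K = Nat.factorial (2*K) := by
    have := Nat.choose_mul_factorial_mul_factorial (show K ≤ 2*K by omega)
    rwa [show 2*K - K = K by omega] at this
  have hpos : 0 < Nat.factorial (K+j) * (Nat.factorial (K-j) * (Nat.factorial j * Nat.factorial K)) := by
    positivity
  apply Nat.le_of_mul_le_mul_right _ hpos
  have lhs_eq : (j+1) * (2*K).choose (K+j)
        * (Nat.factorial (K+j) * (Nat.factorial (K-j) * (Nat.factorial j * Nat.factorial K)))
      = ((j+1) * Nat.factorial j * Nat.factorial K) * Nat.factorial (2*K) := by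
    rw [← h1]; ring
  have rhs_eq : (2*K).choose K * K.choose j
        * (Nat.factorial (K+j) * (Nat.factorial (K-j) * (Nat.factorial j * Nat.factorial K)))
      = Nat.factorial (2*K) * Nat.factorial (K+j) := by
    rw [← h3, ← h2]; ring
  rw [lhs_eq, rhs_eq]
  have : (j+1) * Nat.factorial j * Nat.factorial K ≤ Nat.factorial (K+j) := by
    have := fact_ineq K j hK
    rwa [show Nat.factorial (j+1) = (j+1) * Nat.factorial j from Nat.factorial_succ j] at this
  calc ((j+1) * Nat.factorial j * Nat.factorial K) * Nat.factorial (2*K)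
      ≤ Nat.factorial (K+j) * Nat.factorial (2*K) := Nat.mul_le_mul_right _ this
    _ = Nat.factorial (2*K) * Nat.factorial (K+j) := Nat.mul_comm _ _

/-- base case : Em p (2a+2) a ≤ C(2a+2, a+1) p^(a+1) -/
lemma Em_base {p : ℝ} (h0 : 0 ≤ p) (h1 : p ≤ 1) (a : ℕ) :
    Em p (2*a+2) a ≤ ((2*a+2).choose (a+1) : ℝ) * p^(a+1) := by
  have hq : (0:ℝ) ≤ 1 - p := by linarith
  have split : Em p (2*a+2) a
      = ∑ j ∈ range (a+2), ((a+1+j - a : ℕ) : ℝ) * B p (2*a+2) (a+1+j) := by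
    rw [Em, Sw]
    rw [show 2*a+2+1 = (a+1) + (a+2) by omega]
    rw [← Finset.sum_range_add_sum_Ico _ (show a+1 ≤ (a+1)+(a+2) by omega)]
    have z : ∑ t ∈ range (a+1), ((t - a : ℕ) : ℝ) * B p (2*a+2) t = 0 := by
      apply Finset.sum_eq_zero
      intro t ht
      have ht' := Finset.mem_range.mp ht
      have : t - a = 0 := by omega
      simp [this]
    rw [z, zero_add, Finset.sum_Ico_eq_sum_range]
    refine Finset.sum_congr (by congr 1; omega) fun j hj => ?_
    congr 2 <;> omega
  rw [split]
  have rhs : ((2*a+2).choose (a+1) : ℝ) * p^(a+1)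
      = ∑ j ∈ range (a+2), ((2*a+2).choose (a+1) : ℝ) * ((a+1).choose j : ℝ)
          * p^(a+1+j) * (1-p)^(a+1-j) := by
    have hb : (p + (1-p))^(a+1) = ∑ j ∈ range (a+2), p^j * (1-p)^(a+1-j) * ((a+1).choose j : ℝ) :=
      add_pow p (1-p) (a+1)
    calc ((2*a+2).choose (a+1) : ℝ) * p^(a+1)
        = ((2*a+2).choose (a+1) : ℝ) * p^(a+1) * (p + (1-p))^(a+1) := by
          rw [show p + (1-p) = 1 by ring, one_pow, mul_one]
      _ = _ := by
          rw [hb, Finset.mul_sum]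
          refine Finset.sum_congr rfl fun j hj => ?_
          ring
  rw [rhs]
  refine Finset.sum_le_sum fun j hj => ?_
  have hjle : j ≤ a + 1 := by
    have := Finset.mem_range.mp hj; omega
  have e1 : a+1+j - a = j+1 := by omega
  have e2 : 2*a+2 - (a+1+j) = a+1-j := by omega
  rw [e1]
  unfold B
  rw [e2]
  have key : ((j+1) * (2*a+2).choose (a+1+j) : ℝ) ≤ ((2*a+2).choose (a+1) * (a+1).choose j : ℝ) := by
    have := choose_ineq (a+1) j (by omega) hjle
    have h' := this
    rw [show 2*(a+1) = 2*a+2 by omega, show a+1+j = a+1+j from rfl] at h'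
    exact_mod_cast h'
  have hpow : (0:ℝ) ≤ p^(a+1+j) * (1-p)^(a+1-j) :=
    mul_nonneg (pow_nonneg h0 _) (pow_nonneg hq _)
  calc ((j+1 : ℕ) : ℝ) * (((2*a+2).choose (a+1+j) : ℝ) * p^(a+1+j) * (1-p)^(a+1-j))
      = (((j+1) * (2*a+2).choose (a+1+j) : ℕ) : ℝ) * (p^(a+1+j) * (1-p)^(a+1-j)) := by
        push_cast; ring
    _ ≤ (((2*a+2).choose (a+1) * (a+1).choose j : ℕ) : ℝ) * (p^(a+1+j) * (1-p)^(a+1-j)) := by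
        apply mul_le_mul_of_nonneg_right _ hpow
        exact_mod_cast choose_ineq (a+1) j (by omega) hjle
    _ = ((2*a+2).choose (a+1) : ℝ) * ((a+1).choose j : ℝ) * p^(a+1+j) * (1-p)^(a+1-j) := by
        push_cast; ring

/-- chain -/
lemma Em_chain {p : ℝ} (h0 : 0 < p) (hp : p ≤ 1/4) (k : ℕ) :
    ∀ a, k ≤ a → Em p (2*a+2) a ≤ Em p (2*k+2) k := by
  intro a ha
  induction a with
  | zero => have : k = 0 := by omega
            subst this; exact le_refl _
  | succ a ih =>
    rcases Nat.eq_or_lt_of_le ha with h | h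
    · subst h; exact le_refl _
    · have hka : k ≤ a := by omega
      calc Em p (2*(a+1)+2) (a+1) = Em p (2*a+4) (a+1) := by rw [show 2*(a+1)+2 = 2*a+4 by omega]
        _ ≤ Em p (2*a+2) a := Em_step2 h0 hp a
        _ ≤ Em p (2*k+2) k := ih hka

/-- the full tail bound -/
lemma Em_tail {p : ℝ} (h0 : 0 < p) (hp : p ≤ 1/4) (k d : ℕ) (hd : 2*k ≤ d) :
    Em p (d+1) (d/2) ≤ ((2*k+2).choose (k+1) : ℝ) * p^(k+1) := by
  have h0' : (0:ℝ) ≤ p := le_of_lt h0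
  have h1 : p ≤ 1 := by linarith
  rcases Nat.even_or_odd d with he | ho
  · obtain ⟨a, rfl⟩ := he
    have ha : k ≤ a := by omega
    have e : (a + a)/2 = a := by omega
    rw [e]
    calc Em p (a+a+1) a ≤ Em p (a+a+1+1) a := Em_mono_m h0' h1 _ _
      _ = Em p (2*a+2) a := by congr 1; omega
      _ ≤ Em p (2*k+2) k := Em_chain h0 hp k a ha
      _ ≤ _ := Em_base h0' h1 k
  · obtain ⟨a, rfl⟩ := ho
    have ha : k ≤ a := by omega
    have e : (2*a+1)/2 = a := by omega
    rw [e, show 2*a+1+1 = 2*a+2 from rfl]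
    calc Em p (2*a+2) a ≤ Em p (2*k+2) k := Em_chain h0 hp k a ha
      _ ≤ _ := Em_base h0' h1 k


variable {α : Type*} [DecidableEq α]

/-- total weight of the powerset is 1 after specializing; general version -/
lemma weight_sum (p : ℝ) (s : Finset α) :
    ∑ T ∈ s.powerset, p ^ T.card * (1 - p) ^ (s.card - T.card) = 1 := by
  have h := Finset.prod_add (fun _ : α => p) (fun _ : α => 1 - p) s
  simp only [Finset.prod_const] at h
  have h2 : ∀ T ∈ s.powerset, ((1:ℝ) - p) ^ (s \ T).card = (1 - p) ^ (s.card - T.card) := by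
    intro T hT
    rw [Finset.card_sdiff_of_subset (Finset.mem_powerset.mp hT)]
  calc ∑ T ∈ s.powerset, p ^ T.card * (1 - p) ^ (s.card - T.card)
      = ∑ T ∈ s.powerset, p ^ T.card * (1 - p) ^ (s \ T).card := by
        refine Finset.sum_congr rfl fun T hT => ?_
        rw [h2 T hT]
    _ = (p + (1 - p)) ^ s.card := h.symm
    _ = 1 := by norm_num

/-- fiber weight -/
lemma weight_fiber (p : ℝ) (s A T : Finset α) (hA : A ⊆ s) (hT : T ⊆ A) :
    ∑ S ∈ s.powerset.filter (fun S => S ∩ A = T), p ^ S.card * (1 - p) ^ (s.card - S.card)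
      = p ^ T.card * (1 - p) ^ (A.card - T.card) := by
  have key : ∑ S ∈ s.powerset.filter (fun S => S ∩ A = T), p ^ S.card * (1 - p) ^ (s.card - S.card)
      = ∑ R ∈ (s \ A).powerset,
          p ^ (T.card + R.card) * (1 - p) ^ ((A.card - T.card) + ((s \ A).card - R.card)) := by
    refine Finset.sum_nbij' (fun S => S \ A) (fun R => T ∪ R) ?_ ?_ ?_ ?_ ?_
    · intro S hS
      rw [Finset.mem_filter, Finset.mem_powerset] at hS
      rw [Finset.mem_powerset]
      exact Finset.sdiff_subset_sdiff hS.1 (le_refl _)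
    · intro R hR
      rw [Finset.mem_powerset] at hR
      rw [Finset.mem_filter, Finset.mem_powerset]
      constructor
      · exact Finset.union_subset (hT.trans hA) (hR.trans Finset.sdiff_subset)
      · ext x
        simp only [Finset.mem_inter, Finset.mem_union]
        constructor
        · rintro ⟨hx1 | hx1, hx2⟩
          · exact hx1
          · exact absurd hx2 (by have := hR hx1; rw [Finset.mem_sdiff] at this; exact this.2)
        · intro hx; exact ⟨Or.inl hx, hT hx⟩
    · intro S hS
      rw [Finset.mem_filter, Finset.mem_powerset] at hS
      ext x
      simp only [Finset.mem_union, Finset.mem_sdiff]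
      constructor
      · rintro (hx | ⟨hx, _⟩)
        · rw [← hS.2] at hx; exact (Finset.mem_inter.mp hx).1
        · exact hx
      · intro hx
        by_cases hxA : x ∈ A
        · left; rw [← hS.2]; exact Finset.mem_inter.mpr ⟨hx, hxA⟩
        · right; exact ⟨hx, hxA⟩
    · intro R hR
      rw [Finset.mem_powerset] at hR
      ext x
      simp only [Finset.mem_sdiff, Finset.mem_union]
      constructor
      · rintro ⟨hx | hx, hxA⟩
        · exact absurd (hT hx) hxA
        · exact hx
      · intro hx
        have := hR hx; rw [Finset.mem_sdiff] at this
        exact ⟨Or.inr hx, this.2⟩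
    · intro S hS
      rw [Finset.mem_filter, Finset.mem_powerset] at hS
      have hdisj : Disjoint T (S \ A) := by
        refine Finset.disjoint_left.mpr fun x hx hx2 => ?_
        rw [Finset.mem_sdiff] at hx2
        exact hx2.2 (hT hx)
      have hcard : S.card = T.card + (S \ A).card := by
        rw [← hS.2]
        have : S = (S ∩ A) ∪ (S \ A) := by
          ext x; simp only [Finset.mem_union, Finset.mem_inter, Finset.mem_sdiff]; tauto
        conv_lhs => rw [this]
        rw [Finset.card_union_of_disjoint]
        refine Finset.disjoint_left.mpr fun x hx hx2 => ?_
        rw [Finset.mem_sdiff] at hx2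
        exact hx2.2 (Finset.mem_inter.mp hx).2
      have hc2 : s.card - S.card = (A.card - T.card) + ((s \ A).card - (S \ A).card) := by
        have h1 : T.card ≤ A.card := Finset.card_le_card hT
        have h2 : (S \ A).card ≤ (s \ A).card :=
          Finset.card_le_card (Finset.sdiff_subset_sdiff hS.1 (le_refl _))
        have h3 : S.card ≤ s.card := Finset.card_le_card hS.1
        have h4 : (s \ A).card = s.card - A.card := Finset.card_sdiff_of_subset hA
        have h5 : A.card ≤ s.card := Finset.card_le_card hA
        omega
      rw [hcard] at hc2
      simp only [hcard, hc2]
  rw [key]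
  have factor : ∀ R ∈ (s \ A).powerset,
      p ^ (T.card + R.card) * (1 - p) ^ ((A.card - T.card) + ((s \ A).card - R.card))
      = (p ^ T.card * (1 - p) ^ (A.card - T.card)) * (p ^ R.card * (1 - p) ^ ((s \ A).card - R.card)) := by
    intro R hR
    rw [pow_add, pow_add]; ring
  rw [Finset.sum_congr rfl factor, ← Finset.mul_sum, weight_sum p (s \ A), mul_one]

/-- expectation of a function of |S ∩ A| -/
lemma exp_inter (p : ℝ) (s A : Finset α) (hA : A ⊆ s) (g : ℕ → ℝ) :
    ∑ S ∈ s.powerset, p ^ S.card * (1 - p) ^ (s.card - S.card) * g ((S ∩ A).card)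
      = ∑ T ∈ A.powerset, p ^ T.card * (1 - p) ^ (A.card - T.card) * g T.card := by
  rw [← Finset.sum_fiberwise_of_maps_to (g := fun S => S ∩ A) (t := A.powerset)
    (fun S hS => Finset.mem_powerset.mpr Finset.inter_subset_right)]
  refine Finset.sum_congr rfl fun T hT => ?_
  have hT' : T ⊆ A := Finset.mem_powerset.mp hT
  calc ∑ S ∈ s.powerset.filter (fun S => S ∩ A = T),
          p ^ S.card * (1 - p) ^ (s.card - S.card) * g ((S ∩ A).card)
      = ∑ S ∈ s.powerset.filter (fun S => S ∩ A = T),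
          p ^ S.card * (1 - p) ^ (s.card - S.card) * g T.card := by
        refine Finset.sum_congr rfl fun S hS => ?_
        rw [(Finset.mem_filter.mp hS).2]
    _ = (∑ S ∈ s.powerset.filter (fun S => S ∩ A = T),
          p ^ S.card * (1 - p) ^ (s.card - S.card)) * g T.card := by
        rw [Finset.sum_mul]
    _ = p ^ T.card * (1 - p) ^ (A.card - T.card) * g T.card := by
        rw [weight_fiber p s A T hA hT']


lemma Sw_one (p : ℝ) (m : ℕ) : Sw p m (fun _ => (1:ℝ)) = 1 := by
  rw [Sw]
  simp only [one_mul]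
  exact sum_B p m

lemma Sw_id (p : ℝ) (m : ℕ) : Sw p m (fun t => (t:ℝ)) = m * p := by
  induction m with
  | zero => simp [Sw, B]
  | succ m ih =>
    rw [Sw_succ]
    have h2 : Sw p m (fun t => ((t + 1 : ℕ) : ℝ)) = (m:ℝ) * p + 1 := by
      rw [Sw]
      calc ∑ t ∈ range (m+1), ((t+1:ℕ):ℝ) * B p m t
          = (∑ t ∈ range (m+1), (t:ℝ) * B p m t) + ∑ t ∈ range (m+1), B p m t := by
            rw [← Finset.sum_add_distrib]
            refine Finset.sum_congr rfl fun t _ => by push_cast; ring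
        _ = (m:ℝ) * p + 1 := by
            rw [sum_B]
            have e2 : (∑ t ∈ range (m+1), (t:ℝ) * B p m t) = Sw p m (fun t => (t:ℝ)) := rfl
            rw [e2, ih]
    rw [h2, ih]
    push_cast
    ring

/-- group a powerset sum of a function of the card by cardinality -/
lemma exp_card {α : Type*} [DecidableEq α] (p : ℝ) (A : Finset α) (g : ℕ → ℝ) :
    ∑ T ∈ A.powerset, p ^ T.card * (1 - p) ^ (A.card - T.card) * g T.card
      = Sw p A.card g := by
  rw [Finset.sum_powerset]
  rw [Sw]
  refine Finset.sum_congr rfl fun j hj => ?_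
  have e1 : ∀ T ∈ A.powersetCard j, p ^ T.card * (1 - p) ^ (A.card - T.card) * g T.card
      = p ^ j * (1 - p) ^ (A.card - j) * g j := by
    intro T hT
    rw [(Finset.mem_powersetCard.mp hT).2]
  rw [Finset.sum_congr rfl e1, Finset.sum_const, Finset.card_powersetCard]
  rw [nsmul_eq_mul]
  unfold B
  ring


variable {V : Type*} [Fintype V] [DecidableEq V] (G : SimpleGraph V) [DecidableRel G.Adj]

/-- closed neighbourhood -/
def cn (v : V) : Finset V := insert v (G.neighborFinset v)

lemma card_cn (v : V) : (cn G v).card = G.degree v + 1 := by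
  rw [cn, Finset.card_insert_of_notMem (SimpleGraph.notMem_neighborFinset_self G v),
    G.card_neighborFinset_eq_degree]

/-- pruning a set to control closed neighbourhood intersections -/
lemma prune (S : Finset V) : ∃ S' : Finset V,
    (∀ v, (S' ∩ cn G v).card ≤ G.degree v / 2) ∧
    (S.card : ℝ) - ∑ u : V, (((S ∩ cn G u).card - G.degree u / 2 : ℕ) : ℝ) ≤ (S'.card : ℝ) := by
  have hch : ∀ u : V, ∃ R : Finset V, R ⊆ S ∩ cn G u ∧
      R.card = (S ∩ cn G u).card - G.degree u / 2 := fun u =>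
    Finset.exists_subset_card_eq (Nat.sub_le _ _)
  choose R hRsub hRcard using hch
  refine ⟨S \ Finset.univ.biUnion R, fun v => ?_, ?_⟩
  · have hsub : (S \ Finset.univ.biUnion R) ∩ cn G v ⊆ (S ∩ cn G v) \ R v := by
      intro x hx
      rw [Finset.mem_inter, Finset.mem_sdiff] at hx
      rw [Finset.mem_sdiff, Finset.mem_inter]
      refine ⟨⟨hx.1.1, hx.2⟩, fun hxR => hx.1.2 ?_⟩
      exact Finset.mem_biUnion.mpr ⟨v, Finset.mem_univ v, hxR⟩
    calc ((S \ Finset.univ.biUnion R) ∩ cn G v).card ≤ ((S ∩ cn G v) \ R v).card :=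
          Finset.card_le_card hsub
      _ = (S ∩ cn G v).card - (R v).card := Finset.card_sdiff_of_subset (hRsub v)
      _ ≤ G.degree v / 2 := by rw [hRcard v]; omega
  · have h1 : S.card ≤ (S \ Finset.univ.biUnion R).card + (Finset.univ.biUnion R).card :=
      Finset.card_le_card_sdiff_add_card
    have h2 : (Finset.univ.biUnion R).card ≤ ∑ u : V, (R u).card :=
      Finset.card_biUnion_le
    have h3 : (∑ u : V, (R u).card : ℝ)
        = ∑ u : V, (((S ∩ cn G u).card - G.degree u / 2 : ℕ) : ℝ) := by
      push_cast
      exact Finset.sum_congr rfl fun u _ => by rw [hRcard u]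
    have h4 : ((Finset.univ.biUnion R).card : ℝ) ≤ ∑ u : V, (((S ∩ cn G u).card - G.degree u / 2 : ℕ) : ℝ) := by
      rw [← h3]; exact_mod_cast h2
    have h5 : (S.card : ℝ) ≤ ((S \ Finset.univ.biUnion R).card : ℝ) + ((Finset.univ.biUnion R).card : ℝ) := by
      exact_mod_cast h1
    linarith

lemma sum_pm (S' A : Finset V) :
    ∑ u ∈ A, (if u ∈ S' then (-1 : ℤ) else 1) = (A.card : ℤ) - 2 * ((A ∩ S').card : ℤ) := by
  have e : ∀ u ∈ A, (if u ∈ S' then (-1 : ℤ) else 1)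
      = 1 - 2 * (if u ∈ S' then (1 : ℤ) else 0) := by
    intro u _; by_cases h : u ∈ S' <;> simp [h]
  rw [Finset.sum_congr rfl e, Finset.sum_sub_distrib, Finset.sum_const, ← Finset.mul_sum]
  have : ∑ u ∈ A, (if u ∈ S' then (1 : ℤ) else 0) = ((A ∩ S').card : ℤ) := by
    rw [Finset.sum_ite_mem, Finset.sum_const]
    simp
  rw [this]
  simp [mul_comm]

/-- the signed domination number bound from a pruned set -/
lemma gamma_le_of_set (S' : Finset V)
    (hS' : ∀ v, (S' ∩ cn G v).card ≤ G.degree v / 2) :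
    (G.signedDominationNumber : ℝ) ≤ (Fintype.card V : ℝ) - 2 * (S'.card : ℝ) := by
  set f : V → ℤ := fun v => if v ∈ S' then (-1 : ℤ) else 1 with hf
  have hsdf : G.IsSignedDominationFunction f := by
    constructor
    · intro v; by_cases h : v ∈ S' <;> simp [hf, h]
    · intro v
      rw [show (insert v (G.neighborFinset v)) = cn G v from rfl]
      rw [sum_pm S' (cn G v)]
      have h1 : ((cn G v ∩ S').card) ≤ G.degree v / 2 := by
        rw [Finset.inter_comm]; exact hS' v
      have h2 := card_cn G v
      have h3 : (cn G v ∩ S').card ≤ G.degree v / 2 := h1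
      zify at h3
      rw [h2]
      push_cast
      have : ((G.degree v / 2 : ℕ) : ℤ) ≤ (G.degree v : ℤ) / 2 := by
        omega
      omega
  have hmem : ((Fintype.card V : ℤ) - 2 * (S'.card : ℤ)) ∈
      {s : ℤ | ∃ f : V → ℤ, G.IsSignedDominationFunction f ∧ s = ∑ v, f v} := by
    refine ⟨f, hsdf, ?_⟩
    have := sum_pm S' (Finset.univ : Finset V)
    rw [Finset.univ_inter] at this
    rw [this]
    simp [Finset.card_univ]
  have hbdd : BddBelow {s : ℤ | ∃ f : V → ℤ, G.IsSignedDominationFunction f ∧ s = ∑ v, f v} := by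
    refine ⟨-(Fintype.card V : ℤ), fun s hs => ?_⟩
    obtain ⟨g, hg, rfl⟩ := hs
    have : ∀ v : V, -1 ≤ g v := by
      intro v; rcases hg.1 v with h | h <;> omega
    calc -(Fintype.card V : ℤ) = ∑ _v : V, (-1 : ℤ) := by
          simp [Finset.card_univ]
      _ ≤ ∑ v, g v := Finset.sum_le_sum fun v _ => this v
  have := csInf_le hbdd hmem
  have hle : (G.signedDominationNumber : ℤ) ≤ (Fintype.card V : ℤ) - 2 * (S'.card : ℤ) := this
  exact_mod_cast hle


end SDFaux

open SDFaux in
theorem signed_domination_upper_bound_small_delta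
    {V : Type*} [Fintype V] [DecidableEq V] [Nonempty V]
    (G : SimpleGraph V) [DecidableRel G.Adj]
    (δ : ℕ) (hδdef : δ = G.minDegree) (hδ : 2 ≤ δ)
    (dhat : ℕ) (hdhat : dhat = δ / 2)
    (δ' : ℕ) (hδ' : δ' = if Odd δ then δ else δ + 1)
    (dtil : ℕ) (hdtil : dtil = Nat.choose (δ' + 1) ((δ' + 1) / 2)) :
    (G.signedDominationNumber : ℝ) ≤
      (1 - (2 * dhat : ℝ) /
        ((1 + (dhat : ℝ)) ^ ((1 : ℝ) + 1 / (dhat : ℝ)) *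
          (dtil : ℝ) ^ ((1 : ℝ) / (dhat : ℝ)))) * (Fintype.card V : ℝ) := by
  have hk1 : 1 ≤ dhat := by omega
  have hkR : (0:ℝ) < (dhat:ℝ) := by exact_mod_cast hk1
  have hkR0 : (dhat:ℝ) ≠ 0 := ne_of_gt hkR
  -- δ' and dtil
  have hδ'eq : δ' = 2 * dhat + 1 := by
    rcases Nat.even_or_odd δ with h | h
    · have : ¬ Odd δ := by simpa [Nat.not_odd_iff_even] using h
      rw [hδ', if_neg this]
      obtain ⟨r, hr⟩ := h
      omega
    · rw [hδ', if_pos h]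
      obtain ⟨r, hr⟩ := h
      omega
  have hdtil2 : dtil = (2 * dhat + 2).choose (dhat + 1) := by
    rw [hdtil, hδ'eq]
    congr 1 <;> omega
  have hdtilpos : 0 < dtil := by
    rw [hdtil2]
    exact Nat.choose_pos (by omega)
  -- the bound (dhat+1) * dtil ≥ 4^dhat
  have h4pow : 4 ^ dhat ≤ (dhat + 1) * dtil := by
    have h := Nat.four_pow_le_two_mul_add_one_mul_central_binom (dhat + 1)
    have e : (2 * (dhat + 1)).choose (dhat + 1) = dtil := by
      rw [hdtil2, show 2 * (dhat + 1) = 2 * dhat + 2 from by omega]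
    rw [e] at h
    have h2 : 4 * 4 ^ dhat ≤ 4 * ((dhat + 1) * dtil) := by
      calc 4 * 4 ^ dhat = 4 ^ dhat * 4 := Nat.mul_comm _ _
        _ = 4 ^ (dhat + 1) := (pow_succ 4 dhat).symm
        _ ≤ (2 * (dhat + 1) + 1) * dtil := h
        _ ≤ 4 * ((dhat + 1) * dtil) := by nlinarith
    exact Nat.le_of_mul_le_mul_left h2 (by norm_num)
  set X : ℝ := ((dhat : ℝ) + 1) * (dtil : ℝ) with hX
  have hX0 : 0 < X := by positivity
  have hX4 : (4:ℝ) ^ dhat ≤ X := by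
    have h5 : ((4 ^ dhat : ℕ) : ℝ) ≤ (((dhat + 1) * dtil : ℕ) : ℝ) := Nat.cast_le.mpr h4pow
    push_cast at h5
    rw [hX]
    exact h5
  set p : ℝ := X ^ (-(1:ℝ)/(dhat:ℝ)) with hp
  have hp0 : 0 < p := Real.rpow_pos_of_pos hX0 _
  have hpinv : p = (X ^ ((1:ℝ)/(dhat:ℝ)))⁻¹ := by
    rw [hp, show -(1:ℝ)/(dhat:ℝ) = -((1:ℝ)/(dhat:ℝ)) by ring, Real.rpow_neg hX0.le]
  have hX4' : (4:ℝ) ≤ X ^ ((1:ℝ)/(dhat:ℝ)) := by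
    have h1 : ((4:ℝ) ^ dhat) ^ ((1:ℝ)/(dhat:ℝ)) ≤ X ^ ((1:ℝ)/(dhat:ℝ)) :=
      Real.rpow_le_rpow (by positivity) hX4 (by positivity)
    have h2 : ((4:ℝ) ^ dhat) ^ ((1:ℝ)/(dhat:ℝ)) = 4 := by
      rw [← Real.rpow_natCast 4 dhat, ← Real.rpow_mul (by norm_num : (0:ℝ) ≤ 4)]
      rw [mul_one_div, div_self hkR0, Real.rpow_one]
    rw [h2] at h1
    exact h1
  have hp14 : p ≤ 1/4 := by
    rw [hpinv]
    rw [show (1:ℝ)/4 = 4⁻¹ by norm_num]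
    exact inv_anti₀ (by norm_num) hX4'
  have hp1 : p ≤ 1 := by linarith
  have hppow : (dtil : ℝ) * p ^ dhat = 1 / ((dhat:ℝ) + 1) := by
    have h1 : p ^ dhat = X⁻¹ := by
      rw [hp, ← Real.rpow_natCast (X ^ (-(1:ℝ)/(dhat:ℝ))) dhat,
        ← Real.rpow_mul hX0.le]
      rw [show -(1:ℝ)/(dhat:ℝ) * (dhat:ℕ) = -1 by
        push_cast; field_simp]
      rw [Real.rpow_neg_one]
    rw [h1, hX]
    have hdt0 : (dtil:ℝ) ≠ 0 := by positivity
    field_simp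
  -- expectation setup
  set n := Fintype.card V with hn
  have hnuniv : (Finset.univ : Finset V).card = n := by rw [Finset.card_univ]
  -- per-vertex expectation bound
  have hEu : ∀ u : V,
      ∑ S ∈ (Finset.univ : Finset V).powerset,
        p ^ S.card * (1 - p) ^ (n - S.card) * (((S ∩ cn G u).card - G.degree u / 2 : ℕ) : ℝ)
      ≤ (dtil : ℝ) * p ^ (dhat + 1) := by
    intro u
    have hdeg : 2 * dhat ≤ G.degree u := by
      have h1 : G.minDegree ≤ G.degree u := G.minDegree_le_degree u
      omega
    have e1 : ∑ S ∈ (Finset.univ : Finset V).powerset,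
          p ^ S.card * (1 - p) ^ (n - S.card) * (((S ∩ cn G u).card - G.degree u / 2 : ℕ) : ℝ)
        = Em p (G.degree u + 1) (G.degree u / 2) := by
      rw [show n = (Finset.univ : Finset V).card from hnuniv.symm]
      rw [exp_inter p Finset.univ (cn G u) (Finset.subset_univ _)
        (fun t => ((t - G.degree u / 2 : ℕ) : ℝ))]
      rw [exp_card p (cn G u) (fun t => ((t - G.degree u / 2 : ℕ) : ℝ))]
      rw [Em, card_cn]
    rw [e1]
    calc Em p (G.degree u + 1) (G.degree u / 2)
        ≤ ((2 * dhat + 2).choose (dhat + 1) : ℝ) * p ^ (dhat + 1) :=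
          Em_tail hp0 hp14 dhat (G.degree u) hdeg
      _ = (dtil : ℝ) * p ^ (dhat + 1) := by rw [← hdtil2]
  -- expected cardinality
  have hcard : ∑ S ∈ (Finset.univ : Finset V).powerset,
      p ^ S.card * (1 - p) ^ (n - S.card) * (S.card : ℝ) = n * p := by
    have e0 : ∀ S ∈ (Finset.univ : Finset V).powerset,
        p ^ S.card * (1 - p) ^ (n - S.card) * (S.card : ℝ)
        = p ^ S.card * (1 - p) ^ (n - S.card) * (((S ∩ (Finset.univ : Finset V)).card : ℕ) : ℝ) := by
      intro S _
      rw [Finset.inter_univ]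
    rw [Finset.sum_congr rfl e0]
    rw [show n = (Finset.univ : Finset V).card from hnuniv.symm]
    rw [exp_inter p Finset.univ Finset.univ (Finset.subset_univ _) (fun t => (t : ℝ))]
    rw [exp_card p Finset.univ (fun t => (t : ℝ)), Sw_id, hnuniv]
  -- combine
  set W : Finset V → ℝ := fun S => p ^ S.card * (1 - p) ^ (n - S.card) with hW
  set F : Finset V → ℝ := fun S =>
    (S.card : ℝ) - ∑ u : V, (((S ∩ cn G u).card - G.degree u / 2 : ℕ) : ℝ) with hF
  have hWpos : ∀ S : Finset V, 0 < W S := by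
    intro S
    have : 0 < 1 - p := by linarith
    rw [hW]; positivity
  have hWsum : ∑ S ∈ (Finset.univ : Finset V).powerset, W S = 1 := by
    rw [hW, ← hnuniv]
    exact weight_sum p Finset.univ
  set c : ℝ := (n : ℝ) * p - (n : ℝ) * ((dtil : ℝ) * p ^ (dhat + 1)) with hc
  have hEF : c ≤ ∑ S ∈ (Finset.univ : Finset V).powerset, W S * F S := by
    have expand : ∑ S ∈ (Finset.univ : Finset V).powerset, W S * F S
        = (∑ S ∈ (Finset.univ : Finset V).powerset, W S * (S.card : ℝ))
          - ∑ S ∈ (Finset.univ : Finset V).powerset, ∑ u : V,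
              W S * (((S ∩ cn G u).card - G.degree u / 2 : ℕ) : ℝ) := by
      rw [← Finset.sum_sub_distrib]
      refine Finset.sum_congr rfl fun S _ => ?_
      rw [hF]
      rw [mul_sub, Finset.mul_sum]
    rw [expand, Finset.sum_comm]
    have hub : ∑ u : V, ∑ S ∈ (Finset.univ : Finset V).powerset,
        W S * (((S ∩ cn G u).card - G.degree u / 2 : ℕ) : ℝ)
        ≤ (n : ℝ) * ((dtil : ℝ) * p ^ (dhat + 1)) := by
      calc ∑ u : V, ∑ S ∈ (Finset.univ : Finset V).powerset,
            W S * (((S ∩ cn G u).card - G.degree u / 2 : ℕ) : ℝ)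
          ≤ ∑ _u : V, (dtil : ℝ) * p ^ (dhat + 1) :=
            Finset.sum_le_sum fun u _ => hEu u
        _ = (n : ℝ) * ((dtil : ℝ) * p ^ (dhat + 1)) := by
            rw [Finset.sum_const, hnuniv, nsmul_eq_mul]
    have hcd : ∑ S ∈ (Finset.univ : Finset V).powerset, W S * (S.card : ℝ) = (n : ℝ) * p := hcard
    rw [hc, hcd]
    linarith
  -- existence of a good set
  have hex : ∃ S₀ ∈ (Finset.univ : Finset V).powerset, c ≤ F S₀ := by
    by_contra hcon
    push_neg at hcon
    have hne : ((Finset.univ : Finset V).powerset).Nonempty :=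
      ⟨∅, Finset.mem_powerset.mpr (Finset.empty_subset _)⟩
    have hlt : ∑ S ∈ (Finset.univ : Finset V).powerset, W S * F S
        < ∑ S ∈ (Finset.univ : Finset V).powerset, W S * c := by
      refine Finset.sum_lt_sum_of_nonempty hne fun S hS => ?_
      have h1 := hcon S hS
      have h2 := hWpos S
      nlinarith
    rw [← Finset.sum_mul, hWsum, one_mul] at hlt
    linarith
  obtain ⟨S₀, _, hS₀⟩ := hex
  obtain ⟨S', hS'prop, hS'card⟩ := prune G S₀
  have hFS₀ : F S₀ ≤ (S'.card : ℝ) := hS'card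
  have hcS' : c ≤ (S'.card : ℝ) := le_trans hS₀ hFS₀
  have hγ := gamma_le_of_set G S' hS'prop
  -- final algebra
  have hdtp : (dtil : ℝ) * p ^ (dhat + 1) = p / ((dhat : ℝ) + 1) := by
    rw [pow_succ]
    calc (dtil : ℝ) * (p ^ dhat * p) = ((dtil : ℝ) * p ^ dhat) * p := by ring
      _ = (1 / ((dhat : ℝ) + 1)) * p := by rw [hppow]
      _ = p / ((dhat : ℝ) + 1) := by ring
  set D : ℝ := (1 + (dhat : ℝ)) ^ ((1 : ℝ) + 1 / (dhat : ℝ)) * (dtil : ℝ) ^ ((1 : ℝ) / (dhat : ℝ))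
    with hDdef
  have hD : D * p = 1 + (dhat : ℝ) := by
    have h1 : (1 + (dhat : ℝ)) ^ ((1 : ℝ) + 1 / (dhat : ℝ))
        = (1 + (dhat : ℝ)) * (1 + (dhat : ℝ)) ^ ((1 : ℝ) / (dhat : ℝ)) := by
      rw [Real.rpow_add (by positivity), Real.rpow_one]
    have h2 : (1 + (dhat : ℝ)) ^ ((1 : ℝ) / (dhat : ℝ)) * (dtil : ℝ) ^ ((1 : ℝ) / (dhat : ℝ))
        = X ^ ((1 : ℝ) / (dhat : ℝ)) := by
      rw [← Real.mul_rpow (by positivity) (by positivity), hX]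
      congr 1
      ring
    have h3 : X ^ ((1 : ℝ) / (dhat : ℝ)) * p = 1 := by
      rw [hp, ← Real.rpow_add hX0]
      rw [show (1 : ℝ) / (dhat : ℝ) + -(1 : ℝ) / (dhat : ℝ) = 0 by ring, Real.rpow_zero]
    calc D * p = (1 + (dhat : ℝ)) * ((1 + (dhat : ℝ)) ^ ((1 : ℝ) / (dhat : ℝ))
          * (dtil : ℝ) ^ ((1 : ℝ) / (dhat : ℝ)) * p) := by rw [hDdef, h1]; ring
      _ = (1 + (dhat : ℝ)) * (X ^ ((1 : ℝ) / (dhat : ℝ)) * p) := by rw [h2]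
      _ = 1 + (dhat : ℝ) := by rw [h3, mul_one]
  have hDpos : 0 < D := by
    rw [hDdef]
    have := hdtilpos
    positivity
  have hfrac : (2 * (dhat : ℝ)) / D = 2 * (dhat : ℝ) * p / (1 + (dhat : ℝ)) := by
    rw [div_eq_div_iff (ne_of_gt hDpos) (by positivity : (0:ℝ) < 1 + (dhat:ℝ)).ne']
    calc 2 * (dhat : ℝ) * (1 + (dhat : ℝ)) = 2 * (dhat : ℝ) * (D * p) := by rw [hD]
      _ = 2 * (dhat : ℝ) * p * D := by ring
  have hcval : c = (n : ℝ) * p * (dhat : ℝ) / ((dhat : ℝ) + 1) := by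
    rw [hc, hdtp]
    field_simp
    ring
  calc (G.signedDominationNumber : ℝ)
      ≤ (n : ℝ) - 2 * (S'.card : ℝ) := hγ
    _ ≤ (n : ℝ) - 2 * c := by linarith
    _ = (1 - 2 * (dhat : ℝ) / D) * (n : ℝ) := by
        rw [hfrac, hcval]
        field_simp
        ring
    _ = (1 - (2 * dhat : ℝ) /
        ((1 + (dhat : ℝ)) ^ ((1 : ℝ) + 1 / (dhat : ℝ)) *
          (dtil : ℝ) ^ ((1 : ℝ) / (dhat : ℝ)))) * (Fintype.card V : ℝ) := by
        rw [hDdef, hn]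
end

section
/- Let G be a finite simple graph with n vertices and minimum degree δ ≥ 10^6. Then the signed domination number of G satisfies γ_s(G) ≤ ((√(6 ln(δ+1)) + 1.21) / √(δ+1)) · n. -/
open Finset Real

section SDauxSection

variable {V : Type*} [Fintype V] [DecidableEq V]

/-- probability weight of one coin -/
noncomputable def SDpw (ε : ℝ) (b : Bool) : ℝ := if b then 1/2 + ε else 1/2 - ε

/-- product weight on the sample space `V → Bool` -/
noncomputable def SDw (ε : ℝ) (ω : V → Bool) : ℝ := ∏ v, SDpw ε (ω v)

/-- the ±1 value of a coin -/
def SDsg (b : Bool) : ℤ := if b then 1 else -1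

lemma SDsg_ge (b : Bool) : -1 ≤ SDsg b := by cases b <;> simp [SDsg]

omit [DecidableEq V] in
lemma SDw_pos {ε : ℝ} (hε0 : 0 ≤ ε) (hε : ε ≤ 0.06) (ω : V → Bool) : 0 < SDw ε ω := by
  refine Finset.prod_pos fun v _ => ?_
  unfold SDpw; split <;> (norm_num; try linarith)

lemma SD_expect_prod (ε : ℝ) (A : Finset V) (h : Bool → ℝ) :
    ∑ ω : V → Bool, SDw ε ω * ∏ u ∈ A, h (ω u)
      = ((1/2+ε) * h true + (1/2-ε) * h false) ^ A.card := by
  have key : ∀ ω : V → Bool, SDw ε ω * ∏ u ∈ A, h (ω u)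
      = ∏ v, (SDpw ε (ω v) * (if v ∈ A then h (ω v) else 1)) := by
    intro ω
    rw [Finset.prod_mul_distrib]
    congr 1
    rw [Finset.prod_ite_mem, Finset.univ_inter]
  simp only [key]
  rw [← Fintype.prod_sum (fun v b => SDpw ε b * (if v ∈ A then h b else 1))]
  have : ∀ v : V, (∑ b, SDpw ε b * (if v ∈ A then h b else 1))
      = (if v ∈ A then ((1/2+ε) * h true + (1/2-ε) * h false) else 1) := by
    intro v
    by_cases hv : v ∈ A <;> simp [SDpw, hv] <;> ring
  rw [Finset.prod_congr rfl (fun v _ => this v), Finset.prod_ite_mem, Finset.univ_inter,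
    Finset.prod_const]

lemma SDw_sum_one {ε : ℝ} : ∑ ω : V → Bool, SDw ε ω = 1 := by
  have h := SD_expect_prod (V := V) ε ∅ (fun _ => 0)
  simpa using h

lemma SD_exp_upper {x : ℝ} (h0 : 0 ≤ x) (h1 : x ≤ 1) :
    Real.exp x ≤ 1 + x + (3/4) * x^2 := by
  have hb := Real.exp_bound (x := x) (by rwa [abs_of_nonneg h0]) (n := 2) (by norm_num)
  rw [abs_of_nonneg h0] at hb
  have := abs_le.1 hb
  simp [Finset.sum_range_succ, Nat.factorial] at this
  nlinarith [this.2]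

lemma SD_exp_neg_upper {x : ℝ} (h0 : 0 ≤ x) (h1 : x ≤ 1) :
    Real.exp (-x) ≤ 1 - x + (3/4) * x^2 := by
  have hb := Real.exp_bound (x := -x) (by rwa [abs_neg, abs_of_nonneg h0]) (n := 2) (by norm_num)
  rw [abs_neg, abs_of_nonneg h0] at hb
  have := abs_le.1 hb
  simp [Finset.sum_range_succ, Nat.factorial] at this
  nlinarith [this.2]

lemma SD_phi_le {ε t : ℝ} (hε0 : 0 ≤ ε) (hε : ε ≤ 1/2) (ht0 : 0 ≤ t) (ht1 : t ≤ 1) :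
    (1/2+ε) * Real.exp (-t) + (1/2-ε) * Real.exp t ≤ Real.exp ((3/4)*t^2 - 2*ε*t) := by
  have h1 := SD_exp_neg_upper ht0 ht1
  have h2 := SD_exp_upper ht0 ht1
  have h3 := Real.add_one_le_exp ((3/4)*t^2 - 2*ε*t)
  nlinarith [h1, h2, h3]

lemma SD_chernoff {ε : ℝ} (hε0 : 0 ≤ ε) (hε : ε ≤ 0.06) (A : Finset V) (k : ℕ) :
    ∑ ω : V → Bool, SDw ε ω * (if (∑ u ∈ A, SDsg (ω u)) ≤ -(k:ℤ) then (1:ℝ) else 0)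
      ≤ Real.exp (-(4/3)*ε^2*A.card - (4/3)*ε*k) := by
  set t : ℝ := (4/3)*ε with ht
  have ht0 : 0 ≤ t := by positivity
  have ht1 : t ≤ 1 := by rw [ht]; norm_num at hε ⊢; linarith
  have step1 : ∀ ω : V → Bool,
      SDw ε ω * (if (∑ u ∈ A, SDsg (ω u)) ≤ -(k:ℤ) then (1:ℝ) else 0)
        ≤ SDw ε ω * (Real.exp (-t*k) * ∏ u ∈ A, Real.exp (-t * (if ω u then (1:ℝ) else -1))) := by
    intro ω
    have hw := (SDw_pos hε0 hε ω).le
    refine mul_le_mul_of_nonneg_left ?_ hw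
    have hprod : (∏ u ∈ A, Real.exp (-t * (if ω u then (1:ℝ) else -1)))
        = Real.exp (-t * ((∑ u ∈ A, SDsg (ω u) : ℤ) : ℝ)) := by
      rw [← Real.exp_sum]
      congr 1
      rw [← Finset.mul_sum]
      congr 1
      push_cast
      refine Finset.sum_congr rfl fun u _ => ?_
      rcases Bool.dichotomy (ω u) with h | h <;> simp [SDsg, h]
    rw [hprod]
    split
    · rename_i hS
      rw [← Real.exp_add]
      have hSk : -t*(k:ℝ) + -t * ((∑ u ∈ A, SDsg (ω u) : ℤ) : ℝ) ≥ 0 := by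
        have : ((∑ u ∈ A, SDsg (ω u) : ℤ) : ℝ) ≤ -(k:ℝ) := by exact_mod_cast hS
        nlinarith
      calc (1:ℝ) = Real.exp 0 := by simp
        _ ≤ _ := by apply Real.exp_le_exp.2; linarith
    · positivity
  calc ∑ ω : V → Bool, SDw ε ω * (if (∑ u ∈ A, SDsg (ω u)) ≤ -(k:ℤ) then (1:ℝ) else 0)
      ≤ ∑ ω : V → Bool, SDw ε ω * (Real.exp (-t*k) * ∏ u ∈ A, Real.exp (-t * (if ω u then (1:ℝ) else -1))) :=
        Finset.sum_le_sum fun ω _ => step1 ω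
    _ = Real.exp (-t*k) * ∑ ω : V → Bool, SDw ε ω * ∏ u ∈ A, Real.exp (-t * (if ω u then (1:ℝ) else -1)) := by
        rw [Finset.mul_sum]; congr 1; ext ω; ring
    _ = Real.exp (-t*k) * ((1/2+ε) * Real.exp (-t) + (1/2-ε) * Real.exp t) ^ A.card := by
        rw [SD_expect_prod ε A (fun b => Real.exp (-t * (if b then (1:ℝ) else -1)))]
        norm_num
    _ ≤ Real.exp (-t*k) * (Real.exp ((3/4)*t^2 - 2*ε*t)) ^ A.card := by
        have hφ0 : 0 ≤ (1/2+ε) * Real.exp (-t) + (1/2-ε) * Real.exp t := by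
          have : (0:ℝ) ≤ 1/2 - ε := by norm_num at hε ⊢; linarith
          positivity
        refine mul_le_mul_of_nonneg_left (pow_le_pow_left₀ hφ0 ?_ _) (Real.exp_pos _).le
        exact SD_phi_le hε0 (by norm_num at hε ⊢; linarith) ht0 ht1
    _ = Real.exp (-t*k + A.card * ((3/4)*t^2 - 2*ε*t)) := by
        rw [← Real.exp_nat_mul, ← Real.exp_add]
    _ = Real.exp (-(4/3)*ε^2*A.card - (4/3)*ε*k) := by
        congr 1; rw [ht]; ring

lemma SD_geom_le {r : ℝ} (h0 : 0 ≤ r) (h1 : r < 1) (N : ℕ) :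
    ∑ k ∈ Finset.range N, r^k ≤ 1/(1-r) := by
  have hg := geom_sum_mul r N
  have hrN : 0 ≤ r^N := pow_nonneg h0 N
  rw [le_div_iff₀ (by linarith)]
  nlinarith [hg]

omit [Fintype V] [DecidableEq V] in
lemma SD_cost_pointwise (A : Finset V) (ω : V → Bool) :
    (if (∑ u ∈ A, SDsg (ω u)) ≤ 0 then (((2 - ∑ u ∈ A, SDsg (ω u) : ℤ)):ℝ) else 0)
      ≤ 2 * ∑ k ∈ Finset.range (A.card + 1),
          (if (∑ u ∈ A, SDsg (ω u)) ≤ -(k:ℤ) then (1:ℝ) else 0) := by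
  set s : ℤ := ∑ u ∈ A, SDsg (ω u) with hs
  have hlow : -(A.card : ℤ) ≤ s := by
    rw [hs]
    calc -(A.card : ℤ) = ∑ _u ∈ A, (-1 : ℤ) := by
          rw [Finset.sum_const, nsmul_eq_mul]; ring
      _ ≤ ∑ u ∈ A, SDsg (ω u) := Finset.sum_le_sum fun u _ => SDsg_ge (ω u)
  have hnonneg : ∀ k ∈ Finset.range (A.card + 1),
      (0:ℝ) ≤ (if s ≤ -(k:ℤ) then (1:ℝ) else 0) := by
    intro k _; split <;> norm_num
  by_cases hsle : s ≤ 0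
  · rw [if_pos hsle]
    set j : ℕ := (-s).toNat with hj
    have hjs : (j : ℤ) = -s := Int.toNat_of_nonneg (by omega)
    have hsub : Finset.range (j+1) ⊆ Finset.range (A.card + 1) := by
      apply Finset.range_subset_range.2
      omega
    have h1 : ∑ k ∈ Finset.range (j+1), (if s ≤ -(k:ℤ) then (1:ℝ) else 0) = (j+1 : ℝ) := by
      have hall : ∀ k ∈ Finset.range (j+1), (if s ≤ -(k:ℤ) then (1:ℝ) else 0) = 1 := by
        intro k hk
        rw [if_pos]
        have hk' : (k:ℤ) ≤ (j:ℤ) := by exact_mod_cast Nat.lt_succ_iff.1 (Finset.mem_range.1 hk)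
        omega
      rw [Finset.sum_congr rfl hall, Finset.sum_const, Finset.card_range, nsmul_eq_mul, mul_one]
      push_cast; ring
    have h2 : ∑ k ∈ Finset.range (j+1), (if s ≤ -(k:ℤ) then (1:ℝ) else 0)
        ≤ ∑ k ∈ Finset.range (A.card+1), (if s ≤ -(k:ℤ) then (1:ℝ) else 0) :=
      Finset.sum_le_sum_of_subset_of_nonneg hsub (fun k hk _ => hnonneg k hk)
    have hsR : ((s:ℤ):ℝ) = -(j:ℝ) := by
      have : (s:ℤ) = -(j:ℤ) := by omega
      rw [this]; push_cast; ring
    push_cast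
    rw [hsR] at *
    nlinarith [h1, h2]
  · rw [if_neg hsle]
    have : (0:ℝ) ≤ ∑ k ∈ Finset.range (A.card + 1), (if s ≤ -(k:ℤ) then (1:ℝ) else 0) :=
      Finset.sum_nonneg hnonneg
    linarith

lemma SD_cost_exp {ε : ℝ} (hε0 : 0 < ε) (hε : ε ≤ 0.06) (A : Finset V) :
    ∑ ω : V → Bool, SDw ε ω *
        (if (∑ u ∈ A, SDsg (ω u)) ≤ 0 then (((2 - ∑ u ∈ A, SDsg (ω u) : ℤ)):ℝ) else 0)
      ≤ 2 * Real.exp (-(4/3)*ε^2*A.card) / ε := by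
  set r : ℝ := Real.exp (-(4/3)*ε) with hr
  have hr0 : 0 ≤ r := (Real.exp_pos _).le
  have hx1 : (4/3)*ε ≤ 1 := by norm_num at hε ⊢; linarith
  have hr1 : r < 1 := by
    rw [hr, Real.exp_lt_one_iff]
    nlinarith
  have hεr : ε ≤ 1 - r := by
    have h2 : r ≤ 1 - 4/3*ε + 3/4*(4/3*ε)^2 := by
      rw [hr, show -(4/3)*ε = -(4/3*ε) by ring]
      exact SD_exp_neg_upper (by positivity) hx1
    nlinarith [h2, hε0.le, hε]
  calc ∑ ω : V → Bool, SDw ε ω *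
        (if (∑ u ∈ A, SDsg (ω u)) ≤ 0 then (((2 - ∑ u ∈ A, SDsg (ω u) : ℤ)):ℝ) else 0)
      ≤ ∑ ω : V → Bool, SDw ε ω * (2 * ∑ k ∈ Finset.range (A.card + 1),
          (if (∑ u ∈ A, SDsg (ω u)) ≤ -(k:ℤ) then (1:ℝ) else 0)) := by
        refine Finset.sum_le_sum fun ω _ => ?_
        exact mul_le_mul_of_nonneg_left (SD_cost_pointwise A ω) (SDw_pos hε0.le hε ω).le
    _ = 2 * ∑ k ∈ Finset.range (A.card + 1), ∑ ω : V → Bool,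
          SDw ε ω * (if (∑ u ∈ A, SDsg (ω u)) ≤ -(k:ℤ) then (1:ℝ) else 0) := by
        simp only [Finset.mul_sum]
        rw [Finset.sum_comm]
        exact Finset.sum_congr rfl fun k _ => Finset.sum_congr rfl fun ω _ => by ring
    _ ≤ 2 * ∑ k ∈ Finset.range (A.card + 1),
          Real.exp (-(4/3)*ε^2*A.card) * r ^ k := by
        refine mul_le_mul_of_nonneg_left (Finset.sum_le_sum fun k _ => ?_) (by norm_num)
        calc ∑ ω : V → Bool, SDw ε ω * (if (∑ u ∈ A, SDsg (ω u)) ≤ -(k:ℤ) then (1:ℝ) else 0)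
            ≤ Real.exp (-(4/3)*ε^2*A.card - (4/3)*ε*k) := SD_chernoff hε0.le hε A k
          _ = Real.exp (-(4/3)*ε^2*A.card) * r ^ k := by
              rw [hr, ← Real.exp_nat_mul, ← Real.exp_add]
              congr 1; ring
    _ = 2 * Real.exp (-(4/3)*ε^2*A.card) * ∑ k ∈ Finset.range (A.card + 1), r ^ k := by
        rw [← Finset.mul_sum]; ring
    _ ≤ 2 * Real.exp (-(4/3)*ε^2*A.card) * (1/(1-r)) := by
        refine mul_le_mul_of_nonneg_left (SD_geom_le hr0 hr1 _) (by positivity)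
    _ ≤ 2 * Real.exp (-(4/3)*ε^2*A.card) / ε := by
        rw [div_eq_mul_inv, mul_one_div]
        refine mul_le_mul_of_nonneg_left ?_ (by positivity)
        exact inv_anti₀ hε0 (by linarith)

end SDauxSection

section SDgood

variable {V : Type*} [Fintype V] [DecidableEq V]

/-- The alteration step: from any ±1 function, flipping a few `-1`s produces a signed
domination function, at a cost controlled by the deficiencies. -/
lemma SD_exists_good (G : SimpleGraph V) [DecidableRel G.Adj]
    (hdeg : ∀ v : V, 1 ≤ G.degree v) (f : V → ℤ) (hf : ∀ v, f v = 1 ∨ f v = -1) :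
    ∃ g : V → ℤ, G.IsSignedDominationFunction g ∧
      ∑ v, g v ≤ ∑ v, f v + ∑ v : V,
        (if (∑ u ∈ insert v (G.neighborFinset v), f u) ≤ 0
         then 2 - ∑ u ∈ insert v (G.neighborFinset v), f u else 0) := by
  classical
  set A : V → Finset V := fun v => insert v (G.neighborFinset v) with hA
  set S : V → ℤ := fun v => ∑ u ∈ A v, f u with hS
  set Neg : V → Finset V := fun v => (A v).filter (fun u => f u = -1) with hNeg
  have hm : ∀ v, (A v).card = G.degree v + 1 := by
    intro v
    rw [hA]
    rw [Finset.card_insert_of_notMem (SimpleGraph.notMem_neighborFinset_self G v)]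
    rfl
  have hScard : ∀ v, S v = ((A v).card : ℤ) - 2 * ((Neg v).card : ℤ) := by
    intro v
    show ∑ u ∈ A v, f u = _
    rw [← Finset.sum_filter_add_sum_filter_not (A v) (fun u => f u = -1) f]
    have h1 : ∑ u ∈ (A v).filter (fun u => f u = -1), f u = -((Neg v).card : ℤ) := by
      rw [Finset.sum_congr rfl (fun u hu => (Finset.mem_filter.1 hu).2)]
      simp [hNeg]
    have h2 : ∑ u ∈ (A v).filter (fun u => ¬ f u = -1), f u
        = (((A v).filter (fun u => ¬ f u = -1)).card : ℤ) := by
      rw [Finset.sum_congr rfl (fun u hu => ?_), Finset.sum_const, nsmul_eq_mul, mul_one]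
      have := (Finset.mem_filter.1 hu).2
      rcases hf u with h | h
      · exact h
      · exact absurd h this
    rw [h1, h2]
    have hcard : ((A v).filter (fun u => f u = -1)).card
        + ((A v).filter (fun u => ¬ f u = -1)).card = (A v).card :=
      Finset.card_filter_add_card_filter_not _
    have : (Neg v).card = ((A v).filter (fun u => f u = -1)).card := rfl
    omega
  set needed : V → ℕ := fun v => ((1 - S v).toNat + 1) / 2 with hneeded
  have hneed_le : ∀ v, S v ≤ 0 → needed v ≤ (Neg v).card := by
    intro v hv
    have h1 : (1 - S v).toNat = 1 - S v := Int.toNat_of_nonneg (by omega)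
    have h2 : 2 * (needed v : ℤ) ≤ 2 - S v := by
      rw [hneeded]
      have : 2 * (((1 - S v).toNat + 1) / 2) ≤ (1 - S v).toNat + 1 := by omega
      push_cast
      omega
    have hm2 : (2:ℤ) ≤ (A v).card := by
      have := hdeg v
      rw [hm v]
      omega
    have := hScard v
    omega
  have hMex : ∀ v : V, ∃ Mv : Finset V, Mv ⊆ Neg v ∧ (S v ≤ 0 → Mv.card = needed v) := by
    intro v
    by_cases h : S v ≤ 0
    · obtain ⟨t, ht, htc⟩ := Finset.exists_subset_card_eq (hneed_le v h)
      exact ⟨t, ht, fun _ => htc⟩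
    · exact ⟨∅, Finset.empty_subset _, fun h' => absurd h' h⟩
  choose M hM1 hM2 using hMex
  set B : Finset V := Finset.univ.filter (fun v => S v ≤ 0) with hB
  set F : Finset V := B.biUnion M with hF
  set g : V → ℤ := fun u => if u ∈ F then 1 else f u with hg
  have hFneg : ∀ u ∈ F, f u = -1 := by
    intro u hu
    obtain ⟨v, _, hv⟩ := Finset.mem_biUnion.1 hu
    exact (Finset.mem_filter.1 (hM1 v hv)).2
  have key : ∀ C : Finset V, ∑ u ∈ C, g u = ∑ u ∈ C, f u + 2 * (((C ∩ F)).card : ℤ) := by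
    intro C
    have h1 : ∀ u ∈ C, g u = f u + (if u ∈ F then 2 else 0) := by
      intro u _
      by_cases h : u ∈ F
      · simp [hg, h, hFneg u h]
      · simp [hg, h]
    rw [Finset.sum_congr rfl h1, Finset.sum_add_distrib]
    congr 1
    rw [Finset.sum_ite_mem, Finset.sum_const, nsmul_eq_mul]
    ring
  have hgval : ∀ u, g u = 1 ∨ g u = -1 := by
    intro u
    by_cases h : u ∈ F
    · left; simp [hg, h]
    · have : g u = f u := by simp [hg, h]
      rw [this]; exact hf u
  refine ⟨g, ⟨hgval, ?_⟩, ?_⟩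
  · intro v
    rw [key (A v)]
    by_cases hv : S v ≤ 0
    · have hMsub : M v ⊆ A v ∩ F := by
        intro u hu
        refine Finset.mem_inter.2 ⟨Finset.filter_subset _ _ (hM1 v hu), ?_⟩
        exact Finset.mem_biUnion.2 ⟨v, Finset.mem_filter.2 ⟨Finset.mem_univ v, hv⟩, hu⟩
      have hcard : needed v ≤ (A v ∩ F).card := by
        rw [← hM2 v hv]; exact Finset.card_le_card hMsub
      have h2 : 1 - S v ≤ 2 * (needed v : ℤ) := by
        have h1 : ((1 - S v).toNat : ℤ) = 1 - S v := Int.toNat_of_nonneg (by omega)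
        rw [hneeded]
        have : (1 - S v).toNat ≤ 2 * (((1 - S v).toNat + 1) / 2) := by omega
        push_cast
        omega
      have : (needed v : ℤ) ≤ ((A v ∩ F).card : ℤ) := by exact_mod_cast hcard
      have hSv : S v = ∑ u ∈ A v, f u := rfl
      omega
    · have : (0:ℤ) ≤ ((A v ∩ F).card : ℤ) := Int.natCast_nonneg _
      have hSv : S v = ∑ u ∈ A v, f u := rfl
      omega
  · rw [key Finset.univ, Finset.univ_inter]
    have h1 : (F.card : ℤ) ≤ ∑ v ∈ B, (needed v : ℤ) := by
      have := Finset.card_biUnion_le (s := B) (t := M)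
      calc (F.card : ℤ) ≤ ((∑ v ∈ B, (M v).card : ℕ) : ℤ) := by exact_mod_cast this
        _ = ∑ v ∈ B, ((M v).card : ℤ) := by push_cast; rfl
        _ = ∑ v ∈ B, (needed v : ℤ) := by
            refine Finset.sum_congr rfl fun v hv => ?_
            rw [hM2 v (Finset.mem_filter.1 hv).2]
    have h3 : 2 * (F.card : ℤ) ≤ ∑ v ∈ B, (2 - S v) := by
      calc 2 * (F.card : ℤ) ≤ 2 * ∑ v ∈ B, (needed v : ℤ) := by linarith
        _ = ∑ v ∈ B, 2 * (needed v : ℤ) := by rw [Finset.mul_sum]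
        _ ≤ ∑ v ∈ B, (2 - S v) := by
            refine Finset.sum_le_sum fun v hv => ?_
            have hv0 : S v ≤ 0 := (Finset.mem_filter.1 hv).2
            have h1 : (1 - S v).toNat = 1 - S v := Int.toNat_of_nonneg (by omega)
            rw [hneeded]
            have : 2 * (((1 - S v).toNat + 1) / 2) ≤ (1 - S v).toNat + 1 := by omega
            push_cast
            omega
    have h4 : ∑ v ∈ B, (2 - S v) = ∑ v : V, (if S v ≤ 0 then 2 - S v else 0) := by
      rw [hB, Finset.sum_filter]
    have hSdef : ∀ v : V, (∑ u ∈ insert v (G.neighborFinset v), f u) = S v := fun v => rfl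
    simp only [hSdef]
    omega

end SDgood

set_option maxHeartbeats 2000000 in
theorem signed_domination_upper_bound_large_delta
    {V : Type*} [Fintype V] [DecidableEq V] [Nonempty V]
    (G : SimpleGraph V) [DecidableRel G.Adj]
    (δ : ℕ) (hδdef : δ = G.minDegree) (hδ : 10 ^ 6 ≤ δ) :
    (G.signedDominationNumber : ℝ) ≤
      ((Real.sqrt (6 * Real.log ((δ : ℝ) + 1)) + 1.21) / Real.sqrt ((δ : ℝ) + 1)) *
        (Fintype.card V : ℝ) := by
  classical
  set D : ℝ := (δ:ℝ) + 1 with hD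
  set Lg : ℝ := Real.log D with hLg
  have hδR : (10:ℝ)^6 ≤ (δ:ℝ) := by exact_mod_cast hδ
  have hD6 : (10:ℝ)^6 + 1 ≤ D := by rw [hD]; linarith
  have hD0 : (0:ℝ) < D := by norm_num at hD6 ⊢; linarith
  have hsqD : (1000:ℝ) ≤ Real.sqrt D := by
    rw [show (1000:ℝ) = Real.sqrt (1000^2) from (Real.sqrt_sq (by norm_num)).symm]
    apply Real.sqrt_le_sqrt
    norm_num at hD6 ⊢
    linarith
  have hsqD0 : (0:ℝ) < Real.sqrt D := by linarith
  have hDsq : Real.sqrt D * Real.sqrt D = D := Real.mul_self_sqrt hD0.le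
  have hexp1 := Real.exp_one_lt_d9
  have hL2 : 2 ≤ Lg := by
    rw [hLg, Real.le_log_iff_exp_le hD0]
    have h2 : Real.exp 2 = Real.exp 1 * Real.exp 1 := by
      rw [← Real.exp_add]; norm_num
    have := Real.exp_pos 1
    norm_num at hD6 ⊢
    nlinarith
  have hL0 : (0:ℝ) < Lg := by linarith
  have hLle : Lg ≤ 2 * Real.sqrt D := by
    have h1 : Real.log (Real.sqrt D) ≤ Real.sqrt D - 1 := Real.log_le_sub_one_of_pos hsqD0
    have h2 : Real.log (Real.sqrt D) = Lg / 2 := by rw [hLg, Real.log_sqrt hD0.le]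
    linarith
  set ε : ℝ := Real.sqrt (6*Lg) / (2 * Real.sqrt D) with hε
  have h6L0 : (0:ℝ) < 6 * Lg := by linarith
  have hsq6L : (0:ℝ) < Real.sqrt (6*Lg) := Real.sqrt_pos.2 h6L0
  have hε0 : 0 < ε := by rw [hε]; positivity
  have hε006 : ε ≤ 0.06 := by
    have h1 : 6*Lg ≤ 0.0144 * D := by nlinarith [hLle, hsqD, hDsq]
    have h2 : Real.sqrt (6*Lg) ≤ Real.sqrt (0.0144 * D) := Real.sqrt_le_sqrt h1
    have h3 : Real.sqrt (0.0144 * D) = 0.12 * Real.sqrt D := by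
      rw [show (0.0144:ℝ) = 0.12^2 by norm_num, Real.sqrt_mul (by positivity) D,
        Real.sqrt_sq (by norm_num)]
    rw [hε, div_le_iff₀ (by positivity)]
    rw [h3] at h2
    linarith
  have hε2 : ε^2 = 6*Lg/(4*D) := by
    rw [hε, div_pow, Real.sq_sqrt h6L0.le, mul_pow, Real.sq_sqrt hD0.le]
    norm_num
  have h2ε : 2*ε = Real.sqrt (6*Lg) / Real.sqrt D := by
    rw [hε]
    field_simp
  -- every closed neighbourhood is large
  have hdegD : ∀ v : V, D ≤ ((insert v (G.neighborFinset v)).card : ℝ) := by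
    intro v
    have h1 : (insert v (G.neighborFinset v)).card = G.degree v + 1 := by
      rw [Finset.card_insert_of_notMem (SimpleGraph.notMem_neighborFinset_self G v)]
      rfl
    have h2 : δ ≤ G.degree v := hδdef ▸ G.minDegree_le_degree v
    have h2R : (δ:ℝ) ≤ (G.degree v : ℝ) := by exact_mod_cast h2
    rw [h1, hD]
    push_cast
    linarith
  have hdeg1 : ∀ v : V, 1 ≤ G.degree v := by
    intro v
    have h2 : δ ≤ G.degree v := hδdef ▸ G.minDegree_le_degree v
    omega
  -- numeric per-vertex bound
  have hcostv : ∀ v : V,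
      2 * Real.exp (-(4/3)*ε^2*((insert v (G.neighborFinset v)).card : ℝ)) / ε
        ≤ 1.21 / Real.sqrt D := by
    intro v
    have hm := hdegD v
    have hkey : (4/3)*ε^2*D = 2*Lg := by
      rw [hε2]
      field_simp
      ring
    have he1 : -(4/3)*ε^2*((insert v (G.neighborFinset v)).card : ℝ) ≤ -(2*Lg) := by
      nlinarith [sq_nonneg ε, hm, hkey, hε0]
    have he2 : Real.exp (-(4/3)*ε^2*((insert v (G.neighborFinset v)).card : ℝ))
        ≤ Real.exp (-(2*Lg)) := Real.exp_le_exp.2 he1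
    have hexpD : Real.exp Lg = D := Real.exp_log hD0
    have key1 : Real.exp (-(2*Lg)) * D = Real.exp (-Lg) := by
      rw [← hexpD, ← Real.exp_add]
      congr 1; ring
    have key2 : Real.exp (-Lg) ≤ 1/7 := by
      have hg9 := Real.exp_one_gt_d9
      have h7 : (7:ℝ) ≤ Real.exp 2 := by
        have h2 : Real.exp 2 = Real.exp 1 * Real.exp 1 := by rw [← Real.exp_add]; norm_num
        nlinarith
      have hmono : Real.exp (-Lg) ≤ Real.exp (-2) := Real.exp_le_exp.2 (by linarith)
      have hinv : Real.exp (-2) * Real.exp 2 = 1 := by rw [← Real.exp_add]; norm_num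
      nlinarith [Real.exp_pos (-2)]
    have key3 : (3.4:ℝ) ≤ Real.sqrt (6*Lg) := by
      rw [show (3.4:ℝ) = Real.sqrt (3.4^2) from (Real.sqrt_sq (by norm_num)).symm]
      apply Real.sqrt_le_sqrt
      norm_num
      linarith
    have key4 : ε * (2 * Real.sqrt D) = Real.sqrt (6*Lg) := by
      rw [hε, div_mul_cancel₀]
      positivity
    rw [div_le_div_iff₀ hε0 hsqD0]
    have hexp2pos := Real.exp_pos (-(2*Lg))
    nlinarith [key1, key2, key3, key4, hDsq, hsqD0, hsqD, he2,
      Real.exp_pos (-(4/3)*ε^2*((insert v (G.neighborFinset v)).card : ℝ))]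
  -- expectation of the signed sum of a single vertex
  have hE1 : ∀ v : V, ∑ ω : V → Bool, SDw ε ω * ((SDsg (ω v) : ℤ) : ℝ) = 2*ε := by
    intro v
    have h := SD_expect_prod ε {v} (fun b => ((SDsg b : ℤ) : ℝ))
    simp only [Finset.prod_singleton, Finset.card_singleton, pow_one] at h
    rw [h]
    show (1/2+ε) * ((1:ℤ):ℝ) + (1/2-ε) * ((-1:ℤ):ℝ) = 2*ε
    push_cast
    ring
  -- expected total
  set SZ : V → (V → Bool) → ℤ := fun v ω => ∑ u ∈ insert v (G.neighborFinset v), SDsg (ω u)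
    with hSZ
  set X : (V → Bool) → ℝ := fun ω => (∑ v, ((SDsg (ω v) : ℤ) : ℝ))
      + ∑ v, (if SZ v ω ≤ 0 then ((2 - SZ v ω : ℤ) : ℝ) else 0) with hX
  have hEbound : ∑ ω : V → Bool, SDw ε ω * X ω
      ≤ (Fintype.card V : ℝ) * (2*ε) + (Fintype.card V : ℝ) * (1.21 / Real.sqrt D) := by
    have hsplit : ∑ ω : V → Bool, SDw ε ω * X ω
        = (∑ v : V, ∑ ω : V → Bool, SDw ε ω * ((SDsg (ω v) : ℤ) : ℝ))
          + ∑ v : V, ∑ ω : V → Bool, SDw ε ω * (if SZ v ω ≤ 0 then ((2 - SZ v ω : ℤ) : ℝ) else 0) := by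
      simp only [hX, mul_add, Finset.mul_sum]
      rw [Finset.sum_add_distrib]
      congr 1
      · exact Finset.sum_comm
      · exact Finset.sum_comm
    rw [hsplit]
    have hfirst : (∑ v : V, ∑ ω : V → Bool, SDw ε ω * ((SDsg (ω v) : ℤ) : ℝ))
        = (Fintype.card V : ℝ) * (2*ε) := by
      rw [Finset.sum_congr rfl (fun v _ => hE1 v), Finset.sum_const, Finset.card_univ,
        nsmul_eq_mul]
    have hsecond : ∑ v : V, ∑ ω : V → Bool, SDw ε ω * (if SZ v ω ≤ 0 then ((2 - SZ v ω : ℤ) : ℝ) else 0)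
        ≤ (Fintype.card V : ℝ) * (1.21 / Real.sqrt D) := by
      calc ∑ v : V, ∑ ω : V → Bool, SDw ε ω * (if SZ v ω ≤ 0 then ((2 - SZ v ω : ℤ) : ℝ) else 0)
          ≤ ∑ _v : V, 1.21 / Real.sqrt D := by
            refine Finset.sum_le_sum fun v _ => ?_
            exact (SD_cost_exp hε0 hε006 (insert v (G.neighborFinset v))).trans (hcostv v)
        _ = (Fintype.card V : ℝ) * (1.21 / Real.sqrt D) := by
            rw [Finset.sum_const, Finset.card_univ, nsmul_eq_mul]
    linarith
  -- choose a good sample point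
  have havg : ∃ ω₀ : V → Bool, X ω₀ ≤ ∑ ω : V → Bool, SDw ε ω * X ω := by
    set E : ℝ := ∑ ω : V → Bool, SDw ε ω * X ω with hE
    have hsum : ∑ ω : V → Bool, SDw ε ω * X ω ≤ ∑ ω : V → Bool, SDw ε ω * E := by
      rw [← Finset.sum_mul, SDw_sum_one, one_mul]
    obtain ⟨ω₀, _, hω₀⟩ := Finset.exists_le_of_sum_le Finset.univ_nonempty hsum
    refine ⟨ω₀, ?_⟩
    have hw := SDw_pos hε0.le hε006 ω₀
    exact le_of_mul_le_mul_left hω₀ hw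
  obtain ⟨ω₀, hω₀⟩ := havg
  -- build the signed domination function
  obtain ⟨g, hgSDF, hgsum⟩ := SD_exists_good G hdeg1 (fun u => SDsg (ω₀ u))
    (fun u => by rcases Bool.dichotomy (ω₀ u) with h | h <;> simp [SDsg, h])
  have hgsum' : ∑ v, g v ≤ (∑ v, SDsg (ω₀ v))
      + ∑ v : V, (if SZ v ω₀ ≤ 0 then 2 - SZ v ω₀ else 0) := hgsum
  have hXω₀ : ((∑ v, SDsg (ω₀ v)) + ∑ v : V, (if SZ v ω₀ ≤ 0 then 2 - SZ v ω₀ else 0) : ℝ)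
      = X ω₀ := by
    rw [hX]
    push_cast [apply_ite (fun z : ℤ => (z:ℝ))]
    ring
  -- signedDominationNumber is at most ∑ g
  have hbdd : BddBelow {s : ℤ | ∃ f : V → ℤ, G.IsSignedDominationFunction f ∧ s = ∑ v, f v} := by
    refine ⟨-(Fintype.card V : ℤ), fun s hs => ?_⟩
    obtain ⟨f, hf, rfl⟩ := hs
    calc -(Fintype.card V : ℤ) = ∑ _v : V, (-1 : ℤ) := by
          rw [Finset.sum_const, Finset.card_univ, nsmul_eq_mul]; ring
      _ ≤ ∑ v, f v := Finset.sum_le_sum fun v _ => by rcases hf.1 v with h | h <;> omega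
  have hmem : (∑ v, g v) ∈ {s : ℤ | ∃ f : V → ℤ, G.IsSignedDominationFunction f ∧ s = ∑ v, f v} :=
    ⟨g, hgSDF, rfl⟩
  have hγ : G.signedDominationNumber ≤ ∑ v, g v := csInf_le hbdd hmem
  have hγR : (G.signedDominationNumber : ℝ) ≤ ((∑ v, g v : ℤ) : ℝ) := by exact_mod_cast hγ
  have hchain : ((∑ v, g v : ℤ) : ℝ) ≤ X ω₀ := by
    rw [← hXω₀]
    exact_mod_cast hgsum'
  -- final computation
  have hRHS : (Fintype.card V : ℝ) * (2*ε) + (Fintype.card V : ℝ) * (1.21 / Real.sqrt D)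
      = ((Real.sqrt (6 * Lg) + 1.21) / Real.sqrt D) * (Fintype.card V : ℝ) := by
    rw [h2ε, add_div]
    ring
  calc (G.signedDominationNumber : ℝ) ≤ X ω₀ := hγR.trans hchain
    _ ≤ ∑ ω : V → Bool, SDw ε ω * X ω := hω₀
    _ ≤ (Fintype.card V : ℝ) * (2*ε) + (Fintype.card V : ℝ) * (1.21 / Real.sqrt D) := hEbound
    _ = ((Real.sqrt (6 * Lg) + 1.21) / Real.sqrt D) * (Fintype.card V : ℝ) := hRHS
end

section
/- Let G be a finite simple graph with n vertices and minimum degree δ ≥ 24000. Then the signed domination number of G satisfies γ_s(G) ≤ ((√(6.8 ln(δ+1)) + 0.32) / √(δ+1)) · n. -/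
open Finset Real

section BernoulliWeight

variable {V : Type*} [Fintype V]

def bernoulliWeight (p : ℝ) (ω : V → Bool) : ℝ := ∏ v, if ω v then p else 1 - p

lemma bernoulliWeight_nonneg {p : ℝ} (hp₀ : 0 ≤ p) (hp₁ : p ≤ 1) (ω : V → Bool) :
    0 ≤ bernoulliWeight p ω :=
  prod_nonneg fun v _ => by split <;> linarith

variable [DecidableEq V]

lemma sum_bernoulliWeight_mul_prod (p : ℝ) (S : Finset V) (h : Bool → ℝ) :
    ∑ ω, bernoulliWeight p ω * ∏ v ∈ S, h (ω v) = (p * h true + (1 - p) * h false) ^ #S := by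
  have hterm : ∀ ω : V → Bool, bernoulliWeight p ω * ∏ v ∈ S, h (ω v) =
      ∏ v, (if ω v then p else 1 - p) * (if v ∈ S then h (ω v) else 1) := by
    intro ω
    rw [prod_mul_distrib, prod_ite_mem, univ_inter, bernoulliWeight]
  have hfactor : ∀ v, ∑ b : Bool, (if b then p else 1 - p) * (if v ∈ S then h b else 1) =
      if v ∈ S then p * h true + (1 - p) * h false else 1 := by
    intro v
    simp only [Fintype.sum_bool, if_true, Bool.false_eq_true, if_false]
    split_ifs <;> ring
  rw [sum_congr rfl fun ω _ => hterm ω, ← Fintype.prod_sum (κ := fun _ => Bool)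
      fun v b => (if b then p else 1 - p) * (if v ∈ S then h b else 1),
    Fintype.prod_congr _ _ hfactor, prod_ite_mem, univ_inter, prod_const]

lemma sum_bernoulliWeight (p : ℝ) : ∑ ω : V → Bool, bernoulliWeight p ω = 1 := by
  simpa using sum_bernoulliWeight_mul_prod p (∅ : Finset V) fun _ => 1

lemma sum_bernoulliWeight_mul_sign (p : ℝ) (v : V) :
    ∑ ω, bernoulliWeight p ω * (if ω v then -1 else 1) = 1 - 2 * p := by
  have := sum_bernoulliWeight_mul_prod p {v} fun b => if b then -1 else 1
  simp only [prod_singleton, card_singleton, pow_one] at this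
  simp only [this, ite_true, Bool.false_eq_true, ite_false]
  ring

lemma sum_bernoulliWeight_mul_pow (p r : ℝ) (S : Finset V) :
    ∑ ω, bernoulliWeight p ω * r ^ #{v ∈ S | ω v} = (p * r + 1 - p) ^ #S := by
  have := sum_bernoulliWeight_mul_prod p S fun b => if b then r else 1
  simp only [prod_ite, prod_const, one_pow, mul_one] at this
  simp only [this, ite_true, Bool.false_eq_true, ite_false]
  ring

lemma sum_bernoulliWeight_filter_le_exp {ε : ℝ} (hε₀ : 0 ≤ ε) (hε : ε < 1 / 2) (S : Finset V) :
    ∑ ω with #S ≤ 2 * #{v ∈ S | ω v}, bernoulliWeight (1 / 2 - ε) ω ≤ exp (-(2 * ε ^ 2 * #S)) := by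
  set p := 1 / 2 - ε with hp
  have hp₀ : 0 < p := by linarith
  have hq : 0 < 1 - p := by linarith
  set r := (1 - p) / p
  have hr : 1 ≤ r := (one_le_div hp₀).2 (by linarith)
  have hpr : p * r = 1 - p := mul_div_cancel₀ _ hp₀.ne'
  have hw : ∀ ω : V → Bool, 0 ≤ bernoulliWeight p ω := bernoulliWeight_nonneg hp₀.le (by linarith)
  -- Markov's inequality for `r ^ X`, which is at least `√(r ^ #S)` on the event `#S ≤ 2 X`
  have markov : (∑ ω with #S ≤ 2 * #{v ∈ S | ω v}, bernoulliWeight p ω) * √(r ^ #S) ≤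
      (2 * (1 - p)) ^ #S := by
    calc _ = ∑ ω with #S ≤ 2 * #{v ∈ S | ω v}, bernoulliWeight p ω * √(r ^ #S) := sum_mul ..
      _ ≤ ∑ ω with #S ≤ 2 * #{v ∈ S | ω v}, bernoulliWeight p ω * r ^ #{v ∈ S | ω v} := by
          refine sum_le_sum fun ω hω => mul_le_mul_of_nonneg_left ?_ (hw ω)
          rw [sqrt_le_left (by positivity), ← pow_mul]
          exact pow_le_pow_right₀ hr (by have := (mem_filter.1 hω).2; omega)
      _ ≤ ∑ ω, bernoulliWeight p ω * r ^ #{v ∈ S | ω v} :=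
          sum_le_sum_of_subset_of_nonneg (filter_subset _ _) fun ω _ _ =>
            mul_nonneg (hw ω) (by positivity)
      _ = (2 * (1 - p)) ^ #S := by
          rw [sum_bernoulliWeight_mul_pow, hpr]
          ring_nf
  have hsplit : (2 * (1 - p)) ^ #S = √((4 * p * (1 - p)) ^ #S) * √(r ^ #S) := by
    have hsq : 4 * p * (1 - p) * r = (2 * (1 - p)) ^ 2 := by
      linear_combination 4 * (1 - p) * hpr
    rw [← sqrt_mul (by positivity), ← mul_pow, hsq, ← pow_mul, pow_mul', sqrt_sq (by positivity)]
  have hP : ∑ ω with #S ≤ 2 * #{v ∈ S | ω v}, bernoulliWeight p ω ≤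
      √((4 * p * (1 - p)) ^ #S) :=
    le_of_mul_le_mul_right (markov.trans_eq hsplit) (sqrt_pos.2 (by positivity))
  refine hP.trans ((sqrt_le_left (exp_pos _).le).2 ?_)
  calc (4 * p * (1 - p)) ^ #S ≤ exp (-(4 * ε ^ 2)) ^ #S := by
        refine pow_le_pow_left₀ (by positivity) ?_ _
        have h4pq : 4 * p * (1 - p) = 1 - 4 * ε ^ 2 := by rw [hp]; ring
        linarith [add_one_le_exp (-(4 * ε ^ 2))]
    _ = exp (-(2 * ε ^ 2 * #S)) ^ 2 := by
        rw [← exp_nat_mul, ← exp_nat_mul]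
        ring_nf

lemma exists_le_sum_bernoulliWeight_mul {p : ℝ} (hp₀ : 0 ≤ p) (hp₁ : p ≤ 1)
    (T : (V → Bool) → ℝ) : ∃ ω, T ω ≤ ∑ ω', bernoulliWeight p ω' * T ω' := by
  obtain ⟨ω, hω⟩ := Finite.exists_min T
  refine ⟨ω, ?_⟩
  calc T ω = ∑ ω', bernoulliWeight p ω' * T ω := by rw [← sum_mul, sum_bernoulliWeight, one_mul]
    _ ≤ ∑ ω', bernoulliWeight p ω' * T ω' :=
        sum_le_sum fun ω' _ => mul_le_mul_of_nonneg_left (hω ω') (bernoulliWeight_nonneg hp₀ hp₁ ω')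

end BernoulliWeight

lemma sum_ite_neg_one_one_eq_card_sub {α : Type*} (s : Finset α) (ω : α → Bool) :
    ∑ u ∈ s, (if ω u then -1 else 1 : ℤ) = #s - 2 * #{u ∈ s | ω u} := by
  rw [sum_ite, sum_const, sum_const, ← card_filter_add_card_filter_not (s := s) (fun u => ω u)]
  push_cast
  ring

lemma mul_exp_neg_mul_le {c : ℝ} (hc : 0 < c) (x : ℝ) : x * exp (-(c * x)) ≤ (c * exp 1)⁻¹ := by
  have h : c * x * exp (-(c * x)) ≤ exp (-1) :=
    calc c * x * exp (-(c * x)) ≤ exp (c * x - 1) * exp (-(c * x)) :=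
          mul_le_mul_of_nonneg_right (by linarith [add_one_le_exp (c * x - 1)]) (exp_pos _).le
      _ = exp (-1) := by rw [← exp_add]; ring_nf
  calc x * exp (-(c * x)) = c⁻¹ * (c * x * exp (-(c * x))) := by field_simp
    _ ≤ c⁻¹ * exp (-1) := by gcongr
    _ = (c * exp 1)⁻¹ := by rw [exp_neg, mul_inv]

lemma two_le_log_of_eight_le {D : ℝ} (hD : 8 ≤ D) : 2 ≤ log D := by
  rw [le_log_iff_exp_le (by linarith), show (2 : ℝ) = 1 + 1 by norm_num, exp_add]
  nlinarith [exp_one_lt_d9, exp_pos 1]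

lemma mul_log_lt_self {D : ℝ} (hD : 185 ≤ D) : 6.8 * log D < D := by
  have hlog : log D < 2 * √D := by
    have := log_le_sub_one_of_pos (sqrt_pos.2 (by linarith : 0 < D))
    rw [log_sqrt (by linarith)] at this
    linarith
  have hsqrt : 13.6 ≤ √D := (le_sqrt (by norm_num) (by linarith)).2 (by linarith)
  nlinarith [mul_self_sqrt (by linarith : (0 : ℝ) ≤ D)]

namespace SignedDomination

noncomputable def deviation (D : ℝ) : ℝ := √(1.7 * log D / D)

lemma sq_deviation {D : ℝ} (hD : 1 ≤ D) : deviation D ^ 2 = 1.7 * log D / D :=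
  sq_sqrt (div_nonneg (mul_nonneg (by norm_num) (log_nonneg hD)) (by linarith))

lemma two_mul_deviation {D : ℝ} (hD : 0 ≤ D) : 2 * deviation D = √(6.8 * log D) / √D := by
  rw [deviation, ← sqrt_div' _ hD, show 6.8 * log D / D = 2 ^ 2 * (1.7 * log D / D) by ring,
    sqrt_mul (by norm_num), sqrt_sq (by norm_num)]

lemma deviation_lt_half {D : ℝ} (hD : 185 ≤ D) : deviation D < 1 / 2 := by
  have h := sqrt_lt_sqrt (mul_nonneg (by norm_num) (log_nonneg (by linarith))) (mul_log_lt_self hD)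
  have h2 := two_mul_deviation (D := D) (by linarith)
  rw [eq_div_iff (by positivity)] at h2
  nlinarith [sqrt_pos.2 (by linarith : 0 < D)]

lemma two_mul_mul_exp_neg_le_div_sqrt {D M : ℝ} (hD : 8 ≤ D) (hDM : D ≤ M) :
    2 * M * exp (-(2 * deviation D ^ 2 * M)) ≤ 0.32 / √D := by
  have hε := sq_deviation (by linarith : 1 ≤ D)
  have hL : 2 ≤ log D := two_le_log_of_eight_le hD
  set L := log D
  set ε := deviation D
  have hc : 0 < ε ^ 2 := by rw [hε]; positivity
  have hexpL : exp L = D := exp_log (by linarith)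
  -- one factor `exp (-ε² M)` is spent on `M`, the other is at most `exp (-ε² D) = D ^ (-1.7)`
  calc 2 * M * exp (-(2 * ε ^ 2 * M))
      = 2 * (M * exp (-(ε ^ 2 * M))) * exp (-(ε ^ 2 * M)) := by
        rw [mul_assoc 2 (M * _), mul_assoc M, ← exp_add]
        ring_nf
    _ ≤ 2 * (ε ^ 2 * exp 1)⁻¹ * exp (-(ε ^ 2 * D)) := by
        gcongr
        exact mul_exp_neg_mul_le hc M
    _ = 2 / (1.7 * L * exp 1) * exp (-(0.7 * L)) := by
        rw [hε, div_mul_cancel₀ _ (by linarith), show -(0.7 * L) = L + -(1.7 * L) by ring, exp_add,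
          hexpL]
        field_simp
    _ ≤ 0.32 * exp (-(L / 2)) := by
        gcongr
        · rw [div_le_iff₀ (by positivity)]
          nlinarith [exp_one_gt_d9]
        · linarith
    _ = 0.32 / √D := by rw [exp_neg, exp_half, hexpL, div_eq_mul_inv]

end SignedDomination

namespace SimpleGraph

variable {V : Type*} [Fintype V] [DecidableEq V] (G : SimpleGraph V) [DecidableRel G.Adj]

def closedNeighborFinset (v : V) : Finset V := insert v (G.neighborFinset v)

lemma mem_closedNeighborFinset_self (v : V) : v ∈ G.closedNeighborFinset v := mem_insert_self _ _

lemma card_closedNeighborFinset (v : V) : #(G.closedNeighborFinset v) = G.degree v + 1 :=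
  card_insert_of_notMem (notMem_neighborFinset_self G v)

def badVertices (ω : V → Bool) : Finset V :=
  {v | #(G.closedNeighborFinset v) ≤ 2 * #{u ∈ G.closedNeighborFinset v | ω u}}

def repair (ω : V → Bool) (u : V) : ℤ :=
  if ω u ∧ u ∉ (G.badVertices ω).biUnion G.closedNeighborFinset then -1 else 1

lemma isSignedDominationFunction_repair (ω : V → Bool) :
    G.IsSignedDominationFunction (G.repair ω) := by
  refine ⟨fun u => by unfold repair; split <;> simp, fun v => ?_⟩
  change 1 ≤ ∑ u ∈ G.closedNeighborFinset v, G.repair ω u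
  by_cases hv : v ∈ G.badVertices ω
  · have hone : ∀ u ∈ G.closedNeighborFinset v, G.repair ω u = 1 := fun u hu =>
      if_neg fun h => h.2 (mem_biUnion.2 ⟨v, hv, hu⟩)
    rw [sum_congr rfl hone, sum_const, nsmul_one, Nat.one_le_cast]
    exact card_pos.2 ⟨v, G.mem_closedNeighborFinset_self v⟩
  · have hsign : ∀ u, (if ω u then -1 else 1 : ℤ) ≤ G.repair ω u := by
      intro u; unfold repair; split_ifs <;> simp_all
    have hmaj : 2 * #{u ∈ G.closedNeighborFinset v | ω u} < #(G.closedNeighborFinset v) := by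
      simpa [badVertices] using hv
    calc (1 : ℤ) ≤ #(G.closedNeighborFinset v) - 2 * #{u ∈ G.closedNeighborFinset v | ω u} := by
          omega
      _ = ∑ u ∈ G.closedNeighborFinset v, (if ω u then -1 else 1 : ℤ) :=
          (sum_ite_neg_one_one_eq_card_sub _ ω).symm
      _ ≤ ∑ u ∈ G.closedNeighborFinset v, G.repair ω u := sum_le_sum fun u _ => hsign u

lemma signedDominationNumber_le_sum {f : V → ℤ} (hf : G.IsSignedDominationFunction f) :
    G.signedDominationNumber ≤ ∑ v, f v := by
  refine csInf_le ⟨-Fintype.card V, ?_⟩ ⟨f, hf, rfl⟩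
  rintro _ ⟨g, hg, rfl⟩
  calc -(Fintype.card V : ℤ) = ∑ _v : V, (-1 : ℤ) := by simp
    _ ≤ ∑ v, g v := sum_le_sum fun v _ => by rcases hg.1 v with h | h <;> omega

def repairCost (ω : V → Bool) : ℝ :=
  ∑ v, (if ω v then -1 else 1) +
    ∑ v ∈ G.badVertices ω, 2 * (#{u ∈ G.closedNeighborFinset v | ω u} : ℝ)

lemma sum_repair_le_repairCost (ω : V → Bool) : (∑ u, G.repair ω u : ℝ) ≤ G.repairCost ω := by
  set R := (G.badVertices ω).biUnion G.closedNeighborFinset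
  have hsplit : ∀ u, G.repair ω u = (if ω u then -1 else 1) + if ω u ∧ u ∈ R then 2 else 0 := by
    intro u
    unfold repair
    by_cases hu : ω u <;> by_cases hR : u ∈ R <;> simp [hu, hR, R]
  have hflipped : #{u | ω u ∧ u ∈ R} ≤
      ∑ v ∈ G.badVertices ω, #{u ∈ G.closedNeighborFinset v | ω u} := by
    refine (card_le_card fun u hu => ?_).trans card_biUnion_le
    simp only [mem_filter, mem_univ, true_and, R, mem_biUnion] at hu ⊢
    obtain ⟨hωu, v, hv, huv⟩ := hu
    exact ⟨v, hv, huv, hωu⟩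
  have hZ : ∑ u, G.repair ω u ≤ ∑ u, (if ω u then -1 else 1 : ℤ) +
      ∑ v ∈ G.badVertices ω, 2 * (#{u ∈ G.closedNeighborFinset v | ω u} : ℤ) := by
    rw [sum_congr rfl fun u _ => hsplit u, sum_add_distrib, ← sum_filter, sum_const, ← mul_sum,
      nsmul_eq_mul, mul_comm]
    gcongr
    exact_mod_cast hflipped
  unfold repairCost
  exact_mod_cast hZ

lemma sum_bernoulliWeight_mul_ite_badVertices_le {ε : ℝ} (hε₀ : 0 ≤ ε) (hε : ε < 1 / 2) (v : V) :
    ∑ ω, bernoulliWeight (1 / 2 - ε) ω *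
        (if v ∈ G.badVertices ω then 2 * (#{u ∈ G.closedNeighborFinset v | ω u} : ℝ) else 0) ≤
      2 * (G.degree v + 1) * exp (-(2 * ε ^ 2 * (G.degree v + 1))) := by
  have hw := bernoulliWeight_nonneg (V := V) (p := 1 / 2 - ε) (by linarith) (by linarith)
  have hX : ∀ ω : V → Bool, (#{u ∈ G.closedNeighborFinset v | ω u} : ℝ) ≤ G.degree v + 1 :=
    fun ω => by exact_mod_cast (card_filter_le _ _).trans (G.card_closedNeighborFinset v).le
  have hChernoff := sum_bernoulliWeight_filter_le_exp hε₀ hε (G.closedNeighborFinset v)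
  calc ∑ ω, bernoulliWeight (1 / 2 - ε) ω *
        (if v ∈ G.badVertices ω then 2 * (#{u ∈ G.closedNeighborFinset v | ω u} : ℝ) else 0)
      = ∑ ω with v ∈ G.badVertices ω,
          bernoulliWeight (1 / 2 - ε) ω * (2 * #{u ∈ G.closedNeighborFinset v | ω u}) := by
        simp only [mul_ite, mul_zero, sum_ite, sum_const_zero, add_zero]
    _ ≤ ∑ ω with v ∈ G.badVertices ω, bernoulliWeight (1 / 2 - ε) ω * (2 * (G.degree v + 1)) :=
        sum_le_sum fun ω _ => mul_le_mul_of_nonneg_left (by linarith [hX ω]) (hw ω)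
    _ = (∑ ω with v ∈ G.badVertices ω, bernoulliWeight (1 / 2 - ε) ω) * (2 * (G.degree v + 1)) :=
        (sum_mul ..).symm
    _ ≤ exp (-(2 * ε ^ 2 * (G.degree v + 1))) * (2 * (G.degree v + 1)) := by
        gcongr
        simpa only [badVertices, mem_filter, mem_univ, true_and, card_closedNeighborFinset,
          Nat.cast_succ] using hChernoff
    _ = _ := mul_comm ..

lemma sum_bernoulliWeight_mul_repairCost_le {ε : ℝ} (hε₀ : 0 ≤ ε) (hε : ε < 1 / 2) :
    ∑ ω, bernoulliWeight (1 / 2 - ε) ω * G.repairCost ω ≤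
      ∑ v, (2 * ε + 2 * (G.degree v + 1) * exp (-(2 * ε ^ 2 * (G.degree v + 1)))) := by
  have hcost : ∀ ω : V → Bool, G.repairCost ω = ∑ v, ((if ω v then -1 else 1) +
      if v ∈ G.badVertices ω then 2 * (#{u ∈ G.closedNeighborFinset v | ω u} : ℝ) else 0) := by
    intro ω
    rw [repairCost, sum_add_distrib, sum_ite_mem, univ_inter]
  calc ∑ ω, bernoulliWeight (1 / 2 - ε) ω * G.repairCost ω
      = ∑ v, (∑ ω, bernoulliWeight (1 / 2 - ε) ω * (if ω v then -1 else 1) +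
          ∑ ω, bernoulliWeight (1 / 2 - ε) ω * (if v ∈ G.badVertices ω then
            2 * (#{u ∈ G.closedNeighborFinset v | ω u} : ℝ) else 0)) := by
        simp only [hcost, mul_sum, mul_add, sum_add_distrib]
        congr 1 <;> exact sum_comm
    _ ≤ _ := sum_le_sum fun v _ => by
        rw [sum_bernoulliWeight_mul_sign, show 1 - 2 * (1 / 2 - ε) = 2 * ε by ring]
        gcongr
        exact G.sum_bernoulliWeight_mul_ite_badVertices_le hε₀ hε v

end SimpleGraph

open SignedDomination

theorem signed_domination_upper_bound_delta_ge_24000_general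
    {V : Type*} [Fintype V] [DecidableEq V]
    (G : SimpleGraph V) [DecidableRel G.Adj]
    (δ : ℕ) (hδdef : δ = G.minDegree) (hδ : 24000 ≤ δ) :
    (G.signedDominationNumber : ℝ) ≤
      ((Real.sqrt (6.8 * Real.log ((δ : ℝ) + 1)) + 0.32) / Real.sqrt ((δ : ℝ) + 1)) *
        (Fintype.card V : ℝ) := by
  set D : ℝ := δ + 1
  have hD : 24001 ≤ D := by
    simp only [D]
    exact_mod_cast Nat.succ_le_succ hδ
  have hD_le : ∀ v, D ≤ G.degree v + 1 := fun v => by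
    simp only [D]
    exact_mod_cast Nat.succ_le_succ (hδdef ▸ G.minDegree_le_degree v)
  have hε₀ : 0 ≤ deviation D := sqrt_nonneg _
  have hε : deviation D < 1 / 2 := deviation_lt_half (by linarith)
  obtain ⟨ω, hω⟩ := exists_le_sum_bernoulliWeight_mul (p := 1 / 2 - deviation D) (by linarith)
    (by linarith) G.repairCost
  calc (G.signedDominationNumber : ℝ) ≤ ∑ u, (G.repair ω u : ℝ) := by
        exact_mod_cast G.signedDominationNumber_le_sum (G.isSignedDominationFunction_repair ω)
    _ ≤ G.repairCost ω := G.sum_repair_le_repairCost ω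
    _ ≤ ∑ ω', bernoulliWeight (1 / 2 - deviation D) ω' * G.repairCost ω' := hω
    _ ≤ _ := G.sum_bernoulliWeight_mul_repairCost_le hε₀ hε
    _ ≤ ∑ _v : V, (2 * deviation D + 0.32 / √D) := by
        gcongr with v
        exact two_mul_mul_exp_neg_le_div_sqrt (by linarith) (hD_le v)
    _ = _ := by
        rw [sum_const, card_univ, nsmul_eq_mul, two_mul_deviation (by linarith)]
        ring

theorem signed_domination_upper_bound_delta_ge_24000
    {V : Type*} [Fintype V] [DecidableEq V] [Nonempty V]
    (G : SimpleGraph V) [DecidableRel G.Adj]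
    (δ : ℕ) (hδdef : δ = G.minDegree) (hδ : 24000 ≤ δ) :
    (G.signedDominationNumber : ℝ) ≤
      ((Real.sqrt (6.8 * Real.log ((δ : ℝ) + 1)) + 0.32) / Real.sqrt ((δ : ℝ) + 1)) *
        (Fintype.card V : ℝ) :=
  signed_domination_upper_bound_delta_ge_24000_general G δ hδdef hδ
end

section
/- Let G be a finite simple graph with n vertices and minimum degree δ satisfying 230 ≤ δ ≤ 1000. Then the signed domination number of G satisfies γ_s(G) ≤ ((√(ln(δ+1)·(18.16 − 1.4 ln δ)) + 0.25) / √(δ+1)) · n. -/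
open Finset

section Aux
set_option linter.unusedSectionVars false
variable {V : Type*} [Fintype V] [DecidableEq V]

lemma sdAux_exp_prod (g : V → Bool → ℝ) :
    ∑ σ : V → Bool, ∏ v, g v (σ v) = ∏ v, (g v true + g v false) := by
  classical
  have h := Finset.prod_univ_sum (κ := fun _ : V => Bool)
      (t := fun _ : V => (Finset.univ : Finset Bool)) (f := fun v b => g v b)
  rw [Fintype.piFinset_univ] at h
  simp only [Fintype.sum_bool] at h
  exact h.symm

variable (G : SimpleGraph V) [DecidableRel G.Adj]

/-- closed neighbourhood -/
def sdCN (v : V) : Finset V := insert v (G.neighborFinset v)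

lemma sdCN_card (u : V) : (sdCN G u).card = G.degree u + 1 := by
  rw [sdCN, card_insert_of_notMem (by simp), SimpleGraph.card_neighborFinset_eq_degree]

lemma sdCN_symm {u v : V} : v ∈ sdCN G u ↔ u ∈ sdCN G v := by
  simp only [sdCN, mem_insert, SimpleGraph.mem_neighborFinset]
  rw [G.adj_comm, eq_comm]

def sdWgt (p q : ℝ) (σ : V → Bool) : ℝ := ∏ v, (if σ v then p else q)

def sdB (σ : V → Bool) : Finset V := Finset.univ.filter (fun v => σ v = true)

lemma sdWgt_nonneg {p q : ℝ} (hp : 0 ≤ p) (hq : 0 ≤ q) (σ : V → Bool) :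
    0 ≤ sdWgt p q σ :=
  Finset.prod_nonneg fun v _ => by split <;> assumption

lemma sdExp_factor {p q : ℝ} (hpq : p + q = 1) (A : Finset V) (h : V → Bool → ℝ) :
    ∑ σ : V → Bool, sdWgt p q σ * ∏ v ∈ A, h v (σ v)
      = ∏ v ∈ A, (p * h v true + q * h v false) := by
  classical
  have key : ∀ σ : V → Bool, sdWgt p q σ * ∏ v ∈ A, h v (σ v)
      = ∏ v, ((if σ v then p else q) * (if v ∈ A then h v (σ v) else 1)) := by
    intro σ
    rw [Finset.prod_mul_distrib, sdWgt]
    congr 1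
    rw [Finset.prod_ite_mem, Finset.univ_inter]
  simp only [key]
  rw [sdAux_exp_prod (g := fun v b => (if b then p else q) * (if v ∈ A then h v b else 1))]
  refine (Finset.prod_congr rfl fun v _ => ?_).trans
    (by rw [Finset.prod_ite_mem, Finset.univ_inter])
  by_cases hv : v ∈ A <;> simp [hv] <;> linarith

lemma sdSum_wgt {p q : ℝ} (hpq : p + q = 1) :
    ∑ σ : V → Bool, sdWgt p q σ = 1 := by
  have := sdExp_factor (V := V) hpq ∅ (fun _ _ => 1)
  simpa using this

/-- `u` is bad for `σ`: more than half of its closed neighbourhood is in `sdB σ`. -/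
def sdBad (σ : V → Bool) (u : V) : Prop := G.degree u < 2 * ((sdCN G u) ∩ sdB σ).card

instance (σ : V → Bool) (u : V) : Decidable (sdBad G σ u) := by
  unfold sdBad; infer_instance

def sdGood (σ : V → Bool) : Finset V :=
  (sdB σ).filter (fun v => ∀ u ∈ sdCN G v, ¬ sdBad G σ u)

lemma sdGood_subset (σ : V → Bool) : sdGood G σ ⊆ sdB σ := filter_subset _ _

lemma sd_sum_pm (A T : Finset V) :
    ∑ w ∈ A, (if w ∈ T then (-1 : ℤ) else 1) = (A.card : ℤ) - 2 * ((A ∩ T).card : ℤ) := by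
  rw [Finset.sum_ite, Finset.sum_const, Finset.sum_const]
  have h1 : A.filter (· ∈ T) = A ∩ T := Finset.filter_mem_eq_inter
  have h2 : (A.filter (· ∈ T)).card + (A.filter (¬ · ∈ T)).card = A.card :=
    Finset.card_filter_add_card_filter_not _
  rw [h1] at h2 ⊢
  have : (A.filter (¬ · ∈ T)).card = A.card - (A ∩ T).card := by omega
  rw [this]
  have hle : (A ∩ T).card ≤ A.card := Finset.card_le_card Finset.inter_subset_left
  simp only [nsmul_eq_mul, mul_one, mul_neg_one]
  omega

lemma sdGood_SDF (σ : V → Bool) :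
    G.IsSignedDominationFunction (fun v => if v ∈ sdGood G σ then (-1 : ℤ) else 1) := by
  constructor
  · intro v
    by_cases h : v ∈ sdGood G σ <;> simp [h]
  · intro u
    rw [show (insert u (G.neighborFinset u)) = sdCN G u from rfl, sd_sum_pm]
    by_cases hb : sdBad G σ u
    · have hempty : sdCN G u ∩ sdGood G σ = ∅ := by
        rw [Finset.eq_empty_iff_forall_notMem]
        intro v hv
        rw [Finset.mem_inter] at hv
        obtain ⟨hv1, hv2⟩ := hv
        rw [sdGood, Finset.mem_filter] at hv2
        exact hv2.2 u ((sdCN_symm G).mp hv1) hb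
      rw [hempty]
      simp [sdCN_card]
    · rw [sdBad, not_lt] at hb
      have hsub : (sdCN G u ∩ sdGood G σ).card ≤ (sdCN G u ∩ sdB σ).card :=
        Finset.card_le_card (Finset.inter_subset_inter le_rfl (sdGood_subset G σ))
      rw [sdCN_card]
      have : 2 * (sdCN G u ∩ sdGood G σ).card ≤ G.degree u := le_trans (by omega) hb
      push_cast
      push_cast at this
      linarith

lemma sdGood_total (σ : V → Bool) :
    ∑ v, (if v ∈ sdGood G σ then (-1 : ℤ) else 1)
      = (Fintype.card V : ℤ) - 2 * ((sdGood G σ).card : ℤ) := by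
  have := sd_sum_pm (V := V) Finset.univ (sdGood G σ)
  rw [Finset.univ_inter] at this
  simpa [Finset.card_univ] using this

lemma sd_gamma_le (σ : V → Bool) :
    G.signedDominationNumber ≤ (Fintype.card V : ℤ) - 2 * ((sdGood G σ).card : ℤ) := by
  apply csInf_le
  · refine ⟨-(Fintype.card V : ℤ), ?_⟩
    rintro s ⟨f, hf, rfl⟩
    have : ∀ v : V, -1 ≤ f v := by
      intro v; rcases hf.1 v with h | h <;> omega
    calc -(Fintype.card V : ℤ) = ∑ _v : V, (-1 : ℤ) := by
          rw [Finset.sum_const, Finset.card_univ, nsmul_eq_mul, mul_neg_one]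
    _ ≤ ∑ v, f v := Finset.sum_le_sum fun v _ => this v
  · exact ⟨_, sdGood_SDF G σ, (sdGood_total G σ).symm⟩

/-- spoiled count bound, pointwise in σ -/
lemma sd_spoiled_le (σ : V → Bool) :
    ((sdB σ).card : ℝ) - ((sdGood G σ).card : ℝ)
      ≤ ∑ u : V, (if sdBad G σ u then ((G.degree u : ℝ) + 1) else 0) := by
  have hsub : sdB σ \ sdGood G σ ⊆
      (Finset.univ.filter (fun u => sdBad G σ u)).biUnion (fun u => sdCN G u ∩ sdB σ) := by
    intro v hv
    rw [Finset.mem_sdiff] at hv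
    obtain ⟨hv1, hv2⟩ := hv
    rw [sdGood, Finset.mem_filter] at hv2
    push_neg at hv2
    obtain ⟨u, hu1, hu2⟩ := hv2 hv1
    rw [Finset.mem_biUnion]
    exact ⟨u, by simp [hu2], Finset.mem_inter.mpr ⟨(sdCN_symm G).mp hu1, hv1⟩⟩
  have h1 : (sdB σ \ sdGood G σ).card ≤
      ∑ u ∈ Finset.univ.filter (fun u => sdBad G σ u), (sdCN G u ∩ sdB σ).card :=
    le_trans (Finset.card_le_card hsub) (Finset.card_biUnion_le)
  have h2 : ∑ u ∈ Finset.univ.filter (fun u => sdBad G σ u), (sdCN G u ∩ sdB σ).card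
      ≤ ∑ u ∈ Finset.univ.filter (fun u => sdBad G σ u), (G.degree u + 1) := by
    refine Finset.sum_le_sum fun u _ => ?_
    rw [← sdCN_card G u]
    exact Finset.card_le_card Finset.inter_subset_left
  have h3 : (sdB σ).card - (sdGood G σ).card ≤ (sdB σ \ sdGood G σ).card := by
    rw [Finset.card_sdiff_of_subset (sdGood_subset G σ)]
  have h4 : ∑ u ∈ Finset.univ.filter (fun u => sdBad G σ u), ((G.degree u : ℝ) + 1)
      = ∑ u : V, (if sdBad G σ u then ((G.degree u : ℝ) + 1) else 0) :=
    (Finset.sum_filter _ _)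
  have hcard := Finset.card_le_card (sdGood_subset G σ)
  have h5 := le_trans h3 (le_trans h1 h2)
  rw [← h4]
  rify [hcard] at h5
  push_cast at h5 ⊢
  linarith


lemma sdExp_card {p q : ℝ} (hpq : p + q = 1) :
    ∑ σ : V → Bool, sdWgt p q σ * ((sdB σ).card : ℝ) = p * (Fintype.card V : ℝ) := by
  have hcard : ∀ σ : V → Bool, ((sdB (V := V) σ).card : ℝ)
      = ∑ v : V, (if σ v then (1:ℝ) else 0) := by
    intro σ
    rw [sdB, Finset.card_filter]
    push_cast
    rfl
  simp only [hcard, Finset.mul_sum]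
  rw [Finset.sum_comm]
  have hv : ∀ v : V, ∑ σ : V → Bool, sdWgt p q σ * (if σ v then (1:ℝ) else 0) = p := by
    intro v
    have h := sdExp_factor (V := V) hpq {v} (fun _ b => if b then (1:ℝ) else 0)
    simpa using h
  rw [Finset.sum_congr rfl fun v _ => hv v, Finset.sum_const, Finset.card_univ,
    nsmul_eq_mul, mul_comm]

lemma sdExp_pow {p q lam : ℝ} (hpq : p + q = 1) (A : Finset V) :
    ∑ σ : V → Bool, sdWgt p q σ * lam ^ ((A ∩ sdB σ).card) = (p * lam + q) ^ A.card := by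
  calc ∑ σ : V → Bool, sdWgt p q σ * lam ^ ((A ∩ sdB σ).card)
      = ∑ σ : V → Bool, sdWgt p q σ * ∏ v ∈ A, (if σ v then lam else 1) := by
        refine Finset.sum_congr rfl fun σ _ => ?_
        congr 1
        rw [Finset.prod_ite, Finset.prod_const, Finset.prod_const, one_pow, mul_one]
        congr 2
        ext v; simp [sdB]
  _ = ∏ v ∈ A, (p * lam + q) := by
        have h := sdExp_factor hpq A (fun _ b => if b then lam else 1)
        simpa using h
  _ = (p * lam + q) ^ A.card := Finset.prod_const _

lemma sd_chernoff {p q lam : ℝ} (hpq : p + q = 1) (hp : 0 ≤ p) (hq : 0 ≤ q)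
    (hlam : 1 ≤ lam) (u : V) :
    (∑ σ : V → Bool, sdWgt p q σ * (if sdBad G σ u then (1:ℝ) else 0))
        * lam ^ (G.degree u / 2 + 1)
      ≤ (p * lam + q) ^ (G.degree u + 1) := by
  set t := G.degree u / 2 + 1 with ht
  have hlam0 : (0:ℝ) ≤ lam := le_trans zero_le_one hlam
  have key : ∀ σ : V → Bool, sdWgt p q σ * (if sdBad G σ u then (1:ℝ) else 0) * lam ^ t
      ≤ sdWgt p q σ * lam ^ ((sdCN G u ∩ sdB σ).card) := by
    intro σ
    by_cases hb : sdBad G σ u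
    · rw [if_pos hb, mul_one]
      refine mul_le_mul_of_nonneg_left ?_ (sdWgt_nonneg hp hq σ)
      refine pow_le_pow_right₀ hlam ?_
      rw [sdBad] at hb
      omega
    · rw [if_neg hb, mul_zero, zero_mul]
      exact mul_nonneg (sdWgt_nonneg hp hq σ) (pow_nonneg hlam0 _)
  calc (∑ σ : V → Bool, sdWgt p q σ * (if sdBad G σ u then (1:ℝ) else 0)) * lam ^ t
      = ∑ σ : V → Bool, sdWgt p q σ * (if sdBad G σ u then (1:ℝ) else 0) * lam ^ t := by
        rw [Finset.sum_mul]
  _ ≤ ∑ σ : V → Bool, sdWgt p q σ * lam ^ ((sdCN G u ∩ sdB σ).card) :=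
      Finset.sum_le_sum fun σ _ => key σ
  _ = (p * lam + q) ^ (sdCN G u).card := sdExp_pow hpq _
  _ = (p * lam + q) ^ (G.degree u + 1) := by rw [sdCN_card]

lemma sd_P_le {x : ℝ} (hx0 : 0 ≤ x) (hx1 : x < 1) (u : V) :
    (∑ σ : V → Bool, sdWgt ((1-x)/2) ((1+x)/2) σ * (if sdBad G σ u then (1:ℝ) else 0))
      ≤ Real.exp (-(x^2/2)) ^ (G.degree u + 1) := by
  set p : ℝ := (1-x)/2 with hpdef
  set q : ℝ := (1+x)/2 with hqdef
  clear_value p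
  clear_value q
  have hp : 0 < p := by rw [hpdef]; linarith
  have hq : 0 < q := by rw [hqdef]; linarith
  have hpq : p + q = 1 := by rw [hpdef, hqdef]; ring
  set lam : ℝ := q / p with hlamdef
  have hlam : 1 ≤ lam := (one_le_div hp).mpr (by rw [hpdef, hqdef]; linarith)
  have hlam0 : (0:ℝ) < lam := lt_of_lt_of_le one_pos hlam
  set P := ∑ σ : V → Bool, sdWgt p q σ * (if sdBad G σ u then (1:ℝ) else 0) with hPdef
  have hP0 : 0 ≤ P := Finset.sum_nonneg fun σ _ =>
    mul_nonneg (sdWgt_nonneg hp.le hq.le σ) (by split <;> norm_num)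
  have hch := sd_chernoff G hpq hp.le hq.le hlam u
  have hpl : p * lam + q = 2 * q := by
    rw [hlamdef]; field_simp; ring
  rw [hpl] at hch
  set t := G.degree u / 2 + 1 with htdef
  set d := G.degree u with hddef
  have hlt : (0:ℝ) < lam ^ t := pow_pos hlam0 t
  have hPle : P ≤ (2*q)^(d+1) / lam^t := (le_div_iff₀ hlt).mpr hch
  set E := Real.exp (-(x^2/2)) with hEdef
  have hE0 : 0 < E := Real.exp_pos _
  have h2t : d + 1 ≤ 2 * t := by omega
  have hsq : ((2*q)^(d+1)/lam^t)^2 ≤ (E^(d+1))^2 := by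
    have hl1 : lam ^ (d+1) ≤ lam ^ (2*t) := pow_le_pow_right₀ hlam h2t
    have e1 : ((2*q)^(d+1)/lam^t)^2 = (2*q)^(2*(d+1))/lam^(2*t) := by
      rw [div_pow, ← pow_mul, ← pow_mul, Nat.mul_comm (d+1) 2, Nat.mul_comm t 2]
    have e2 : (2*q)^(2*(d+1))/lam^(2*t) ≤ (2*q)^(2*(d+1))/lam^(d+1) := by
      apply div_le_div_of_nonneg_left (by positivity) (pow_pos hlam0 _) hl1
    have e3 : (2*q)^(2*(d+1))/lam^(d+1) = (4*p*q)^(d+1) := by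
      rw [pow_mul, ← div_pow]
      congr 1
      rw [hlamdef]
      field_simp
      ring
    have e4 : (4*p*q)^(d+1) ≤ (E^2)^(d+1) := by
      have h4pq : 4*p*q = 1 - x^2 := by rw [hpdef, hqdef]; ring
      have hE2 : E^2 = Real.exp (-(x^2)) := by
        rw [hEdef, sq, ← Real.exp_add]; ring_nf
      refine pow_le_pow_left₀ (by nlinarith) ?_ _
      rw [h4pq, hE2]
      have h := Real.add_one_le_exp (-(x^2))
      linarith
    have e5 : (E^2)^(d+1) = (E^(d+1))^2 := by
      rw [← pow_mul, ← pow_mul, Nat.mul_comm]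
    calc ((2*q)^(d+1)/lam^t)^2 = (2*q)^(2*(d+1))/lam^(2*t) := e1
    _ ≤ (2*q)^(2*(d+1))/lam^(d+1) := e2
    _ = (4*p*q)^(d+1) := e3
    _ ≤ (E^2)^(d+1) := e4
    _ = (E^(d+1))^2 := e5
  have hfin : (2*q)^(d+1)/lam^t ≤ E^(d+1) := by
    have h0 : (0:ℝ) ≤ (2*q)^(d+1)/lam^t := by positivity
    have h0' : (0:ℝ) ≤ E^(d+1) := by positivity
    nlinarith [hsq]
  exact le_trans hPle hfin

lemma sd_numeric {N m y : ℝ} (hN2 : N ≤ 1001) (hNm : N ≤ m) (hN0 : 0 < N)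
    (hy : 22761/1000 * (m/N) ≤ y) : m * Real.exp (-y) ≤ 1/2000 := by
  set t : ℝ := m / N with ht
  have ht1 : (1:ℝ) ≤ t := (one_le_div hN0).mpr hNm
  have ht0 : (0:ℝ) < t := lt_of_lt_of_le one_pos ht1
  have hmt : m ≤ 1001 * t := by
    have hmeq : m = t * N := by rw [ht]; field_simp
    rw [hmeq]
    nlinarith
  have ht9 : t ≤ t^(9:ℕ) := le_self_pow₀ ht1 (by norm_num)
  have hKt0 : (0:ℝ) ≤ 22761/1000 * t := by positivity
  have hexp : (22761/1000*t)^(9:ℕ)/362880 ≤ Real.exp (22761/1000*t) := by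
    have h := Real.pow_div_factorial_le_exp (22761/1000*t) hKt0 9
    norm_num [Nat.factorial] at h
    exact h
  have hc : (2002000:ℝ) ≤ (22761/1000)^(9:ℕ)/362880 := by norm_num
  have hchain : 2000 * m ≤ Real.exp (22761/1000 * t) := by
    have h1 : (22761/1000*t)^(9:ℕ) = (22761/1000)^(9:ℕ) * t^(9:ℕ) := by ring
    have h2 : (2002000:ℝ) * t ≤ (22761/1000)^(9:ℕ)/362880 * t^(9:ℕ) := by
      calc (2002000:ℝ) * t ≤ ((22761/1000)^(9:ℕ)/362880) * t := by nlinarith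
      _ ≤ (22761/1000)^(9:ℕ)/362880 * t^(9:ℕ) := by
          refine mul_le_mul_of_nonneg_left ht9 ?_
          positivity
    calc 2000 * m ≤ 2000 * (1001 * t) := by nlinarith
    _ = 2002000 * t := by ring
    _ ≤ (22761/1000)^(9:ℕ)/362880 * t^(9:ℕ) := h2
    _ = (22761/1000*t)^(9:ℕ)/362880 := by rw [h1]; ring
    _ ≤ Real.exp (22761/1000*t) := hexp
  have hexpy : Real.exp (22761/1000 * t) ≤ Real.exp y := Real.exp_le_exp.mpr hy
  have h2 : 2000 * m ≤ Real.exp y := le_trans hchain hexpy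
  have hE : 0 < Real.exp y := Real.exp_pos y
  rw [Real.exp_neg]
  rw [mul_inv_le_iff₀ hE]
  linarith

lemma sd_pervertex {x : ℝ} (hx0 : 0 ≤ x) (hx1 : x < 1) (δ : ℕ) (u : V)
    (hd : δ ≤ G.degree u) (hδ2 : δ ≤ 1000)
    (hxsq : (45522/1000 : ℝ) ≤ x^2 * ((δ:ℝ)+1)) :
    ((G.degree u : ℝ) + 1) * (∑ σ : V → Bool,
        sdWgt ((1-x)/2) ((1+x)/2) σ * (if sdBad G σ u then (1:ℝ) else 0)) ≤ 1/2000 := by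
  have hP := sd_P_le G hx0 hx1 u
  set m : ℝ := (G.degree u : ℝ) + 1 with hm
  have hm0 : (0:ℝ) ≤ m := by positivity
  have hNpos : (0:ℝ) < (δ:ℝ)+1 := by positivity
  have hmN : ((δ:ℝ) + 1) ≤ m := by
    rw [hm]
    have : (δ:ℝ) ≤ (G.degree u : ℝ) := by exact_mod_cast hd
    linarith
  have hEm : Real.exp (-(x^2/2)) ^ (G.degree u + 1) = Real.exp (-(x^2*m/2)) := by
    rw [← Real.exp_nat_mul]
    congr 1
    rw [hm]
    push_cast
    ring
  rw [hEm] at hP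
  have hy : 22761/1000 * (m/((δ:ℝ)+1)) ≤ x^2*m/2 := by
    have hx2 : 45522/1000 / ((δ:ℝ)+1) ≤ x^2 := (div_le_iff₀ hNpos).mpr hxsq
    have heq : 22761/1000 * (m/((δ:ℝ)+1)) = (45522/1000 / ((δ:ℝ)+1)) * m / 2 := by
      field_simp
      ring
    rw [heq]
    gcongr
  have hnum := sd_numeric (N := (δ:ℝ)+1) (m := m) (y := x^2*m/2)
    (by push_cast; linarith [show ((δ:ℕ):ℝ) ≤ 1000 from by exact_mod_cast hδ2]) hmN hNpos hy
  calc m * (∑ σ : V → Bool,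
        sdWgt ((1-x)/2) ((1+x)/2) σ * (if sdBad G σ u then (1:ℝ) else 0))
      ≤ m * Real.exp (-(x^2*m/2)) := mul_le_mul_of_nonneg_left hP hm0
  _ ≤ 1/2000 := hnum

end Aux

lemma sd_log_231 : (27/5:ℝ) ≤ Real.log 231 := by
  rw [Real.le_log_iff_exp_le (by norm_num)]
  have h5 : Real.exp (27/5) ^ (5:ℕ) = Real.exp 27 := by
    rw [← Real.exp_nat_mul]; norm_num
  refine le_of_pow_le_pow_left₀ (n := 5) (by norm_num) (by norm_num) ?_
  rw [h5]
  calc Real.exp 27 = Real.exp 1 ^ (27:ℕ) := by rw [Real.exp_one_pow]; norm_num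
  _ ≤ (2.7182818286:ℝ)^(27:ℕ) :=
        pow_le_pow_left₀ (Real.exp_nonneg 1) Real.exp_one_lt_d9.le 27
  _ ≤ 231^(5:ℕ) := by norm_num

lemma sd_log_230 : (27/5:ℝ) ≤ Real.log 230 := by
  rw [Real.le_log_iff_exp_le (by norm_num)]
  have h5 : Real.exp (27/5) ^ (5:ℕ) = Real.exp 27 := by
    rw [← Real.exp_nat_mul]; norm_num
  refine le_of_pow_le_pow_left₀ (n := 5) (by norm_num) (by norm_num) ?_
  rw [h5]
  calc Real.exp 27 = Real.exp 1 ^ (27:ℕ) := by rw [Real.exp_one_pow]; norm_num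
  _ ≤ (2.7182818286:ℝ)^(27:ℕ) :=
        pow_le_pow_left₀ (Real.exp_nonneg 1) Real.exp_one_lt_d9.le 27
  _ ≤ 230^(5:ℕ) := by norm_num

lemma sd_log_1000 : Real.log 1000 ≤ 139/20 := by
  rw [Real.log_le_iff_le_exp (by norm_num)]
  refine le_of_pow_le_pow_left₀ (n := 20) (by norm_num) (Real.exp_nonneg _) ?_
  have h20 : Real.exp (139/20) ^ (20:ℕ) = Real.exp 139 := by
    rw [← Real.exp_nat_mul]; norm_num
  rw [h20]
  calc (1000:ℝ)^(20:ℕ) ≤ (2.7182818283:ℝ)^(139:ℕ) := by norm_num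
  _ ≤ Real.exp 1 ^ (139:ℕ) := pow_le_pow_left₀ (by norm_num) Real.exp_one_gt_d9.le 139
  _ = Real.exp 139 := by rw [Real.exp_one_pow]; norm_num

lemma sd_log_1001 : Real.log 1001 ≤ 7 := by
  rw [Real.log_le_iff_le_exp (by norm_num)]
  calc (1001:ℝ) ≤ (2.7182818283:ℝ)^(7:ℕ) := by norm_num
  _ ≤ Real.exp 1 ^ (7:ℕ) := pow_le_pow_left₀ (by norm_num) Real.exp_one_gt_d9.le 7
  _ = Real.exp 7 := by rw [Real.exp_one_pow]; norm_num

set_option maxHeartbeats 4000000 in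
theorem signed_domination_upper_bound_delta_230_1000
    {V : Type*} [Fintype V] [DecidableEq V] [Nonempty V]
    (G : SimpleGraph V) [DecidableRel G.Adj]
    (δ : ℕ) (hδdef : δ = G.minDegree) (hδ1 : 230 ≤ δ) (hδ2 : δ ≤ 1000) :
    (G.signedDominationNumber : ℝ) ≤
      ((Real.sqrt (Real.log ((δ : ℝ) + 1) * (18.16 - 1.4 * Real.log (δ : ℝ))) + 0.25) /
        Real.sqrt ((δ : ℝ) + 1)) * (Fintype.card V : ℝ) := by
  classical
  set Nr : ℝ := (δ:ℝ) + 1 with hNrdef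
  set L1 : ℝ := Real.log Nr with hL1def
  set L : ℝ := Real.log (δ:ℝ) with hLdef
  set M : ℝ := 18.16 - 1.4 * L with hMdef
  set sN : ℝ := Real.sqrt Nr with hsNdef
  set c : ℝ := (Real.sqrt (L1 * M) + 0.25) / sN with hcdef
  clear_value c
  clear_value sN
  clear_value M
  clear_value L
  clear_value L1
  clear_value Nr
  -- range facts
  have hδr1 : (231:ℝ) ≤ Nr := by
    rw [hNrdef]
    have : (230:ℝ) ≤ (δ:ℝ) := by exact_mod_cast hδ1
    linarith
  have hδr2 : Nr ≤ 1001 := by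
    rw [hNrdef]
    have : (δ:ℝ) ≤ (1000:ℝ) := by exact_mod_cast hδ2
    linarith
  have hδl : (230:ℝ) ≤ (δ:ℝ) := by exact_mod_cast hδ1
  have hδu : (δ:ℝ) ≤ 1000 := by exact_mod_cast hδ2
  have hNr0 : (0:ℝ) < Nr := by linarith
  -- log bounds
  have hL1l : (27/5:ℝ) ≤ L1 := by
    rw [hL1def]
    exact le_trans sd_log_231 (Real.log_le_log (by norm_num) hδr1)
  have hL1u : L1 ≤ 7 := by
    rw [hL1def]
    exact le_trans (Real.log_le_log (by linarith) hδr2) sd_log_1001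
  have hLl : (27/5:ℝ) ≤ L := by
    rw [hLdef]
    exact le_trans sd_log_230 (Real.log_le_log (by norm_num) hδl)
  have hLu : L ≤ 139/20 := by
    rw [hLdef]
    exact le_trans (Real.log_le_log (by linarith) hδu) sd_log_1000
  have hMl : (843/100:ℝ) ≤ M := by rw [hMdef]; norm_num; linarith
  have hMu : M ≤ 53/5 := by rw [hMdef]; norm_num; linarith
  have hLM_l : (22761/500:ℝ) ≤ L1 * M := by nlinarith
  have hLM_u : L1 * M ≤ 371/5 := by nlinarith
  have hLM0 : (0:ℝ) ≤ L1 * M := le_trans (by norm_num) hLM_l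
  -- sqrt bounds
  have hsNl : (15:ℝ) ≤ sN := by
    rw [hsNdef]
    have h15 : (15:ℝ) = Real.sqrt 225 := by
      rw [show (225:ℝ) = 15^2 by norm_num, Real.sqrt_sq (by norm_num)]
    rw [h15]
    exact Real.sqrt_le_sqrt (by linarith)
  have hsNu : sN ≤ 32 := by
    rw [hsNdef]
    have h32 : Real.sqrt 1024 = 32 := by
      rw [show (1024:ℝ) = 32^2 by norm_num]
      exact Real.sqrt_sq (by norm_num)
    calc Real.sqrt Nr ≤ Real.sqrt 1024 := Real.sqrt_le_sqrt (by linarith)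
    _ = 32 := h32
  have hsN0 : (0:ℝ) < sN := by linarith
  have hsqLM0 : 0 ≤ Real.sqrt (L1*M) := Real.sqrt_nonneg _
  have hsqLMu : Real.sqrt (L1*M) ≤ 87/10 := by
    calc Real.sqrt (L1*M) ≤ Real.sqrt ((87/10)^2) := Real.sqrt_le_sqrt (by nlinarith)
    _ = 87/10 := Real.sqrt_sq (by norm_num)
  have hcu : c < 1 := by
    rw [hcdef, div_lt_one hsN0]
    calc Real.sqrt (L1*M) + 0.25 ≤ 87/10 + 0.25 := by linarith
    _ < 15 := by norm_num
    _ ≤ sN := hsNl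
  set x : ℝ := c - 1/1000 with hxdef
  clear_value x
  have hxlb : Real.sqrt (L1*M) / sN ≤ x := by
    rw [hxdef, hcdef, add_div]
    have h1 : (1/1000:ℝ) ≤ 0.25 / sN := by
      rw [le_div_iff₀ hsN0]
      nlinarith
    linarith
  have hx0 : 0 ≤ x := le_trans (div_nonneg (Real.sqrt_nonneg _) hsN0.le) hxlb
  have hx1 : x < 1 := by rw [hxdef]; linarith
  have hxsq : (45522/1000:ℝ) ≤ x^2 * Nr := by
    have h1 : (Real.sqrt (L1*M)/sN)^2 = (L1*M)/Nr := by
      rw [div_pow, Real.sq_sqrt hLM0, hsNdef, Real.sq_sqrt hNr0.le]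
    have h2 : (L1*M)/Nr ≤ x^2 := by
      rw [← h1]
      exact pow_le_pow_left₀ (by positivity) hxlb 2
    calc (45522/1000:ℝ) = 22761/500 := by norm_num
    _ ≤ L1*M := hLM_l
    _ = (L1*M)/Nr * Nr := by field_simp
    _ ≤ x^2 * Nr := mul_le_mul_of_nonneg_right h2 hNr0.le
  -- probability setup
  set p : ℝ := (1-x)/2 with hpdef
  set q : ℝ := (1+x)/2 with hqdef
  clear_value p
  clear_value q
  have hp0 : 0 ≤ p := by rw [hpdef]; linarith
  have hq0 : 0 ≤ q := by rw [hqdef]; linarith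
  have hpq : p + q = 1 := by rw [hpdef, hqdef]; ring
  have hw : ∀ σ : V → Bool, 0 ≤ sdWgt p q σ := sdWgt_nonneg hp0 hq0
  have hsum := sdSum_wgt (V := V) hpq
  have hbexp := sdExp_card (V := V) hpq
  have hn0 : (0:ℝ) ≤ (Fintype.card V : ℝ) := by positivity
  -- step 1
  have key : ∀ σ : V → Bool, (G.signedDominationNumber : ℝ)
      ≤ (Fintype.card V : ℝ) - 2*((sdGood G σ).card : ℝ) := by
    intro σ
    exact_mod_cast sd_gamma_le G σ
  have h1 : (G.signedDominationNumber : ℝ)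
      ≤ ∑ σ : V → Bool, sdWgt p q σ * ((Fintype.card V : ℝ) - 2*((sdGood G σ).card : ℝ)) := by
    calc (G.signedDominationNumber : ℝ)
        = ∑ σ : V → Bool, sdWgt p q σ * (G.signedDominationNumber : ℝ) := by
          rw [← Finset.sum_mul, hsum, one_mul]
    _ ≤ _ := Finset.sum_le_sum fun σ _ => mul_le_mul_of_nonneg_left (key σ) (hw σ)
  -- step 2: split
  have h2 : ∑ σ : V → Bool, sdWgt p q σ * ((Fintype.card V : ℝ) - 2*((sdGood G σ).card : ℝ))
      = (Fintype.card V : ℝ) - 2*(p*(Fintype.card V : ℝ))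
        + 2 * ∑ σ : V → Bool, sdWgt p q σ
            * (((sdB σ).card : ℝ) - ((sdGood G σ).card : ℝ)) := by
    have hptw : ∀ σ : V → Bool,
        sdWgt p q σ * ((Fintype.card V : ℝ) - 2*((sdGood G σ).card : ℝ))
        = sdWgt p q σ * (Fintype.card V : ℝ) - 2*(sdWgt p q σ * ((sdB σ).card:ℝ))
          + 2*(sdWgt p q σ * (((sdB σ).card : ℝ) - ((sdGood G σ).card : ℝ))) := fun σ => by
      ring
    rw [Finset.sum_congr rfl fun σ _ => hptw σ, Finset.sum_add_distrib,
      Finset.sum_sub_distrib, ← Finset.sum_mul, ← Finset.mul_sum, ← Finset.mul_sum,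
      hsum, hbexp, one_mul]
  -- step 3: spoiled bound
  have h3 : ∑ σ : V → Bool, sdWgt p q σ * (((sdB σ).card : ℝ) - ((sdGood G σ).card : ℝ))
      ≤ (Fintype.card V : ℝ)/2000 := by
    have hpt : ∀ σ : V → Bool,
        sdWgt p q σ * (((sdB σ).card : ℝ) - ((sdGood G σ).card : ℝ))
        ≤ sdWgt p q σ * ∑ u : V, (if sdBad G σ u then ((G.degree u : ℝ)+1) else 0) := by
      intro σ
      exact mul_le_mul_of_nonneg_left (sd_spoiled_le G σ) (hw σ)
    calc ∑ σ : V → Bool, sdWgt p q σ * (((sdB σ).card : ℝ) - ((sdGood G σ).card : ℝ))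
        ≤ ∑ σ : V → Bool, sdWgt p q σ
            * ∑ u : V, (if sdBad G σ u then ((G.degree u : ℝ)+1) else 0) :=
          Finset.sum_le_sum fun σ _ => hpt σ
    _ = ∑ u : V, ∑ σ : V → Bool,
          sdWgt p q σ * (if sdBad G σ u then ((G.degree u : ℝ)+1) else 0) := by
        simp_rw [Finset.mul_sum]
        exact Finset.sum_comm
    _ = ∑ u : V, ((G.degree u:ℝ)+1)
          * ∑ σ : V → Bool, sdWgt p q σ * (if sdBad G σ u then (1:ℝ) else 0) := by
        refine Finset.sum_congr rfl fun u _ => ?_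
        rw [Finset.mul_sum]
        refine Finset.sum_congr rfl fun σ _ => ?_
        by_cases hb : sdBad G σ u
        · rw [if_pos hb, if_pos hb]; ring
        · rw [if_neg hb, if_neg hb]; ring
    _ ≤ ∑ _u : V, (1/2000:ℝ) := by
        refine Finset.sum_le_sum fun u _ => ?_
        rw [hpdef, hqdef]
        refine sd_pervertex G hx0 hx1 δ u ?_ hδ2 (by rw [← hNrdef]; exact hxsq)
        rw [hδdef]
        exact G.minDegree_le_degree u
    _ = (Fintype.card V : ℝ)/2000 := by
        rw [Finset.sum_const, Finset.card_univ, nsmul_eq_mul]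
        ring
  -- combine
  have h1x : 1 - 2*p = x := by rw [hpdef]; ring
  have hcx : c = x + 1/1000 := by rw [hxdef]; ring
  calc (G.signedDominationNumber : ℝ)
      ≤ (Fintype.card V : ℝ) - 2*(p*(Fintype.card V : ℝ))
        + 2 * ∑ σ : V → Bool, sdWgt p q σ
            * (((sdB σ).card : ℝ) - ((sdGood G σ).card : ℝ)) := by rw [← h2]; exact h1
  _ ≤ (Fintype.card V : ℝ) - 2*(p*(Fintype.card V : ℝ)) + 2 * ((Fintype.card V : ℝ)/2000) := by
      linarith
  _ = ((1 - 2*p) + 1/1000) * (Fintype.card V : ℝ) := by ring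
  _ = c * (Fintype.card V : ℝ) := by rw [h1x, hcx]
end

section
/- Let G be a finite simple graph with n vertices whose degree sequence listed in nondecreasing order is d_1 ≤ d_2 ≤ ... ≤ d_n. Let λ ≥ 0 be the largest integer (with 0 ≤ λ ≤ n) such that ∑_{i=1}^{λ} (⌈d_i/2⌉ + 1) ≤ ∑_{i=λ+1}^{n} ⌊d_i/2⌋ (where the empty sum is 0). Then the signed domination number of G satisfies γ_s(G) ≥ n − 2λ. -/
open Finset

namespace Finset

variable {ι M : Type*} [AddCommMonoid M] [PartialOrder M] [DecidableEq ι]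

theorem sum_le_sum_of_card_eq_of_forall_le [IsOrderedAddMonoid M] {s t : Finset ι}
    {f : ι → M} (hst : #s = #t) (h : ∀ i ∈ s, ∀ j ∈ t, f i ≤ f j) :
    ∑ i ∈ s, f i ≤ ∑ j ∈ t, f j := by
  induction s using Finset.induction_on generalizing t with
  | empty => simp [card_eq_zero.mp hst.symm]
  | insert a s ha ih =>
    obtain ⟨b, hb⟩ : t.Nonempty := by
      rw [← card_pos, ← hst]
      exact card_pos.mpr ⟨a, mem_insert_self a s⟩
    rw [sum_insert ha, ← add_sum_erase t f hb]
    refine add_le_add (h a (mem_insert_self a s) b hb) (ih ?_ ?_)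
    · rw [card_erase_of_mem hb, ← hst, card_insert_of_notMem ha, Nat.add_sub_cancel]
    · exact fun i hi j hj => h i (mem_insert_of_mem hi) j (mem_of_mem_erase hj)

theorem sum_le_sum_of_card_eq_of_forall_sdiff_le [IsOrderedCancelAddMonoid M]
    {s t : Finset ι} {f : ι → M} (hst : #s = #t) (h : ∀ i ∈ s \ t, ∀ j ∈ t \ s, f i ≤ f j) :
    ∑ i ∈ s, f i ≤ ∑ j ∈ t, f j :=
  sum_sdiff_le_sum_sdiff.mp (sum_le_sum_of_card_eq_of_forall_le (card_sdiff_comm hst) h)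

end Finset

namespace Monotone

variable {M : Type*} [AddCommMonoid M] [PartialOrder M] [IsOrderedCancelAddMonoid M]
  {n : ℕ} {g : Fin n → M}

theorem sum_filter_val_lt_le_sum (hg : Monotone g) (s : Finset (Fin n)) {k : ℕ}
    (hk : #s = k) :
    ∑ i ∈ univ.filter (fun i : Fin n => (i : ℕ) < k), g i ≤ ∑ i ∈ s, g i := by
  have hs : k ≤ n := by simpa [hk] using card_le_univ s
  refine sum_le_sum_of_card_eq_of_forall_sdiff_le (by simp [Fin.card_filter_val_lt, hs, hk]) ?_
  intro i hi j hj
  simp only [mem_sdiff, mem_filter, mem_univ, true_and, not_lt] at hi hj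
  exact hg (Fin.le_def.mpr (by omega))

theorem sum_le_sum_filter_le_val (hg : Monotone g) (s : Finset (Fin n)) {k : ℕ}
    (hk : #s + k = n) :
    ∑ i ∈ s, g i ≤ ∑ i ∈ univ.filter (fun i : Fin n => k ≤ (i : ℕ)), g i := by
  have hsc : #sᶜ = k := by rw [card_compl, Fintype.card_fin]; omega
  have hprefix := hg.sum_filter_val_lt_le_sum sᶜ hsc
  refine le_of_add_le_add_right
    (a := ∑ i ∈ univ.filter (fun i : Fin n => (i : ℕ) < k), g i) ?_
  calc ∑ i ∈ s, g i + ∑ i ∈ univ.filter (fun i : Fin n => (i : ℕ) < k), g i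
      ≤ ∑ i ∈ s, g i + ∑ i ∈ sᶜ, g i := by gcongr
    _ = ∑ i, g i := sum_add_sum_compl s g
    _ = _ := by simp_rw [← not_lt, sum_filter_not_add_sum_filter]

end Monotone

namespace Finset

variable {α : Type*} {f : α → ℤ}

theorem card_filter_eq_one_add_card_filter_eq_neg_one
    (hf : ∀ a, f a = 1 ∨ f a = -1) (s : Finset α) :
    #(s.filter (f · = 1)) + #(s.filter (f · = -1)) = #s := by
  rw [← card_filter_add_card_filter_not (s := s) (p := (f · = 1))]
  congr 2
  exact filter_congr fun a _ => by rcases hf a with h | h <;> simp [h]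

theorem sum_eq_card_filter_eq_one_sub_card_filter_eq_neg_one
    (hf : ∀ a, f a = 1 ∨ f a = -1) (s : Finset α) :
    ∑ a ∈ s, f a = #(s.filter (f · = 1)) - #(s.filter (f · = -1)) := by
  have hsplit : ∀ a, f a = (if f a = 1 then 1 else 0) - (if f a = -1 then 1 else 0) := fun a => by
    rcases hf a with h | h <;> simp [h]
  rw [sum_congr rfl fun a _ => hsplit a, sum_sub_distrib, sum_boole, sum_boole]

end Finset

namespace SimpleGraph

variable {V : Type*} [Fintype V] [DecidableEq V] {G : SimpleGraph V} [DecidableRel G.Adj]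
  {f : V → ℤ}

theorem isSignedDominationFunction_one : G.IsSignedDominationFunction 1 :=
  ⟨fun _ => Or.inl rfl, fun v => by simp⟩

namespace IsSignedDominationFunction

theorem one_le_apply_add_card_filter_sub (hf : G.IsSignedDominationFunction f) (v : V) :
    1 ≤ f v + #((G.neighborFinset v).filter (f · = 1))
      - #((G.neighborFinset v).filter (f · = -1)) := by
  have h := hf.2 v
  rwa [sum_insert (G.notMem_neighborFinset_self v),
    sum_eq_card_filter_eq_one_sub_card_filter_eq_neg_one hf.1, ← add_sub_assoc] at h

theorem card_neighbor_filter_eq_neg_one_le (hf : G.IsSignedDominationFunction f) {v : V}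
    (hv : f v = 1) : #((G.neighborFinset v).filter (f · = -1)) ≤ G.degree v / 2 := by
  have h := hf.one_le_apply_add_card_filter_sub v
  have hcard := card_filter_eq_one_add_card_filter_eq_neg_one hf.1 (G.neighborFinset v)
  rw [card_neighborFinset_eq_degree] at hcard
  omega

theorem le_card_neighbor_filter_eq_one (hf : G.IsSignedDominationFunction f) {v : V}
    (hv : f v = -1) : (G.degree v + 1) / 2 + 1 ≤ #((G.neighborFinset v).filter (f · = 1)) := by
  have h := hf.one_le_apply_add_card_filter_sub v
  have hcard := card_filter_eq_one_add_card_filter_eq_neg_one hf.1 (G.neighborFinset v)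
  rw [card_neighborFinset_eq_degree] at hcard
  omega

theorem sum_degree_neg_le_sum_degree_pos (hf : G.IsSignedDominationFunction f) :
    ∑ v ∈ univ.filter (f · = -1), ((G.degree v + 1) / 2 + 1)
      ≤ ∑ v ∈ univ.filter (f · = 1), G.degree v / 2 := by
  set M := univ.filter (f · = -1)
  set P := univ.filter (f · = 1)
  have habove : ∀ v, (G.neighborFinset v).filter (f · = 1) = P.bipartiteAbove G.Adj v :=
    fun v => by ext u; simp [P, bipartiteAbove, and_comm]
  have hbelow : ∀ u, (G.neighborFinset u).filter (f · = -1) = M.bipartiteBelow G.Adj u :=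
    fun u => by ext v; simp [M, bipartiteBelow, G.adj_comm u v, and_comm]
  calc ∑ v ∈ M, ((G.degree v + 1) / 2 + 1)
      ≤ ∑ v ∈ M, #(P.bipartiteAbove G.Adj v) :=
        sum_le_sum fun v hv =>
          habove v ▸ hf.le_card_neighbor_filter_eq_one (mem_filter.mp hv).2
    _ = ∑ u ∈ P, #(M.bipartiteBelow G.Adj u) :=
        sum_card_bipartiteAbove_eq_sum_card_bipartiteBelow _
    _ ≤ ∑ u ∈ P, G.degree u / 2 :=
        sum_le_sum fun u hu =>
          hbelow u ▸ hf.card_neighbor_filter_eq_neg_one_le (mem_filter.mp hu).2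

end IsSignedDominationFunction

end SimpleGraph

open Finset in
theorem signed_domination_lower_bound_lambda_general
    {V : Type*} [Fintype V] [DecidableEq V] (G : SimpleGraph V) [DecidableRel G.Adj]
    (n : ℕ) (hn : n = Fintype.card V)
    (σ : V ≃ Fin n) (d : Fin n → ℕ) (hmono : Monotone d)
    (hdeg : ∀ v : V, d (σ v) = G.degree v)
    (lam : ℕ)
    (hlargest : ∀ μ : ℕ, μ ≤ n →
      (∑ i ∈ univ.filter (fun i : Fin n => (i : ℕ) < μ), ((d i + 1) / 2 + 1) ≤
        ∑ i ∈ univ.filter (fun i : Fin n => μ ≤ (i : ℕ)), d i / 2) → μ ≤ lam) :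
    (n : ℤ) - 2 * (lam : ℤ) ≤ G.signedDominationNumber := by
  refine le_csInf ⟨_, 1, G.isSignedDominationFunction_one, rfl⟩ ?_
  rintro _ ⟨f, hf, rfl⟩
  set M := univ.filter (f · = -1)
  set P := univ.filter (f · = 1)
  have hcard : #P + #M = n := by
    rw [card_filter_eq_one_add_card_filter_eq_neg_one hf.1, card_univ, hn]
  have hreindex : ∀ (h : ℕ → ℕ) (s : Finset V),
      ∑ i ∈ s.map σ.toEmbedding, h (d i) = ∑ v ∈ s, h (G.degree v) := fun h s => by
    simp [hdeg]
  have hM : #M ≤ lam := hlargest _ (by omega) <| calc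
    _ ≤ ∑ i ∈ M.map σ.toEmbedding, ((d i + 1) / 2 + 1) :=
        Monotone.sum_filter_val_lt_le_sum (fun a b h => by have := hmono h; omega) _ (card_map _)
    _ = ∑ v ∈ M, ((G.degree v + 1) / 2 + 1) := hreindex (fun k => (k + 1) / 2 + 1) M
    _ ≤ ∑ v ∈ P, G.degree v / 2 := hf.sum_degree_neg_le_sum_degree_pos
    _ = ∑ i ∈ P.map σ.toEmbedding, d i / 2 := (hreindex (· / 2) P).symm
    _ ≤ _ := Monotone.sum_le_sum_filter_le_val (fun a b h => by have := hmono h; omega) _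
        (by rw [card_map]; omega)
  have hsum : ∑ v, f v = #P - #M :=
    sum_eq_card_filter_eq_one_sub_card_filter_eq_neg_one hf.1 _
  omega

open Finset in
theorem signed_domination_lower_bound_lambda
    {V : Type*} [Fintype V] [DecidableEq V] (G : SimpleGraph V) [DecidableRel G.Adj]
    (n : ℕ) (hn : n = Fintype.card V)
    (σ : V ≃ Fin n) (d : Fin n → ℕ) (hmono : Monotone d)
    (hdeg : ∀ v : V, d (σ v) = G.degree v)
    (lam : ℕ) (hlam : lam ≤ n)
    (hsum : ∑ i ∈ univ.filter (fun i : Fin n => (i : ℕ) < lam), ((d i + 1) / 2 + 1) ≤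
            ∑ i ∈ univ.filter (fun i : Fin n => lam ≤ (i : ℕ)), d i / 2)
    (hlargest : ∀ μ : ℕ, μ ≤ n →
      (∑ i ∈ univ.filter (fun i : Fin n => (i : ℕ) < μ), ((d i + 1) / 2 + 1) ≤
        ∑ i ∈ univ.filter (fun i : Fin n => μ ≤ (i : ℕ)), d i / 2) → μ ≤ lam) :
    (n : ℤ) - 2 * (lam : ℤ) ≤ G.signedDominationNumber :=
  signed_domination_lower_bound_lambda_general G n hn σ d hmono hdeg lam hlargest
end

section
/- For any finite simple graph G with n vertices, minimum degree δ and maximum degree Δ, the signed domination number satisfies γ_s(G) ≥ ((⌈δ/2⌉ − ⌊Δ/2⌋ + 1) / (⌈δ/2⌉ + ⌊Δ/2⌋ + 1)) · n. -/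
open Finset

lemma sdf_key {V : Type*} [Fintype V] [DecidableEq V]
    (G : SimpleGraph V) [DecidableRel G.Adj]
    (f : V → ℤ) (hf : G.IsSignedDominationFunction f) (δ Δ : ℕ)
    (hδ : ∀ v, δ ≤ G.degree v) (hΔ : ∀ v, G.degree v ≤ Δ) :
    ((((δ + 1) / 2 : ℕ) : ℤ) - ((Δ / 2 : ℕ) : ℤ) + 1) * (Fintype.card V : ℤ) ≤
      ((((δ + 1) / 2 : ℕ) : ℤ) + ((Δ / 2 : ℕ) : ℤ) + 1) * ∑ v, f v := by
  obtain ⟨h1, h2⟩ := hf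
  set a : ℕ := (δ + 1) / 2 with ha
  set b : ℕ := Δ / 2 with hb
  set P : Finset V := univ.filter (fun v => f v = 1) with hP
  set M : Finset V := univ.filter (fun v => f v = -1) with hM
  -- over any finset s: card split and sum formula
  have hsplit : ∀ s : Finset V,
      (s.filter (fun v => f v = 1)).card + (s.filter (fun v => f v = -1)).card = s.card := by
    intro s
    have : s.filter (fun v => f v = -1) = s.filter (fun v => ¬ f v = 1) := by
      ext u; rcases h1 u with h | h <;> simp [h]
    rw [this, Finset.card_filter_add_card_filter_not]
  have hsum : ∀ s : Finset V,
      ∑ u ∈ s, f u = ((s.filter (fun v => f v = 1)).card : ℤ)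
        - ((s.filter (fun v => f v = -1)).card : ℤ) := by
    intro s
    have hnot : s.filter (fun v => ¬ f v = 1) = s.filter (fun v => f v = -1) := by
      ext u; rcases h1 u with h | h <;> simp [h]
    rw [← Finset.sum_filter_add_sum_filter_not s (fun v => f v = 1), hnot]
    rw [Finset.sum_congr rfl (fun u hu => (mem_filter.mp hu).2),
        Finset.sum_congr rfl (fun u (hu : u ∈ s.filter (fun v => f v = -1)) =>
          (mem_filter.mp hu).2)]
    simp only [Finset.sum_const, nsmul_eq_mul, mul_one, mul_neg_one]
    ring
  -- per-vertex neighborhood facts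
  have hNP : ∀ v, G.neighborFinset v ∩ P = (G.neighborFinset v).filter (fun u => f u = 1) := by
    intro v; ext u; simp [hP]
  have hNM : ∀ v, G.neighborFinset v ∩ M = (G.neighborFinset v).filter (fun u => f u = -1) := by
    intro v; ext u; simp [hM]
  have hdeg : ∀ v, (G.neighborFinset v ∩ P).card + (G.neighborFinset v ∩ M).card
      = G.degree v := by
    intro v; rw [hNP, hNM, hsplit]; rfl
  have hnbrsum : ∀ v, ∑ u ∈ G.neighborFinset v, f u
      = ((G.neighborFinset v ∩ P).card : ℤ) - ((G.neighborFinset v ∩ M).card : ℤ) := by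
    intro v; rw [hNP, hNM, hsum]
  have hclosed : ∀ v, 1 ≤ f v + (((G.neighborFinset v ∩ P).card : ℤ)
      - ((G.neighborFinset v ∩ M).card : ℤ)) := by
    intro v
    have := h2 v
    rwa [Finset.sum_insert (G.notMem_neighborFinset_self v), hnbrsum] at this
  -- lower bound for v ∈ M
  have hMlow : ∀ v ∈ M, a + 1 ≤ (G.neighborFinset v ∩ P).card := by
    intro v hv
    have hfv : f v = -1 := (mem_filter.mp hv).2
    have h3 := hclosed v
    rw [hfv] at h3
    have h4 := hdeg v
    have h5 := hδ v
    omega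
  -- upper bound for u ∈ P
  have hPhigh : ∀ u ∈ P, (G.neighborFinset u ∩ M).card ≤ b := by
    intro u hu
    have hfu : f u = 1 := (mem_filter.mp hu).2
    have h3 := hclosed u
    rw [hfu] at h3
    have h4 := hdeg u
    have h5 := hΔ u
    omega
  -- double counting
  have dc : ∑ v ∈ M, (G.neighborFinset v ∩ P).card
      = ∑ u ∈ P, (G.neighborFinset u ∩ M).card := by
    calc ∑ v ∈ M, (G.neighborFinset v ∩ P).card
        = ∑ v ∈ M, ∑ u ∈ P, if G.Adj v u then 1 else 0 := by
          refine Finset.sum_congr rfl fun v _ => ?_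
          have : G.neighborFinset v ∩ P = P.filter (fun u => G.Adj v u) := by
            ext u; simp [SimpleGraph.mem_neighborFinset, and_comm]
          rw [this, Finset.card_filter]
      _ = ∑ u ∈ P, ∑ v ∈ M, if G.Adj v u then 1 else 0 := Finset.sum_comm
      _ = ∑ u ∈ P, (G.neighborFinset u ∩ M).card := by
          refine Finset.sum_congr rfl fun u _ => ?_
          have : G.neighborFinset u ∩ M = M.filter (fun v => G.Adj v u) := by
            ext v; simp [SimpleGraph.mem_neighborFinset, G.adj_comm, and_comm]
          rw [this, Finset.card_filter]
  have e1 : M.card * (a + 1) ≤ ∑ v ∈ M, (G.neighborFinset v ∩ P).card := by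
    calc M.card * (a+1) = ∑ _v ∈ M, (a+1) := by rw [Finset.sum_const, smul_eq_mul]
      _ ≤ _ := Finset.sum_le_sum hMlow
  have e2 : ∑ u ∈ P, (G.neighborFinset u ∩ M).card ≤ P.card * b := by
    calc ∑ u ∈ P, (G.neighborFinset u ∩ M).card ≤ ∑ _u ∈ P, b := Finset.sum_le_sum hPhigh
      _ = P.card * b := by rw [Finset.sum_const, smul_eq_mul]
  have key : M.card * (a + 1) ≤ P.card * b := by
    calc M.card * (a+1) ≤ _ := e1
      _ = _ := dc
      _ ≤ P.card * b := e2
  have hcard : P.card + M.card = Fintype.card V := by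
    rw [hP, hM, hsplit univ]; rfl
  have htot : ∑ v, f v = (P.card : ℤ) - (M.card : ℤ) := hsum univ
  rw [htot, ← hcard]
  have key' : (M.card : ℤ) * (a + 1) ≤ (P.card : ℤ) * b := by exact_mod_cast key
  push_cast
  nlinarith [key']

theorem signed_domination_lower_bound_haas_wexler
    {V : Type*} [Fintype V] [DecidableEq V] [Nonempty V]
    (G : SimpleGraph V) [DecidableRel G.Adj]
    (δ Δ : ℕ) (hδ : δ = G.minDegree) (hΔ : Δ = G.maxDegree) :
    ((((δ + 1) / 2 : ℕ) : ℝ) - ((Δ / 2 : ℕ) : ℝ) + 1) /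
        ((((δ + 1) / 2 : ℕ) : ℝ) + ((Δ / 2 : ℕ) : ℝ) + 1) * (Fintype.card V : ℝ) ≤
      (G.signedDominationNumber : ℝ) := by
  set S := {s : ℤ | ∃ f : V → ℤ, G.IsSignedDominationFunction f ∧ s = ∑ v, f v} with hS
  have hne : S.Nonempty := by
    refine ⟨∑ v : V, (1 : ℤ), fun _ => 1, ⟨fun v => Or.inl rfl, fun v => ?_⟩, rfl⟩
    rw [Finset.sum_const, nsmul_eq_mul, mul_one]
    have : 0 < (insert v (G.neighborFinset v)).card :=
      Finset.card_pos.mpr ⟨v, Finset.mem_insert_self _ _⟩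
    exact_mod_cast this
  have hbdd : BddBelow S := by
    refine ⟨-(Fintype.card V : ℤ), fun s hs => ?_⟩
    obtain ⟨f, ⟨h1, _⟩, rfl⟩ := hs
    calc -(Fintype.card V : ℤ) = ∑ _v : V, (-1 : ℤ) := by
          rw [Finset.sum_const, nsmul_eq_mul, Finset.card_univ]; ring
      _ ≤ ∑ v, f v := Finset.sum_le_sum fun v _ => by rcases h1 v with h | h <;> simp [h]
  have hmem : G.signedDominationNumber ∈ S := Int.csInf_mem hne hbdd
  obtain ⟨f, hf, heq⟩ := hmem
  have hkey := sdf_key G f hf δ Δ (fun v => hδ ▸ G.minDegree_le_degree v)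
    (fun v => hΔ ▸ G.degree_le_maxDegree v)
  rw [← heq] at hkey
  have h := (Int.cast_le (R := ℝ)).mpr hkey
  simp only [Int.cast_mul, Int.cast_add, Int.cast_sub, Int.cast_one, Int.cast_natCast] at h
  set A : ℝ := (((δ + 1) / 2 : ℕ) : ℝ)
  set B : ℝ := ((Δ / 2 : ℕ) : ℝ)
  have hApos : 0 ≤ A := Nat.cast_nonneg _
  have hBpos : 0 ≤ B := Nat.cast_nonneg _
  have hpos : (0 : ℝ) < A + B + 1 := by linarith
  rw [div_mul_eq_mul_div, div_le_iff₀ hpos]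
  linarith
end

section
/- Let G be a finite simple graph with n vertices that is δ-regular (every vertex has degree δ), where δ is odd. Then the signed domination number of G satisfies γ_s(G) ≥ 2n/(δ+1). -/
lemma key_bound {V : Type*} [Fintype V] [DecidableEq V] (G : SimpleGraph V)
    [DecidableRel G.Adj] (δ : ℕ) (hreg : G.IsRegularOfDegree δ) (hodd : Odd δ)
    (f : V → ℤ) (hf : G.IsSignedDominationFunction f) :
    (2 * Fintype.card V : ℤ) ≤ ((δ : ℤ) + 1) * ∑ v, f v := by
  obtain ⟨hpm, hsum⟩ := hf
  -- each closed neighbourhood sum is ≥ 2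
  have h2 : ∀ v : V, 2 ≤ ∑ u ∈ insert v (G.neighborFinset v), f u := by
    intro v
    have hcard : (insert v (G.neighborFinset v)).card = δ + 1 := by
      rw [Finset.card_insert_of_notMem (G.notMem_neighborFinset_self v),
        G.card_neighborFinset_eq_degree, hreg v]
    have heven : Even (∑ u ∈ insert v (G.neighborFinset v), f u) := by
      have hmod : (∑ u ∈ insert v (G.neighborFinset v), f u) % 2 = 0 := by
        rw [Finset.sum_int_mod]
        have : ∀ u ∈ insert v (G.neighborFinset v), f u % 2 = 1 := by
          intro u _
          rcases hpm u with h | h <;> simp [h]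
        rw [Finset.sum_congr rfl this, Finset.sum_const, hcard]
        simp only [nsmul_eq_mul, mul_one]
        obtain ⟨k, hk⟩ := hodd
        omega
      exact Int.even_iff.2 hmod
    obtain ⟨k, hk⟩ := heven
    have := hsum v
    omega
  -- double counting
  have hdc : ∑ v : V, ∑ u ∈ insert v (G.neighborFinset v), f u
      = ((δ : ℤ) + 1) * ∑ v, f v := by
    have step : ∀ v : V, ∑ u ∈ insert v (G.neighborFinset v), f u
        = ∑ u : V, if u ∈ insert v (G.neighborFinset v) then f u else 0 := by
      intro v
      rw [Finset.sum_ite_mem, Finset.univ_inter]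
    rw [Finset.sum_congr rfl fun v _ => step v, Finset.sum_comm]
    have step2 : ∀ u : V, (∑ v : V, if u ∈ insert v (G.neighborFinset v) then f u else 0)
        = ((δ : ℤ) + 1) * f u := by
      intro u
      have hmemiff : ∀ v : V, u ∈ insert v (G.neighborFinset v)
          ↔ v ∈ insert u (G.neighborFinset u) := by
        intro v
        simp only [Finset.mem_insert, SimpleGraph.mem_neighborFinset]
        constructor
        · rintro (h | h)
          · exact Or.inl h.symm
          · exact Or.inr h.symm
        · rintro (h | h)
          · exact Or.inl h.symm
          · exact Or.inr h.symm
      have : (∑ v : V, if u ∈ insert v (G.neighborFinset v) then f u else 0)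
          = ∑ v : V, if v ∈ insert u (G.neighborFinset u) then f u else 0 := by
        refine Finset.sum_congr rfl fun v _ => ?_
        exact if_congr (hmemiff v) rfl rfl
      rw [this, Finset.sum_ite_mem, Finset.univ_inter, Finset.sum_const]
      have hcard : (insert u (G.neighborFinset u)).card = δ + 1 := by
        rw [Finset.card_insert_of_notMem (G.notMem_neighborFinset_self u),
          G.card_neighborFinset_eq_degree, hreg u]
      rw [hcard]
      push_cast
      ring
    rw [Finset.sum_congr rfl fun u _ => step2 u, ← Finset.mul_sum]
  calc (2 * Fintype.card V : ℤ) = ∑ _v : V, (2 : ℤ) := by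
        rw [Finset.sum_const, Finset.card_univ]; ring
    _ ≤ ∑ v : V, ∑ u ∈ insert v (G.neighborFinset v), f u :=
        Finset.sum_le_sum fun v _ => h2 v
    _ = ((δ : ℤ) + 1) * ∑ v, f v := hdc

theorem signed_domination_lower_bound_regular_odd
    {V : Type*} [Fintype V] [DecidableEq V] (G : SimpleGraph V) [DecidableRel G.Adj]
    (δ : ℕ) (hreg : G.IsRegularOfDegree δ) (hodd : Odd δ) :
    2 * (Fintype.card V : ℝ) / ((δ : ℝ) + 1) ≤ (G.signedDominationNumber : ℝ) := by
  set S := {s : ℤ | ∃ f : V → ℤ, G.IsSignedDominationFunction f ∧ s = ∑ v, f v} with hS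
  have hne : S.Nonempty := by
    refine ⟨∑ v : V, (1 : ℤ), fun v => 1, ⟨fun v => Or.inl rfl, fun v => ?_⟩, rfl⟩
    rw [Finset.sum_const, nsmul_eq_mul, mul_one]
    have : 1 ≤ (insert v (G.neighborFinset v)).card := Finset.card_pos.2 ⟨v, Finset.mem_insert_self _ _⟩
    exact_mod_cast this
  have hbdd : BddBelow S := by
    refine ⟨-(Fintype.card V : ℤ), fun s hs => ?_⟩
    obtain ⟨f, ⟨hpm, _⟩, rfl⟩ := hs
    calc -(Fintype.card V : ℤ) = ∑ _v : V, (-1 : ℤ) := by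
          rw [Finset.sum_const, Finset.card_univ]; ring
      _ ≤ ∑ v, f v := Finset.sum_le_sum fun v _ => by rcases hpm v with h | h <;> omega
  have hmem : G.signedDominationNumber ∈ S := Int.csInf_mem hne hbdd
  obtain ⟨f, hf, hfeq⟩ := hmem
  have hkey := key_bound G δ hreg hodd f hf
  rw [← hfeq] at hkey
  have hpos : (0 : ℝ) < (δ : ℝ) + 1 := by positivity
  rw [div_le_iff₀ hpos]
  have : (2 * Fintype.card V : ℝ) ≤ ((δ : ℝ) + 1) * (G.signedDominationNumber : ℝ) := by
    exact_mod_cast hkey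
  linarith
end

section
/- Let H = (V, E) be a hypergraph on n vertices with hyperedges E_1, ..., E_m (finite sets of vertices), and suppose every hyperedge E_i has at least k vertices, where k ≥ 100. Then the signed discrepancy of H satisfies SD(H) ≤ 4·√(ln k / k)·n + m/k. -/
/-- `g : V → ℤ` is a signed domination function of the hypergraph with hyperedges `E i`:
it takes values in `{-1, +1}` and sums to at least `1` over every hyperedge. -/
def Hypergraph.IsSignedDominationFunction {V : Type*} {m : ℕ}
    (E : Fin m → Finset V) (g : V → ℤ) : Prop :=
  (∀ v, g v = 1 ∨ g v = -1) ∧ ∀ i : Fin m, 1 ≤ ∑ v ∈ E i, g v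

/-- The signed discrepancy `SD(H)` of the hypergraph with vertex set `V`
and hyperedges `E 1, …, E m`. -/
noncomputable def Hypergraph.signedDiscrepancy {V : Type*} [Fintype V] {m : ℕ}
    (E : Fin m → Finset V) : ℤ :=
  sInf {s : ℤ | ∃ g : V → ℤ, Hypergraph.IsSignedDominationFunction E g ∧ s = ∑ v, g v}

/-!
Choose every vertex independently to be `+1` with probability `(1 + ε) / 2` and `-1` otherwise,
with `ε = √(8 ln k / k)`, and then set to `+1` every vertex of every edge whose sum is not
positive. The result is a signed domination function. Its expected total is at most
`ε n + 2 ∑ᵢ |Eᵢ| P(Eᵢ bad)`, and by a Chernoff bound `|Eᵢ| P(Eᵢ bad) ≤ N (1 - ε² / 2) ^ N`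
with `N = |Eᵢ| ≥ k`, which is at most `1 / (2k)`. Some assignment does no worse than the
expectation.
-/

open Finset

namespace Real

theorem log_lt_div_eight {K : ℝ} (hK : 100 ≤ K) : log K < K / 8 := by
  have hsplit : log K = 4 * log 2 + log (K / 16) := by
    rw [← log_rpow two_pos, ← log_mul (by positivity) (by positivity)]
    norm_num
    ring_nf
  have := log_le_sub_one_of_pos (show 0 < K / 16 by positivity)
  have := log_two_lt_d9
  linarith

theorem mul_exp_neg_mul_le_of_le {c K N : ℝ} (hK : 0 < K) (hcK : 1 ≤ c * K) (hKN : K ≤ N) :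
    N * exp (-(c * N)) ≤ K * exp (-(c * K)) := by
  have hN : N ≤ K * exp (c * (N - K)) :=
    calc N ≤ K * (1 + c * (N - K)) := by nlinarith
      _ ≤ K * exp (c * (N - K)) := by gcongr; linarith [add_one_le_exp (c * (N - K))]
  calc N * exp (-(c * N)) ≤ K * exp (c * (N - K)) * exp (-(c * N)) := by gcongr
    _ = K * exp (-(c * K)) := by rw [mul_assoc, ← exp_add]; ring_nf

theorem natCast_mul_one_sub_pow_le {K : ℝ} (hK : 100 ≤ K) {N : ℕ} (hKN : K ≤ N) :
    (N : ℝ) * (1 - 4 * log K / K) ^ N ≤ 1 / (2 * K) := by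
  have hK₀ : 0 < K := by linarith
  have hlog : 1 / 4 ≤ log K := by
    have := one_sub_inv_le_log_of_pos hK₀
    have : K⁻¹ ≤ 1 / 100 := by rw [inv_eq_one_div]; gcongr
    linarith
  set c := 4 * log K / K
  have hcK : c * K = 4 * log K := div_mul_cancel₀ _ hK₀.ne'
  have hc : 0 ≤ 1 - c := by
    rw [sub_nonneg, div_le_one hK₀]
    linarith [log_lt_div_eight hK]
  calc (N : ℝ) * (1 - c) ^ N ≤ N * exp (-(c * N)) := by
        rw [mul_comm c, neg_mul_eq_mul_neg, exp_nat_mul]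
        gcongr
        linarith [add_one_le_exp (-c)]
    _ ≤ K * exp (-(c * K)) := mul_exp_neg_mul_le_of_le hK₀ (by linarith) hKN
    _ = 1 / K ^ 3 := by
        rw [hcK, exp_neg, show 4 * log K = (4 : ℕ) * log K by norm_num, exp_nat_mul, exp_log hK₀]
        field_simp
    _ ≤ 1 / (2 * K) := by gcongr; nlinarith [mul_le_mul hK hK (by norm_num) hK₀.le]

end Real

theorem Finset.exists_le_sum_mul_of_sum_eq_one {ι 𝕜 : Type*} [Field 𝕜] [LinearOrder 𝕜]
    [IsStrictOrderedRing 𝕜] {s : Finset ι} {w X : ι → 𝕜} (hw : ∀ x ∈ s, 0 < w x)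
    (hw₁ : ∑ x ∈ s, w x = 1) : ∃ x ∈ s, X x ≤ ∑ y ∈ s, w y * X y := by
  have hs : s.Nonempty := nonempty_of_sum_ne_zero (hw₁ ▸ one_ne_zero)
  obtain ⟨x, hx, hle⟩ : ∃ x ∈ s, w x * X x ≤ w x * ∑ y ∈ s, w y * X y := by
    refine exists_le_of_sum_le hs ?_
    rw [← sum_mul, hw₁, one_mul]
  exact ⟨x, hx, le_of_mul_le_mul_left hle (hw x hx)⟩

namespace Hypergraph

section BiasedWeight

variable {V : Type*} [Fintype V] [DecidableEq V]

variable (V) in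
def signAssignments : Finset (V → ℤ) := Fintype.piFinset fun _ => {1, -1}

/-- The probability of `g` when the vertices independently take the value `1` with probability
`(1 + ε) / 2` and `-1` otherwise. -/
noncomputable def biasedWeight (ε : ℝ) (g : V → ℤ) : ℝ := ∏ v, (1 + ε * g v) / 2

theorem mem_signAssignments {g : V → ℤ} :
    g ∈ signAssignments V ↔ ∀ v, g v = 1 ∨ g v = -1 := by
  simp [signAssignments]

theorem biasedWeight_pos {ε : ℝ} (hε : |ε| < 1) {g : V → ℤ} (hg : g ∈ signAssignments V) :
    0 < biasedWeight ε g := by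
  refine prod_pos fun v _ => ?_
  obtain ⟨hε₁, hε₂⟩ := abs_lt.1 hε
  rcases mem_signAssignments.1 hg v with h | h <;> rw [h] <;> push_cast <;> linarith

theorem sum_biasedWeight_mul_prod (ε : ℝ) (φ : V → ℤ → ℝ) :
    ∑ g ∈ signAssignments V, biasedWeight ε g * ∏ v, φ v (g v) =
      ∏ v, ((1 + ε) / 2 * φ v 1 + (1 - ε) / 2 * φ v (-1)) := by
  calc ∑ g ∈ signAssignments V, biasedWeight ε g * ∏ v, φ v (g v)
      = ∑ g ∈ signAssignments V, ∏ v, (1 + ε * g v) / 2 * φ v (g v) := by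
        simp only [biasedWeight, prod_mul_distrib]
    _ = ∏ v, ∑ j ∈ ({1, -1} : Finset ℤ), (1 + ε * j) / 2 * φ v j := by
        rw [signAssignments, prod_univ_sum]
    _ = _ := by
        simp only [sum_pair (by decide : (1 : ℤ) ≠ -1)]
        push_cast
        ring_nf

theorem sum_biasedWeight (ε : ℝ) : ∑ g ∈ signAssignments V, biasedWeight ε g = 1 := by
  have h := sum_biasedWeight_mul_prod (V := V) ε fun _ _ => 1
  simp only [prod_const_one, mul_one] at h
  rw [h, show (1 + ε) / 2 + (1 - ε) / 2 = 1 by ring, prod_const_one]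

theorem sum_biasedWeight_mul_apply (ε : ℝ) (v₀ : V) :
    ∑ g ∈ signAssignments V, biasedWeight ε g * g v₀ = ε :=
  calc ∑ g ∈ signAssignments V, biasedWeight ε g * g v₀
      = ∑ g ∈ signAssignments V, biasedWeight ε g * ∏ v, if v = v₀ then (g v : ℝ) else 1 := by
        simp only [prod_ite_eq', mem_univ, if_true]
    _ = ∏ v, if v = v₀ then ε else 1 := by
        rw [sum_biasedWeight_mul_prod ε fun v j => if v = v₀ then (j : ℝ) else 1]
        exact prod_congr rfl fun v _ => by split_ifs <;> push_cast <;> ring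
    _ = ε := by simp only [prod_ite_eq', mem_univ, if_true]

theorem sum_biasedWeight_mul_sum (ε : ℝ) :
    ∑ g ∈ signAssignments V, biasedWeight ε g * ∑ v, (g v : ℝ) = ε * Fintype.card V := by
  simp only [mul_sum]
  rw [sum_comm]
  simp [sum_biasedWeight_mul_apply, mul_comm]

theorem sum_biasedWeight_mul_exp (ε t : ℝ) (S : Finset V) :
    ∑ g ∈ signAssignments V, biasedWeight ε g * Real.exp (-(t * ∑ v ∈ S, (g v : ℝ))) =
      ((1 + ε) / 2 * Real.exp (-t) + (1 - ε) / 2 * Real.exp t) ^ S.card :=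
  calc ∑ g ∈ signAssignments V, biasedWeight ε g * Real.exp (-(t * ∑ v ∈ S, (g v : ℝ)))
      = ∑ g ∈ signAssignments V,
          biasedWeight ε g * ∏ v, if v ∈ S then Real.exp (-(t * g v)) else 1 := by
        simp only [Fintype.prod_ite_mem, mul_sum, ← sum_neg_distrib, Real.exp_sum]
    _ = ∏ v, if v ∈ S then (1 + ε) / 2 * Real.exp (-t) + (1 - ε) / 2 * Real.exp t else 1 := by
        rw [sum_biasedWeight_mul_prod ε fun v j => if v ∈ S then Real.exp (-(t * j)) else 1]
        exact prod_congr rfl fun v _ => by split_ifs <;> push_cast <;> ring_nf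
    _ = _ := by rw [Fintype.prod_ite_mem, prod_const]

theorem sum_biasedWeight_mul_indicator_le {ε : ℝ} (hε₀ : 0 ≤ ε) (hε₁ : ε < 1) (S : Finset V) :
    ∑ g ∈ signAssignments V, biasedWeight ε g * (if ∑ v ∈ S, g v ≤ 0 then 1 else 0) ≤
      (1 - ε ^ 2 / 2) ^ S.card := by
  -- Chernoff: the indicator of `∑ g ≤ 0` is at most `exp (-t ∑ g)`, and `exp t = 1 + ε`
  -- makes the factor of each vertex equal to `1 - ε ^ 2 / 2`.
  set t := Real.log (1 + ε)
  have ht : 0 ≤ t := Real.log_nonneg (by linarith)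
  have hind : ∀ g : V → ℤ,
      (if ∑ v ∈ S, g v ≤ 0 then 1 else 0 : ℝ) ≤ Real.exp (-(t * ∑ v ∈ S, (g v : ℝ))) := by
    intro g
    split_ifs with h
    · refine Real.one_le_exp (neg_nonneg.2 (mul_nonpos_of_nonneg_of_nonpos ht ?_))
      exact_mod_cast h
    · exact (Real.exp_pos _).le
  have hε : |ε| < 1 := abs_lt.2 ⟨by linarith, hε₁⟩
  calc ∑ g ∈ signAssignments V, biasedWeight ε g * (if ∑ v ∈ S, g v ≤ 0 then 1 else 0)
      ≤ ∑ g ∈ signAssignments V, biasedWeight ε g * Real.exp (-(t * ∑ v ∈ S, (g v : ℝ))) :=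
        sum_le_sum fun g hg => mul_le_mul_of_nonneg_left (hind g) (biasedWeight_pos hε hg).le
    _ = ((1 + ε) / 2 * Real.exp (-t) + (1 - ε) / 2 * Real.exp t) ^ S.card :=
        sum_biasedWeight_mul_exp ε t S
    _ = (1 - ε ^ 2 / 2) ^ S.card := by
        rw [Real.exp_neg, Real.exp_log (by linarith)]
        field_simp
        ring

end BiasedWeight

variable {V : Type*} {m : ℕ} {E : Fin m → Finset V} {g : V → ℤ}

theorem signedDiscrepancy_le_sum [Fintype V] (hg : IsSignedDominationFunction E g) :
    signedDiscrepancy E ≤ ∑ v, g v := by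
  refine csInf_le ⟨-Fintype.card V, ?_⟩ ⟨g, hg, rfl⟩
  rintro _ ⟨g', hg', rfl⟩
  have : ∀ v, -1 ≤ g' v := fun v => by rcases hg'.1 v with h | h <;> omega
  simpa using sum_le_sum fun v (_ : v ∈ univ) => this v

theorem signedDiscrepancy_le_add_sum_card_of_sum_nonpos [Fintype V] [DecidableEq V]
    (hE : ∀ i, (E i).Nonempty) (hg : ∀ v, g v = 1 ∨ g v = -1) :
    signedDiscrepancy E ≤
      ∑ v, g v + 2 * ∑ i, if ∑ v ∈ E i, g v ≤ 0 then ((E i).card : ℤ) else 0 := by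
  set bad := univ.filter fun i => ∑ v ∈ E i, g v ≤ 0
  set B := bad.biUnion E
  set g' : V → ℤ := fun v => if v ∈ B then 1 else g v
  have hg_le : ∀ v, g v ≤ g' v := fun v => by
    by_cases hv : v ∈ B
    · simp only [g', hv, if_true]
      rcases hg v with h | h <;> omega
    · simp only [g', hv, if_false, le_refl]
  have hsdf : IsSignedDominationFunction E g' := by
    refine ⟨fun v => ?_, fun i => ?_⟩
    · by_cases hv : v ∈ B <;> simp [g', hv, hg v]
    by_cases hi : i ∈ bad
    · have hsub : ∀ v ∈ E i, g' v = 1 := fun v hv => if_pos (mem_biUnion.2 ⟨i, hi, hv⟩)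
      rw [sum_congr rfl hsub, sum_const, nsmul_one]
      exact_mod_cast (hE i).card_pos
    · simp only [bad, mem_filter, mem_univ, true_and, not_le] at hi
      exact hi.trans_le (sum_le_sum fun v _ => hg_le v)
  have hsum : ∑ v, g' v ≤ ∑ v, g v + 2 * B.card := by
    have : ∀ v, g' v ≤ g v + if v ∈ B then 2 else 0 := fun v => by
      by_cases hv : v ∈ B <;> simp only [g', hv, if_true, if_false] <;>
        rcases hg v with h | h <;> omega
    calc ∑ v, g' v ≤ ∑ v, (g v + if v ∈ B then 2 else 0) := sum_le_sum fun v _ => this v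
      _ = ∑ v, g v + 2 * B.card := by
        rw [sum_add_distrib, Fintype.sum_ite_mem, sum_const, nsmul_eq_mul, mul_comm]
  have hB : (B.card : ℤ) ≤ ∑ i, if ∑ v ∈ E i, g v ≤ 0 then ((E i).card : ℤ) else 0 := by
    rw [← sum_filter]
    exact_mod_cast card_biUnion_le
  calc signedDiscrepancy E ≤ ∑ v, g' v := signedDiscrepancy_le_sum hsdf
    _ ≤ _ := by linarith

theorem signedDiscrepancy_le_of_bias [Fintype V] (hE : ∀ i, (E i).Nonempty) {ε : ℝ}
    (hε₀ : 0 ≤ ε) (hε₁ : ε < 1) :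
    (signedDiscrepancy E : ℝ) ≤
      ε * Fintype.card V + 2 * ∑ i, ((E i).card : ℝ) * (1 - ε ^ 2 / 2) ^ (E i).card := by
  classical
  set X : (V → ℤ) → ℝ := fun g =>
    ∑ v, (g v : ℝ) + 2 * ∑ i, ((E i).card : ℝ) * if ∑ v ∈ E i, g v ≤ 0 then 1 else 0
  obtain ⟨g, hg, hXg⟩ := Finset.exists_le_sum_mul_of_sum_eq_one (X := X)
    (fun g hg => biasedWeight_pos (abs_lt.2 ⟨by linarith, hε₁⟩) hg) (sum_biasedWeight ε)
  have hsd : (signedDiscrepancy E : ℝ) ≤ X g := by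
    have := signedDiscrepancy_le_add_sum_card_of_sum_nonpos hE (mem_signAssignments.1 hg)
    simp only [X, mul_ite, mul_one, mul_zero]
    exact_mod_cast this
  have hmean : ∑ g ∈ signAssignments V, biasedWeight ε g * X g =
      ε * Fintype.card V + 2 * ∑ i, ((E i).card : ℝ) * ∑ g ∈ signAssignments V,
        biasedWeight ε g * if ∑ v ∈ E i, g v ≤ 0 then 1 else 0 := by
    simp only [X, mul_add, sum_add_distrib, sum_biasedWeight_mul_sum, mul_left_comm _ (2 : ℝ),
      ← mul_sum]
    simp only [mul_sum]
    rw [sum_comm]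
    simp only [mul_left_comm]
  calc (signedDiscrepancy E : ℝ) ≤ X g := hsd
    _ ≤ _ := hXg
    _ = _ := hmean
    _ ≤ _ := by gcongr with i; exact sum_biasedWeight_mul_indicator_le hε₀ hε₁ (E i)

end Hypergraph

theorem signed_discrepancy_upper_bound
    {V : Type*} [Fintype V] (n m k : ℕ) (hn : n = Fintype.card V)
    (E : Fin m → Finset V) (hk : 100 ≤ k) (hE : ∀ i : Fin m, k ≤ (E i).card) :
    (Hypergraph.signedDiscrepancy E : ℝ) ≤
      4 * Real.sqrt (Real.log (k : ℝ) / (k : ℝ)) * (n : ℝ) + (m : ℝ) / (k : ℝ) := by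
  have hK : (100 : ℝ) ≤ k := by exact_mod_cast hk
  have hK₀ : (0 : ℝ) < k := by linarith
  have hlog : 0 ≤ Real.log k := Real.log_nonneg (by linarith)
  set ε := Real.sqrt (8 * Real.log k / k)
  have hε₁ : ε < 1 := by
    rw [Real.sqrt_lt' one_pos, one_pow, div_lt_one hK₀]
    linarith [Real.log_lt_div_eight hK]
  have hε₂ : ε ^ 2 / 2 = 4 * Real.log k / k := by
    rw [Real.sq_sqrt (by positivity)]
    ring
  have hbias := Hypergraph.signedDiscrepancy_le_of_bias (E := E)
    (fun i => card_pos.1 (by have := hE i; omega)) (Real.sqrt_nonneg _) hε₁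
  have hε : ε ≤ 4 * Real.sqrt (Real.log k / k) := by
    rw [show ε = Real.sqrt 8 * Real.sqrt (Real.log k / k) by
      rw [← Real.sqrt_mul (by norm_num), ← mul_div_assoc]]
    gcongr
    nlinarith [Real.sq_sqrt (show (0 : ℝ) ≤ 8 by norm_num), Real.sqrt_nonneg 8]
  have hedges : ∑ i, ((E i).card : ℝ) * (1 - ε ^ 2 / 2) ^ (E i).card ≤ (m : ℝ) * (1 / (2 * k)) := by
    rw [hε₂]
    simpa using sum_le_sum fun i (_ : i ∈ univ) =>
      Real.natCast_mul_one_sub_pow_le hK (N := (E i).card) (by exact_mod_cast hE i)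
  subst hn
  calc (Hypergraph.signedDiscrepancy E : ℝ)
      ≤ ε * Fintype.card V + 2 * ∑ i, ((E i).card : ℝ) * (1 - ε ^ 2 / 2) ^ (E i).card := hbias
    _ ≤ 4 * Real.sqrt (Real.log k / k) * Fintype.card V + 2 * (m * (1 / (2 * k))) := by gcongr
    _ = _ := by field_simp
end
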